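/- arXiv:1603.01535 — 15 statements merged into one kernel-verified Lean document; each statement's English description precedes it below -/
import Mathlib

section
/- Let T : ℓ∞²(ℝ) × ℓ∞²(ℝ) → ℝ be the bilinear form T(x,y) = Σ_{i,j=1}^{2} a_{ij} x_i y_j with real coefficients a_{ij}. Then ‖T‖ = max{ |a₁₁+a₂₁| + |a₁₂+a₂₂| , |a₁₁−a₂₁| + |a₁₂−a₂₂| }. -/
/-! The unit ball of `ℓ∞²` is the convex hull of `±(1, 1)` and `±(1, -1)`, so the norm of any
operator on `ℓ∞²` is the larger of the norms of its values at `(1, 1)` and `(1, -1)`. For `T` these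
values are the functionals `y ↦ T (1, ±1) y` on `ℓ∞²`, and the norm of a functional on `ℓ∞ⁿ` is the
`ℓ¹` norm of its coefficient vector, here `(a₁₁ ± a₂₁, a₁₂ ± a₂₂)`. -/

theorem abs_add_add_abs_sub_le_two_mul_max {α : Type*} [Field α] [LinearOrder α]
    [IsStrictOrderedRing α] (a b : α) : |a + b| + |a - b| ≤ 2 * max |a| |b| := by
  have := le_max_left |a| |b|
  have := le_max_right |a| |b|
  rcases abs_cases (a + b) with ⟨h₁, _⟩ | ⟨h₁, _⟩ <;>
    rcases abs_cases (a - b) with ⟨h₂, _⟩ | ⟨h₂, _⟩ <;>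
    linarith [le_abs_self a, neg_abs_le a, le_abs_self b, neg_abs_le b]

namespace ContinuousLinearMap

theorem apply_eq_sum_mul_apply_single {ι : Type*} [Fintype ι] [DecidableEq ι]
    (f : (ι → ℝ) →L[ℝ] ℝ) (y : ι → ℝ) : f y = ∑ i, y i * f (Pi.single i 1) := by
  conv_lhs => rw [← Finset.univ_sum_single y, map_sum]
  refine Finset.sum_congr rfl fun i _ => ?_
  rw [← smul_eq_mul, ← map_smul, ← Pi.single_smul, smul_eq_mul, mul_one]

theorem opNorm_eq_sum_abs_apply_single {ι : Type*} [Fintype ι] [DecidableEq ι]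
    (f : (ι → ℝ) →L[ℝ] ℝ) : ‖f‖ = ∑ i, |f (Pi.single i 1)| := by
  refine le_antisymm (opNorm_le_bound _ (by positivity) fun y => ?_) ?_
  · rw [Real.norm_eq_abs, apply_eq_sum_mul_apply_single, Finset.sum_mul]
    refine (Finset.abs_sum_le_sum_abs _ _).trans (Finset.sum_le_sum fun i _ => ?_)
    rw [abs_mul, mul_comm]
    exact mul_le_mul_of_nonneg_left (norm_le_pi_norm y i) (abs_nonneg _)
  · set s : ι → ℝ := fun i => SignType.sign (f (Pi.single i 1))
    have hs : ‖s‖ ≤ 1 := (pi_norm_le_iff_of_nonneg zero_le_one).2 fun i => by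
      rcases lt_trichotomy (f (Pi.single i 1)) 0 with h | h | h <;> simp [s, h]
    calc ∑ i, |f (Pi.single i 1)| = f s := by
          simp only [apply_eq_sum_mul_apply_single f s, s, sign_mul_self]
      _ ≤ ‖f s‖ := Real.le_norm_self _
      _ ≤ ‖f‖ := unit_le_opNorm f s hs

theorem opNorm_eq_max_norm_apply_one_one_one_neg_one {F : Type*} [SeminormedAddCommGroup F]
    [NormedSpace ℝ F] (L : (Fin 2 → ℝ) →L[ℝ] F) :
    ‖L‖ = max ‖L ![1, 1]‖ ‖L ![1, -1]‖ := by
  have hunit : ∀ s : ℝ, |s| = 1 → ‖(![1, s] : Fin 2 → ℝ)‖ ≤ 1 := fun s hs =>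
    (pi_norm_le_iff_of_nonneg zero_le_one).2 fun i => by fin_cases i <;> simp [hs]
  refine le_antisymm (opNorm_le_bound _ (by positivity) fun x => ?_)
    (max_le (unit_le_opNorm L _ (hunit 1 (by simp))) (unit_le_opNorm L _ (hunit (-1) (by simp))))
  set u := (x 0 + x 1) / 2
  set v := (x 0 - x 1) / 2
  have hx : x = u • ![1, 1] + v • ![1, -1] := by
    ext i; fin_cases i <;> simp [u, v] <;> ring
  have huv : |u| + |v| ≤ ‖x‖ := by
    have hmax : max |x 0| |x 1| ≤ ‖x‖ := max_le (norm_le_pi_norm x 0) (norm_le_pi_norm x 1)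
    have := abs_add_add_abs_sub_le_two_mul_max (x 0) (x 1)
    simp only [u, v, abs_div, abs_two]
    linarith
  calc ‖L x‖ ≤ |u| * ‖L ![1, 1]‖ + |v| * ‖L ![1, -1]‖ := by
        rw [hx, map_add, map_smul, map_smul]
        refine (norm_add_le _ _).trans_eq ?_
        rw [norm_smul, norm_smul, Real.norm_eq_abs, Real.norm_eq_abs]
    _ ≤ (|u| + |v|) * max ‖L ![1, 1]‖ ‖L ![1, -1]‖ := by
        rw [add_mul]; gcongr
        exacts [le_max_left _ _, le_max_right _ _]
    _ ≤ max ‖L ![1, 1]‖ ‖L ![1, -1]‖ * ‖x‖ := by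
        rw [mul_comm]; gcongr

end ContinuousLinearMap

/-- The norm of a real bilinear form on `ℓ∞²(ℝ)` (modeled as `Fin 2 → ℝ` with the sup norm)
with coefficient matrix `a i j` is `max (|a₁₁+a₂₁|+|a₁₂+a₂₂|) (|a₁₁-a₂₁|+|a₁₂-a₂₂|)`. -/
theorem norm_bilinear_form_linf2_real
    (a11 a12 a21 a22 : ℝ)
    (T : (Fin 2 → ℝ) →L[ℝ] (Fin 2 → ℝ) →L[ℝ] ℝ)
    (hT : ∀ x y : Fin 2 → ℝ,
      T x y = a11 * x 0 * y 0 + a21 * x 1 * y 0 + a12 * x 0 * y 1 + a22 * x 1 * y 1) :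
    ‖T‖ = max (|a11 + a21| + |a12 + a22|) (|a11 - a21| + |a12 - a22|) := by
  rw [T.opNorm_eq_max_norm_apply_one_one_one_neg_one,
    ContinuousLinearMap.opNorm_eq_sum_abs_apply_single,
    ContinuousLinearMap.opNorm_eq_sum_abs_apply_single]
  simp [Fin.sum_univ_two, hT, sub_eq_add_neg]
end

section
/- Let T : ℓ∞²(ℂ) × ℓ∞²(ℂ) → ℂ be the bilinear form T(z,w) = Σ_{i,j=1}^{2} a_{ij} z_i w_j with real coefficients a_{ij}. Suppose all four coefficients a₁₁, a₂₁, a₁₂, a₂₂ are nonzero, that a₁₁a₂₁/(a₁₂a₂₂) < 0, and that |(a₁₁²a₂₁²/(a₁₂²a₂₂²))(a₁₂²+a₂₂²) − (a₁₁²+a₂₁²)| ≤ |2a₁₁a₂₁(1 − a₁₁a₂₁/(a₁₂a₂₂))|. Set c₀ = [(a₁₁²a₂₁²/(a₁₂²a₂₂²))(a₁₂²+a₂₂²) − (a₁₁²+a₂₁²)] / [2a₁₁a₂₁(1 − a₁₁a₂₁/(a₁₂a₂₂))]. Then ‖T‖ = max{ |a₁₁+a₂₁| + |a₁₂+a₂₂|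 , |a₁₁−a₂₁| + |a₁₂−a₂₂| , √(a₁₁²+a₂₁²+2a₁₁a₂₁c₀) + √(a₁₂²+a₂₂²+2a₁₂a₂₂c₀) }. -/
open Complex ComplexConjugate Set

/-!
Write `T z w = u * w 0 + v * w 1` with `u = a₁₁ z₀ + a₂₁ z₁` and `v = a₁₂ z₀ + a₂₂ z₁`; the norm
is the supremum of `‖u‖ + ‖v‖` over `‖z‖∞ ≤ 1`. Since `‖a x + b y‖² ≤ a² + b² + 2ab Re (x ȳ)`,
with equality when `|x| = |y| = 1`, this supremum is the maximum over `c ∈ [-1, 1]` of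
`φ c = √(a₁₁² + a₂₁² + 2a₁₁a₂₁c) + √(a₁₂² + a₂₂² + 2a₁₂a₂₂c)`. The function `φ` is concave and
`c₀` is the zero of its derivative, so `φ c₀` is the maximum; the endpoints `c = ±1` give the
other two terms of the `max`.
-/

theorem sqrt_le_add_div_two_mul_sqrt {x y : ℝ} (hx : 0 ≤ x) (hy : 0 < y) :
    √x ≤ (x + y) / (2 * √y) := by
  rw [le_div_iff₀ (by positivity)]
  have h := two_mul_le_add_sq √x √y
  rw [Real.sq_sqrt hx, Real.sq_sqrt hy.le] at h
  linarith

theorem isMaxOn_sqrt_add_sqrt {p q r s c₀ : ℝ} (hP : 0 < p + q * c₀) (hR : 0 < r + s * c₀)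
    (hcrit : q * √(r + s * c₀) + s * √(p + q * c₀) = 0) :
    IsMaxOn (fun c => √(p + q * c) + √(r + s * c)) {c | 0 ≤ p + q * c ∧ 0 ≤ r + s * c} c₀ := by
  rintro c ⟨hc₁, hc₂⟩
  have hSP := Real.sqrt_pos.2 hP
  have hSR := Real.sqrt_pos.2 hR
  calc √(p + q * c) + √(r + s * c)
      ≤ (p + q * c + (p + q * c₀)) / (2 * √(p + q * c₀))
        + (r + s * c + (r + s * c₀)) / (2 * √(r + s * c₀)) :=
        add_le_add (sqrt_le_add_div_two_mul_sqrt hc₁ hP) (sqrt_le_add_div_two_mul_sqrt hc₂ hR)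
    _ = √(p + q * c₀) + √(r + s * c₀) := by
        rw [div_add_div _ _ (by positivity) (by positivity), div_eq_iff (by positivity)]
        linear_combination 2 * (c - c₀) * hcrit - 4 * √(r + s * c₀) * Real.sq_sqrt hP.le
          - 4 * √(p + q * c₀) * Real.sq_sqrt hR.le

theorem sq_norm_ofReal_mul_add_ofReal_mul (a b : ℝ) (x y : ℂ) :
    ‖(a : ℂ) * x + b * y‖ ^ 2
      = a ^ 2 * ‖x‖ ^ 2 + b ^ 2 * ‖y‖ ^ 2 + 2 * a * b * (x * conj y).re := by
  simp only [Complex.sq_norm, normSq_add, normSq_ofReal, map_mul, conj_ofReal]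
  have : (a : ℂ) * x * (b * conj y) = ((a * b : ℝ) : ℂ) * (x * conj y) := by push_cast; ring
  rw [this, re_ofReal_mul]
  ring

theorem norm_ofReal_mul_add_ofReal_mul_le (a b : ℝ) {x y : ℂ} (hx : ‖x‖ ≤ 1) (hy : ‖y‖ ≤ 1) :
    ‖(a : ℂ) * x + b * y‖ ≤ √(a ^ 2 + b ^ 2 + 2 * a * b * (x * conj y).re) := by
  apply Real.le_sqrt_of_sq_le
  rw [sq_norm_ofReal_mul_add_ofReal_mul]
  have hx2 : ‖x‖ ^ 2 ≤ 1 := pow_le_one₀ (norm_nonneg x) hx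
  have hy2 : ‖y‖ ^ 2 ≤ 1 := pow_le_one₀ (norm_nonneg y) hy
  gcongr <;> nlinarith [sq_nonneg a, sq_nonneg b]

theorem norm_ofReal_add_ofReal_mul_exp_arccos (a b : ℝ) {c : ℝ} (hc : c ∈ Icc (-1) 1) :
    ‖(a : ℂ) + b * exp (Real.arccos c * I)‖ = √(a ^ 2 + b ^ 2 + 2 * a * b * c) := by
  rw [← Real.sqrt_sq (norm_nonneg _)]
  congr 1
  simpa [norm_exp_ofReal_mul_I, exp_ofReal_mul_I_re, Real.cos_arccos hc.1 hc.2] using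
    sq_norm_ofReal_mul_add_ofReal_mul a b 1 (exp (Real.arccos c * I))

theorem abs_re_mul_conj_le_one {x y : ℂ} (hx : ‖x‖ ≤ 1) (hy : ‖y‖ ≤ 1) :
    |(x * conj y).re| ≤ 1 :=
  (abs_re_le_norm _).trans <| by
    rw [norm_mul, RCLike.norm_conj]; exact mul_le_one₀ hx (norm_nonneg y) hy

theorem mul_exp_neg_arg_mul_I (x : ℂ) : x * exp (-arg x * I) = ‖x‖ := by
  conv_lhs => rw [← norm_mul_exp_arg_mul_I x]
  rw [mul_assoc, ← exp_add]; simp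

theorem sq_add_sq_add_two_mul_mul_nonneg (a b : ℝ) {c : ℝ} (hc : c ∈ Icc (-1) 1) :
    0 ≤ a ^ 2 + b ^ 2 + 2 * a * b * c := by
  nlinarith [mul_nonneg (sub_nonneg.2 hc.2) (sq_nonneg (a - b)),
    mul_nonneg (neg_le_iff_add_nonneg.1 hc.1) (sq_nonneg (a + b))]

theorem sqrt_sq_add_sq_add_two_mul_mul_one (a b : ℝ) :
    √(a ^ 2 + b ^ 2 + 2 * a * b * 1) = |a + b| := by
  rw [← Real.sqrt_sq_eq_abs]; ring_nf

theorem sqrt_sq_add_sq_add_two_mul_mul_neg_one (a b : ℝ) :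
    √(a ^ 2 + b ^ 2 + 2 * a * b * (-1)) = |a - b| := by
  rw [← Real.sqrt_sq_eq_abs]; ring_nf

theorem mul_sqrt_add_mul_sqrt_eq_zero {q s P R : ℝ} (hqs : q * s < 0) (hP : 0 ≤ P) (hR : 0 ≤ R)
    (h : q ^ 2 * R = s ^ 2 * P) : q * √R + s * √P = 0 := by
  have hsq : (q * √R) ^ 2 = (-(s * √P)) ^ 2 := by
    rw [neg_sq, mul_pow, mul_pow, Real.sq_sqrt hR, Real.sq_sqrt hP, h]
  rcases sq_eq_sq_iff_eq_or_eq_neg.1 hsq with h' | h'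
  · linarith
  · rw [neg_neg] at h'
    have hsq_nonpos : (s * √P) ^ 2 ≤ 0 :=
      calc (s * √P) ^ 2 = q * s * (√R * √P) := by linear_combination (-(s * √P)) * h'
        _ ≤ 0 := mul_nonpos_of_nonpos_of_nonneg hqs.le (by positivity)
    have hzero : s * √P = 0 := pow_eq_zero_iff two_ne_zero |>.1 (hsq_nonpos.antisymm (sq_nonneg _))
    rw [h', hzero, add_zero]

section

variable {a11 a12 a21 a22 : ℝ} {T : (Fin 2 → ℂ) →L[ℂ] (Fin 2 → ℂ) →L[ℂ] ℂ}

theorem opNorm_le_of_sqrt_add_sqrt_le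
    (hT : ∀ z w : Fin 2 → ℂ,
      T z w = (a11 : ℂ) * z 0 * w 0 + (a21 : ℂ) * z 1 * w 0
        + (a12 : ℂ) * z 0 * w 1 + (a22 : ℂ) * z 1 * w 1)
    {M : ℝ} (hM : ∀ c ∈ Icc (-1 : ℝ) 1,
      √(a11 ^ 2 + a21 ^ 2 + 2 * a11 * a21 * c) + √(a12 ^ 2 + a22 ^ 2 + 2 * a12 * a22 * c) ≤ M) :
    ‖T‖ ≤ M := by
  have hM0 : 0 ≤ M :=
    (add_nonneg (Real.sqrt_nonneg _) (Real.sqrt_nonneg _)).trans (hM 1 ⟨by norm_num, le_rfl⟩)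
  refine T.opNorm_le_of_unit_norm hM0 fun z hz => (T z).opNorm_le_of_unit_norm hM0 fun w hw => ?_
  have hz' (i : Fin 2) : ‖z i‖ ≤ 1 := hz ▸ norm_le_pi_norm z i
  have hw' (i : Fin 2) : ‖w i‖ ≤ 1 := hw ▸ norm_le_pi_norm w i
  set u := (a11 : ℂ) * z 0 + a21 * z 1
  set v := (a12 : ℂ) * z 0 + a22 * z 1
  calc ‖T z w‖ = ‖u * w 0 + v * w 1‖ := by rw [hT]; congr 1; ring
    _ ≤ ‖u‖ + ‖v‖ := by
        refine (norm_add_le _ _).trans (add_le_add ?_ ?_) <;> rw [norm_mul] <;>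
          exact mul_le_of_le_one_right (norm_nonneg _) (hw' _)
    _ ≤ M := (add_le_add (norm_ofReal_mul_add_ofReal_mul_le _ _ (hz' 0) (hz' 1))
        (norm_ofReal_mul_add_ofReal_mul_le _ _ (hz' 0) (hz' 1))).trans
          (hM _ (abs_le.1 (abs_re_mul_conj_le_one (hz' 0) (hz' 1))))

theorem sqrt_add_sqrt_le_opNorm
    (hT : ∀ z w : Fin 2 → ℂ,
      T z w = (a11 : ℂ) * z 0 * w 0 + (a21 : ℂ) * z 1 * w 0
        + (a12 : ℂ) * z 0 * w 1 + (a22 : ℂ) * z 1 * w 1)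
    {c : ℝ} (hc : c ∈ Icc (-1 : ℝ) 1) :
    √(a11 ^ 2 + a21 ^ 2 + 2 * a11 * a21 * c) + √(a12 ^ 2 + a22 ^ 2 + 2 * a12 * a22 * c) ≤ ‖T‖ := by
  set ζ := exp (Real.arccos c * I)
  set u := (a11 : ℂ) + a21 * ζ
  set v := (a12 : ℂ) + a22 * ζ
  have hunit (x : ℂ) (hx : ‖x‖ = 1) (y : ℂ) (hy : ‖y‖ = 1) : ‖![x, y]‖ ≤ 1 := by
    rw [pi_norm_le_iff_of_nonneg zero_le_one, Fin.forall_fin_two]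
    simp [hx, hy]
  calc √(a11 ^ 2 + a21 ^ 2 + 2 * a11 * a21 * c) + √(a12 ^ 2 + a22 ^ 2 + 2 * a12 * a22 * c)
      = ‖u‖ + ‖v‖ := by
        rw [norm_ofReal_add_ofReal_mul_exp_arccos _ _ hc,
          norm_ofReal_add_ofReal_mul_exp_arccos _ _ hc]
    _ = ‖T ![1, ζ] ![exp (-arg u * I), exp (-arg v * I)]‖ := by
        rw [hT]
        simp only [Matrix.cons_val_zero, Matrix.cons_val_one]
        rw [show (a11 : ℂ) * 1 * exp (-arg u * I) + a21 * ζ * exp (-arg u * I)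
            + a12 * 1 * exp (-arg v * I) + a22 * ζ * exp (-arg v * I)
            = u * exp (-arg u * I) + v * exp (-arg v * I) by ring,
          mul_exp_neg_arg_mul_I, mul_exp_neg_arg_mul_I, ← ofReal_add, norm_real,
          Real.norm_of_nonneg (by positivity)]
    _ ≤ ‖T‖ * 1 * 1 := (T.le_opNorm₂ _ _).trans <| by
        gcongr
        · exact hunit _ norm_one _ (norm_exp_ofReal_mul_I _)
        · exact hunit _ (by rw [← ofReal_neg]; exact norm_exp_ofReal_mul_I _) _
            (by rw [← ofReal_neg]; exact norm_exp_ofReal_mul_I _)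
    _ = ‖T‖ := by ring

end

section

variable {a11 a12 a21 a22 c0 : ℝ}

theorem critical_point_sq_mul_eq (hmn : a11 * a21 * (a12 * a22) < 0)
    (hc0 : c0 = (a11 ^ 2 * a21 ^ 2 / (a12 ^ 2 * a22 ^ 2) * (a12 ^ 2 + a22 ^ 2)
            - (a11 ^ 2 + a21 ^ 2)) / (2 * a11 * a21 * (1 - a11 * a21 / (a12 * a22)))) :
    (2 * a11 * a21) ^ 2 * (a12 ^ 2 + a22 ^ 2 + 2 * a12 * a22 * c0)
      = (2 * a12 * a22) ^ 2 * (a11 ^ 2 + a21 ^ 2 + 2 * a11 * a21 * c0) := by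
  have hm : a11 * a21 ≠ 0 := left_ne_zero_of_mul hmn.ne
  have hn : a12 * a22 ≠ 0 := right_ne_zero_of_mul hmn.ne
  have hnm : a12 * a22 - a11 * a21 ≠ 0 := fun h => by nlinarith [sq_nonneg (a11 * a21)]
  obtain ⟨h11, h21⟩ := mul_ne_zero_iff.1 hm
  obtain ⟨h12, h22⟩ := mul_ne_zero_iff.1 hn
  rw [hc0]
  field_simp
  ring

theorem isMaxOn_sqrt_add_sqrt_critical_point (hmn : a11 * a21 * (a12 * a22) < 0)
    (hc0 : c0 = (a11 ^ 2 * a21 ^ 2 / (a12 ^ 2 * a22 ^ 2) * (a12 ^ 2 + a22 ^ 2)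
            - (a11 ^ 2 + a21 ^ 2)) / (2 * a11 * a21 * (1 - a11 * a21 / (a12 * a22))))
    (hc : c0 ∈ Icc (-1) 1) :
    IsMaxOn (fun c => √(a11 ^ 2 + a21 ^ 2 + 2 * a11 * a21 * c)
      + √(a12 ^ 2 + a22 ^ 2 + 2 * a12 * a22 * c)) (Icc (-1) 1) c0 := by
  have hid := critical_point_sq_mul_eq hmn hc0
  have hm : a11 * a21 ≠ 0 := left_ne_zero_of_mul hmn.ne
  have hn : a12 * a22 ≠ 0 := right_ne_zero_of_mul hmn.ne
  obtain ⟨h11, h21⟩ := mul_ne_zero_iff.1 hm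
  obtain ⟨h12, h22⟩ := mul_ne_zero_iff.1 hn
  have hP : 0 < a11 ^ 2 + a21 ^ 2 + 2 * a11 * a21 * c0 := by
    refine (sq_add_sq_add_two_mul_mul_nonneg a11 a21 hc).lt_of_ne fun hP => ?_
    have hR : a12 ^ 2 + a22 ^ 2 + 2 * a12 * a22 * c0 = 0 := by
      rw [← hP, mul_zero] at hid
      exact (mul_eq_zero.1 hid).resolve_left (by positivity)
    have hprod : 4 * (a11 * a21 * (a12 * a22)) * c0 ^ 2
        = (a11 ^ 2 + a21 ^ 2) * (a12 ^ 2 + a22 ^ 2) := by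
      linear_combination -(2 * a12 * a22 * c0) * hP - (a11 ^ 2 + a21 ^ 2) * hR
    have : 0 < (a11 ^ 2 + a21 ^ 2) * (a12 ^ 2 + a22 ^ 2) := by positivity
    nlinarith [mul_nonpos_of_nonpos_of_nonneg hmn.le (sq_nonneg c0)]
  have hR : 0 < a12 ^ 2 + a22 ^ 2 + 2 * a12 * a22 * c0 :=
    pos_of_mul_pos_right (hid ▸ mul_pos (by positivity) hP) (sq_nonneg _)
  have hcrit := mul_sqrt_add_mul_sqrt_eq_zero (by linarith) hP.le hR.le hid
  exact (isMaxOn_sqrt_add_sqrt hP hR hcrit).on_subset fun c hc =>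
    ⟨sq_add_sq_add_two_mul_mul_nonneg _ _ hc, sq_add_sq_add_two_mul_mul_nonneg _ _ hc⟩

end

theorem norm_bilinear_form_linf2_complex_caseA_general
    (a11 a12 a21 a22 : ℝ)
    (T : (Fin 2 → ℂ) →L[ℂ] (Fin 2 → ℂ) →L[ℂ] ℂ)
    (hT : ∀ z w : Fin 2 → ℂ,
      T z w = (a11 : ℂ) * z 0 * w 0 + (a21 : ℂ) * z 1 * w 0
        + (a12 : ℂ) * z 0 * w 1 + (a22 : ℂ) * z 1 * w 1)
    (hsgn : a11 * a21 / (a12 * a22) < 0)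
    (hle : |a11 ^ 2 * a21 ^ 2 / (a12 ^ 2 * a22 ^ 2) * (a12 ^ 2 + a22 ^ 2)
            - (a11 ^ 2 + a21 ^ 2)|
          ≤ |2 * a11 * a21 * (1 - a11 * a21 / (a12 * a22))|)
    (c0 : ℝ)
    (hc0 : c0 = (a11 ^ 2 * a21 ^ 2 / (a12 ^ 2 * a22 ^ 2) * (a12 ^ 2 + a22 ^ 2)
            - (a11 ^ 2 + a21 ^ 2)) / (2 * a11 * a21 * (1 - a11 * a21 / (a12 * a22)))) :
    ‖T‖ = max (max (|a11 + a21| + |a12 + a22|) (|a11 - a21| + |a12 - a22|))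
      (Real.sqrt (a11 ^ 2 + a21 ^ 2 + 2 * a11 * a21 * c0)
        + Real.sqrt (a12 ^ 2 + a22 ^ 2 + 2 * a12 * a22 * c0)) := by
  have hmn : a11 * a21 * (a12 * a22) < 0 := mul_neg_iff.2 (div_neg_iff.1 hsgn)
  have hc : c0 ∈ Icc (-1) 1 := abs_le.1 <| by
    rw [hc0, abs_div]
    exact div_le_one_of_le₀ hle (abs_nonneg _)
  have hmax := isMaxOn_iff.1 (isMaxOn_sqrt_add_sqrt_critical_point hmn hc0 hc)
  have h1 := hmax _ (show (1 : ℝ) ∈ Icc (-1) 1 by norm_num)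
  have h2 := hmax _ (show (-1 : ℝ) ∈ Icc (-1) 1 by norm_num)
  simp only [sqrt_sq_add_sq_add_two_mul_mul_one, sqrt_sq_add_sq_add_two_mul_mul_neg_one] at h1 h2
  rw [max_eq_right (max_le h1 h2)]
  exact le_antisymm (opNorm_le_of_sqrt_add_sqrt_le hT hmax) (sqrt_add_sqrt_le_opNorm hT hc)

/-- Part (A) of the norm formula for complex bilinear forms on `ℓ∞²(ℂ)` with real
coefficients: under the stated sign and inequality conditions, the norm involves an extra
square-root term evaluated at the critical value `c₀`. -/
theorem norm_bilinear_form_linf2_complex_caseA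
    (a11 a12 a21 a22 : ℝ)
    (T : (Fin 2 → ℂ) →L[ℂ] (Fin 2 → ℂ) →L[ℂ] ℂ)
    (hT : ∀ z w : Fin 2 → ℂ,
      T z w = (a11 : ℂ) * z 0 * w 0 + (a21 : ℂ) * z 1 * w 0
        + (a12 : ℂ) * z 0 * w 1 + (a22 : ℂ) * z 1 * w 1)
    (h11 : a11 ≠ 0) (h21 : a21 ≠ 0) (h12 : a12 ≠ 0) (h22 : a22 ≠ 0)
    (hsgn : a11 * a21 / (a12 * a22) < 0)
    (hle : |a11 ^ 2 * a21 ^ 2 / (a12 ^ 2 * a22 ^ 2) * (a12 ^ 2 + a22 ^ 2)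
            - (a11 ^ 2 + a21 ^ 2)|
          ≤ |2 * a11 * a21 * (1 - a11 * a21 / (a12 * a22))|)
    (c0 : ℝ)
    (hc0 : c0 = (a11 ^ 2 * a21 ^ 2 / (a12 ^ 2 * a22 ^ 2) * (a12 ^ 2 + a22 ^ 2)
            - (a11 ^ 2 + a21 ^ 2)) / (2 * a11 * a21 * (1 - a11 * a21 / (a12 * a22)))) :
    ‖T‖ = max (max (|a11 + a21| + |a12 + a22|) (|a11 - a21| + |a12 - a22|))
      (Real.sqrt (a11 ^ 2 + a21 ^ 2 + 2 * a11 * a21 * c0)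
        + Real.sqrt (a12 ^ 2 + a22 ^ 2 + 2 * a12 * a22 * c0)) :=
  norm_bilinear_form_linf2_complex_caseA_general a11 a12 a21 a22 T hT hsgn hle c0 hc0
end

section
/- Let T : ℓ∞²(ℂ) × ℓ∞²(ℂ) → ℂ be the bilinear form T(z,w) = Σ_{i,j=1}^{2} a_{ij} z_i w_j with real coefficients a_{ij}. Then ‖T‖ = sup over t ∈ ℝ of √(a₁₁² + a₂₁² + 2a₁₁a₂₁ cos t) + √(a₁₂² + a₂₂² + 2a₁₂a₂₂ cos t). -/
/-!
For fixed `z`, `T z` is the functional `w ↦ c₁(z) w₁ + c₂(z) w₂` on `ℓ∞²(ℂ)`, whose norm is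
`‖c₁(z)‖ + ‖c₂(z)‖`. The function `z ↦ ‖T z‖` is convex, so on the unit polydisc it peaks on the
torus `‖z₁‖ = ‖z₂‖ = 1`, and by rotating `z` it suffices to take `z = (1, e^{it})`, where
`‖a + b e^{it}‖ = √(a² + b² + 2ab cos t)`.
-/

open Complex Function Finset Metric

section Polydisc

variable {E ι : Type*} [NormedAddCommGroup E] [NormedSpace ℝ E] [Nontrivial E] [DecidableEq ι]
  {F : (ι → E) → ℝ}

theorem ConvexOn.exists_le_update_of_norm_le_one (hF : ConvexOn ℝ Set.univ F) (z : ι → E) (i : ι)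
    (hzi : ‖z i‖ ≤ 1) : ∃ e : E, ‖e‖ = 1 ∧ F z ≤ F (update z i e) := by
  have hconv : ConvexOn ℝ Set.univ fun e => F (update z i e) := by
    simp_rw [Pi.update_eq_sub_add_single]
    simpa [comp_def] using
      (hF.translate_right (z - Pi.single i (z i))).comp_linearMap
        (LinearMap.single ℝ (fun _ => E) i)
  have hmem : z i ∈ convexHull ℝ (sphere (0 : E) 1) := by
    rwa [convexHull_sphere_eq_closedBall 0 zero_le_one, mem_closedBall_zero_iff]
  obtain ⟨e, he, hle⟩ := hconv.exists_ge_of_mem_convexHull (Set.subset_univ _) hmem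
  exact ⟨e, mem_sphere_zero_iff_norm.mp he, by simpa using hle⟩

theorem ConvexOn.exists_le_of_norm_le_one [Fintype ι] (hF : ConvexOn ℝ Set.univ F) {z : ι → E}
    (hz : ‖z‖ ≤ 1) : ∃ u : ι → E, (∀ i, ‖u i‖ = 1) ∧ F z ≤ F u := by
  suffices ∀ s : Finset ι, ∃ u : ι → E, ‖u‖ ≤ 1 ∧ (∀ i ∈ s, ‖u i‖ = 1) ∧ F z ≤ F u by
    obtain ⟨u, -, hu, hzu⟩ := this univ
    exact ⟨u, fun i => hu i (mem_univ i), hzu⟩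
  intro s
  induction s using Finset.induction_on with
  | empty => exact ⟨z, hz, by simp, le_rfl⟩
  | insert i s _ ih =>
    obtain ⟨u, hu, hus, hzu⟩ := ih
    obtain ⟨e, he, hue⟩ := hF.exists_le_update_of_norm_le_one u i ((norm_le_pi_norm u i).trans hu)
    refine ⟨update u i e, ?_, ?_, hzu.trans hue⟩
    · rw [pi_norm_le_iff_of_nonneg zero_le_one]
      intro j
      rcases eq_or_ne j i with rfl | hj
      · simp [he]
      · simpa [hj] using (norm_le_pi_norm u j).trans hu
    · intro j hj
      rcases eq_or_ne j i with rfl | hji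
      · simp [he]
      · simpa [hji] using hus j ((mem_insert.mp hj).resolve_left hji)

end Polydisc

theorem ContinuousLinearMap.norm_eq_sum_norm_of_apply_eq_sum {𝕜 ι : Type*} [RCLike 𝕜] [Fintype ι]
    {φ : (ι → 𝕜) →L[𝕜] 𝕜} {c : ι → 𝕜} (hφ : ∀ w, φ w = ∑ i, c i * w i) :
    ‖φ‖ = ∑ i, ‖c i‖ := by
  apply le_antisymm
  · refine φ.opNorm_le_bound (by positivity) fun w => ?_
    calc ‖φ w‖ ≤ ∑ i, ‖c i‖ * ‖w i‖ := by
          simpa only [hφ, norm_mul] using norm_sum_le univ fun i => c i * w i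
      _ ≤ ∑ i, ‖c i‖ * ‖w‖ := by gcongr with i; exact norm_le_pi_norm w i
      _ = (∑ i, ‖c i‖) * ‖w‖ := by rw [sum_mul]
  · -- the phases `conj cᵢ / ‖cᵢ‖` (junk value `0` where `cᵢ = 0`) align every term
    set w : ι → 𝕜 := fun i => starRingEnd 𝕜 (c i) / ‖c i‖
    have hw : ‖w‖ ≤ 1 := by
      refine (pi_norm_le_iff_of_nonneg zero_le_one).mpr fun i => ?_
      simp only [w, norm_div, RCLike.norm_conj, RCLike.norm_ofReal, abs_norm]
      exact div_self_le_one _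
    have hφw : φ w = ((∑ i, ‖c i‖ : ℝ) : 𝕜) := by
      simp only [hφ, w, RCLike.ofReal_sum, mul_div_assoc', RCLike.mul_conj]
      exact sum_congr rfl fun i _ => by rw [sq, mul_self_div_self]
    calc ∑ i, ‖c i‖ = ‖φ w‖ := by rw [hφw, RCLike.norm_ofReal, abs_of_nonneg (by positivity)]
      _ ≤ ‖φ‖ * ‖w‖ := φ.le_opNorm w
      _ ≤ ‖φ‖ := mul_le_of_le_one_right (norm_nonneg φ) hw

theorem Complex.norm_ofReal_add_ofReal_mul_exp (a b t : ℝ) :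
    ‖(a : ℂ) + b * exp (t * I)‖ = √(a ^ 2 + b ^ 2 + 2 * a * b * Real.cos t) := by
  rw [norm_def]
  congr 1
  simp only [normSq_apply, add_re, add_im, mul_re, mul_im, ofReal_re, ofReal_im,
    exp_ofReal_mul_I_re, exp_ofReal_mul_I_im]
  nlinarith [Real.sin_sq_add_cos_sq t]

theorem ContinuousLinearMap.exists_norm_apply_eq_norm_apply_one_exp {F : Type*}
    [SeminormedAddCommGroup F] [NormedSpace ℂ F] (L : (Fin 2 → ℂ) →L[ℂ] F) {u : Fin 2 → ℂ}
    (hu : ∀ i, ‖u i‖ = 1) : ∃ t : ℝ, ‖L u‖ = ‖L ![1, exp (t * I)]‖ := by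
  have hexp : exp (arg (u 1 / u 0) * I) = u 1 / u 0 := by
    simpa [hu 0, hu 1] using norm_mul_exp_arg_mul_I (u 1 / u 0)
  have hu0 : u 0 ≠ 0 := norm_ne_zero_iff.mp (by simp [hu 0])
  have hrot : u 0 • ![1, exp (arg (u 1 / u 0) * I)] = u := by
    ext i; fin_cases i <;> simp [hexp, hu0, mul_div_cancel₀]
  refine ⟨arg (u 1 / u 0), ?_⟩
  conv_lhs => rw [← hrot]
  rw [map_smul, norm_smul, hu 0, one_mul]

/-- The norm of a complex bilinear form on `ℓ∞²(ℂ)` with real coefficients is the supremum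
over `t ∈ ℝ` of `√(a₁₁² + a₂₁² + 2a₁₁a₂₁ cos t) + √(a₁₂² + a₂₂² + 2a₁₂a₂₂ cos t)`. -/
theorem norm_bilinear_form_linf2_complex_sup_cos
    (a11 a12 a21 a22 : ℝ)
    (T : (Fin 2 → ℂ) →L[ℂ] (Fin 2 → ℂ) →L[ℂ] ℂ)
    (hT : ∀ z w : Fin 2 → ℂ,
      T z w = (a11 : ℂ) * z 0 * w 0 + (a21 : ℂ) * z 1 * w 0
        + (a12 : ℂ) * z 0 * w 1 + (a22 : ℂ) * z 1 * w 1) :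
    ‖T‖ = ⨆ t : ℝ,
      (Real.sqrt (a11 ^ 2 + a21 ^ 2 + 2 * a11 * a21 * Real.cos t)
        + Real.sqrt (a12 ^ 2 + a22 ^ 2 + 2 * a12 * a22 * Real.cos t)) := by
  set f : ℝ → ℝ := fun t => Real.sqrt (a11 ^ 2 + a21 ^ 2 + 2 * a11 * a21 * Real.cos t)
    + Real.sqrt (a12 ^ 2 + a22 ^ 2 + 2 * a12 * a22 * Real.cos t)
  have hf : ∀ t : ℝ, ‖T ![1, exp (t * I)]‖ = f t := fun t => by
    rw [(T ![1, exp (t * I)]).norm_eq_sum_norm_of_apply_eq_sum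
      (c := ![a11 + a21 * exp (t * I), a12 + a22 * exp (t * I)]) fun w => by
        simp [hT, Fin.sum_univ_two]; ring]
    simp [f, Complex.norm_ofReal_add_ofReal_mul_exp]
  have hf_le : ∀ t, f t ≤ ‖T‖ := fun t => by
    rw [← hf]
    refine (T.le_opNorm _).trans (mul_le_of_le_one_right (norm_nonneg T) ?_)
    simp [pi_norm_le_iff_of_nonneg, Fin.forall_fin_two, norm_exp_ofReal_mul_I]
  have hbdd : BddAbove (Set.range f) := ⟨‖T‖, Set.forall_mem_range.mpr hf_le⟩
  refine le_antisymm (T.opNorm_le_of_unit_norm (le_ciSup_of_le hbdd 0 (by positivity))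
    fun z hz => ?_) (ciSup_le hf_le)
  obtain ⟨u, hu, hzu⟩ := (convexOn_univ_norm.comp_linearMap
    (T.toLinearMap.restrictScalars ℝ)).exists_le_of_norm_le_one hz.le
  obtain ⟨t, ht⟩ := T.exists_norm_apply_eq_norm_apply_one_exp hu
  calc ‖T z‖ ≤ ‖T u‖ := hzu
    _ = f t := ht.trans (hf t)
    _ ≤ ⨆ t, f t := le_ciSup hbdd t
end

section
/- The set of extreme points of the closed unit ball of the space of bilinear forms on ℓ∞²(ℝ) (with the operator norm) consists exactly of: the eight forms ±x_iy_j for i,j ∈ {1,2} (i.e., (x,y) ↦ ε·x_iy_j with ε ∈ {−1,1}), together with the eight forms (x,y) ↦ ½(ε₁₁x₁y₁ + ε₂₁x₂y₁ + ε₁₂x₁y₂ + ε₂₂x₂y₂) where each ε_{ij} ∈ {−1,1} and ε₁₁ε₂₁ε₁₂ε₂₂ = −1. -/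
/-!
In the basis `u₀ = (1, 1)`, `u₁ = (1, -1)` of `ℓ∞²` the sup norm becomes the `ℓ¹` norm:
`‖a u₀ + b u₁‖∞ = |a| + |b|`. The norm of a bilinear form on a product of `ℓ¹` spaces is the
largest absolute value of its values on pairs of basis vectors, so `T ↦ (T(uₖ, uₗ))ₖₗ` is a linear
isometry from the bilinear forms on `ℓ∞²` onto `ℓ∞⁴`, whose unit ball has the sixteen sign
vectors as extreme points. A sign matrix `w` of product `1` has rank one and pulls back to a form
`± xᵢ yⱼ`; one of product `-1` pulls back to `½ ∑ εᵢⱼ xᵢ yⱼ` with `ε = ½ H w H`, where `H` is the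
symmetric matrix with rows `u₀, u₁`, and `ε` is again a sign matrix of product `-1`.
-/

def IsUnitBallExtreme {E : Type*} [SeminormedAddCommGroup E] [NormedSpace ℝ E] (x : E) : Prop :=
  ‖x‖ ≤ 1 ∧ ∀ a b : E, ‖a‖ ≤ 1 → ‖b‖ ≤ 1 → x = (1 / 2 : ℝ) • (a + b) → a = b

theorem LinearIsometryEquiv.isUnitBallExtreme_iff {E F : Type*}
    [SeminormedAddCommGroup E] [NormedSpace ℝ E] [SeminormedAddCommGroup F] [NormedSpace ℝ F]
    (f : E ≃ₗᵢ[ℝ] F) (x : E) : IsUnitBallExtreme (f x) ↔ IsUnitBallExtreme x := by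
  simp only [IsUnitBallExtreme, f.norm_map]
  refine and_congr_right fun _ => ⟨fun h a b ha hb hab => f.injective ?_, fun h a b ha hb hab => ?_⟩
  · exact h (f a) (f b) (by rwa [f.norm_map]) (by rwa [f.norm_map]) (by simp [hab])
  · simpa using congr_arg f <| h (f.symm a) (f.symm b) (by rwa [f.symm.norm_map])
      (by rwa [f.symm.norm_map]) (f.injective (by simp [hab]))

theorem eq_of_abs_le_one_of_abs_midpoint_eq_one {a b : ℝ} (ha : |a| ≤ 1) (hb : |b| ≤ 1)
    (hab : |(a + b) / 2| = 1) : a = b := by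
  rcases abs_cases a with ⟨_, _⟩ | ⟨_, _⟩ <;> rcases abs_cases b with ⟨_, _⟩ | ⟨_, _⟩ <;>
    rcases abs_cases ((a + b) / 2) with ⟨_, _⟩ | ⟨_, _⟩ <;> linarith

theorem isUnitBallExtreme_pi_iff {ι : Type*} [Fintype ι] (f : ι → ℝ) :
    IsUnitBallExtreme f ↔ ∀ i, |f i| = 1 := by
  classical
  simp only [IsUnitBallExtreme, pi_norm_le_iff_of_nonneg zero_le_one, Real.norm_eq_abs]
  refine ⟨fun ⟨hf, hext⟩ i => ?_, fun hf => ⟨fun i => (hf i).le, fun a b ha hb hab => ?_⟩⟩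
  · by_contra hi
    set δ := 1 - |f i|
    have hδ : 0 < δ := sub_pos.2 ((hf i).lt_of_ne hi)
    have hperturb : ∀ t : ℝ, |t| ≤ δ → ∀ j, |(f + Pi.single i t : ι → ℝ) j| ≤ 1 := by
      intro t ht j
      rcases eq_or_ne j i with rfl | hj
      · simpa using (abs_add_le (f j) t).trans (by linarith)
      · simpa [hj] using hf j
    have hmid : f = (1 / 2 : ℝ) • ((f + Pi.single i δ) + (f + Pi.single i (-δ))) := by
      rw [Pi.single_neg]
      module
    have h := hext _ _ (hperturb δ (abs_of_pos hδ).le)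
      (hperturb (-δ) (by rw [abs_neg, abs_of_pos hδ])) hmid
    have := congr_fun h i
    simp only [Pi.add_apply, Pi.single_eq_same, add_right_inj] at this
    linarith
  · funext i
    exact eq_of_abs_le_one_of_abs_midpoint_eq_one (ha i) (hb i) (by
      have := hf i
      rwa [hab, Pi.smul_apply, Pi.add_apply, smul_eq_mul, one_div, inv_mul_eq_div] at this)

/-- Since `x = ∑ i, coord i x • vec i` and `‖vec i‖ ≤ 1`, the coordinates identify `E`
isometrically with `ℓ¹(ι)`. -/
structure L1Basis (ι E : Type*) [Fintype ι] [SeminormedAddCommGroup E] [NormedSpace ℝ E] where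
  vec : ι → E
  coord : ι → E →L[ℝ] ℝ
  sum_coord_smul_vec (x : E) : ∑ i, coord i x • vec i = x
  sum_abs_coord_le (x : E) : ∑ i, |coord i x| ≤ ‖x‖
  norm_vec_le (i : ι) : ‖vec i‖ ≤ 1
  coord_vec_self (i : ι) : coord i (vec i) = 1
  coord_vec_of_ne {i j : ι} : i ≠ j → coord i (vec j) = 0

namespace L1Basis

variable {ι κ E F : Type*} [Fintype ι] [Fintype κ] [SeminormedAddCommGroup E] [NormedSpace ℝ E]
  [SeminormedAddCommGroup F] [NormedSpace ℝ F] (b : L1Basis ι E) (b' : L1Basis κ F)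

theorem bilin_apply_eq_sum (T : E →L[ℝ] F →L[ℝ] ℝ) (x : E) (y : F) :
    T x y = ∑ i, ∑ j, b.coord i x * b'.coord j y * T (b.vec i) (b'.vec j) := by
  conv_lhs => rw [← b.sum_coord_smul_vec x, ← b'.sum_coord_smul_vec y]
  simp only [map_sum, map_smul, FunLike.coe_sum, FunLike.coe_smul,
    Finset.sum_apply, Pi.smul_apply, smul_eq_mul, Finset.mul_sum]
  rw [Finset.sum_comm]
  exact Finset.sum_congr rfl fun i _ => Finset.sum_congr rfl fun j _ => by ring

theorem abs_bilin_apply_vec_le_norm (T : E →L[ℝ] F →L[ℝ] ℝ) (i : ι) (j : κ) :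
    |T (b.vec i) (b'.vec j)| ≤ ‖T‖ :=
  calc |T (b.vec i) (b'.vec j)| ≤ ‖T‖ * ‖b.vec i‖ * ‖b'.vec j‖ := T.le_opNorm₂ _ _
    _ ≤ ‖T‖ * 1 * 1 := by gcongr <;> [exact b.norm_vec_le i; exact b'.norm_vec_le j]
    _ = ‖T‖ := by ring

theorem norm_bilin_le (T : E →L[ℝ] F →L[ℝ] ℝ) {C : ℝ} (hC : 0 ≤ C)
    (hT : ∀ i j, |T (b.vec i) (b'.vec j)| ≤ C) : ‖T‖ ≤ C := by
  refine T.opNorm_le_bound₂ hC fun x y => ?_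
  calc ‖T x y‖ = |∑ i, ∑ j, b.coord i x * b'.coord j y * T (b.vec i) (b'.vec j)| := by
        rw [Real.norm_eq_abs, b.bilin_apply_eq_sum b']
    _ ≤ ∑ i, ∑ j, |b.coord i x| * |b'.coord j y| * C := by
        refine (Finset.abs_sum_le_sum_abs _ _).trans <| Finset.sum_le_sum fun i _ =>
          (Finset.abs_sum_le_sum_abs _ _).trans <| Finset.sum_le_sum fun j _ => ?_
        rw [abs_mul, abs_mul]
        gcongr
        exact hT i j
    _ = C * ((∑ i, |b.coord i x|) * ∑ j, |b'.coord j y|) := by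
        rw [Finset.sum_mul_sum, Finset.mul_sum]
        refine Finset.sum_congr rfl fun i _ => ?_
        rw [Finset.mul_sum]
        exact Finset.sum_congr rfl fun j _ => by ring
    _ ≤ C * (‖x‖ * ‖y‖) := by
        have hx := b.sum_abs_coord_le x
        have hy := b'.sum_abs_coord_le y
        gcongr
    _ = C * ‖x‖ * ‖y‖ := by ring

noncomputable def bilinEquiv : (E →L[ℝ] F →L[ℝ] ℝ) ≃ₗᵢ[ℝ] (ι × κ → ℝ) where
  toFun T p := T (b.vec p.1) (b'.vec p.2)
  invFun g := ∑ p, g p • (b.coord p.1).smulRight (b'.coord p.2)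
  map_add' T S := by ext; simp
  map_smul' c T := by ext; simp
  left_inv T := by
    ext x y
    simp only [b.bilin_apply_eq_sum b' T x y, Fintype.sum_prod_type, FunLike.coe_sum,
      FunLike.coe_smul, Finset.sum_apply, Pi.smul_apply, ContinuousLinearMap.smulRight_apply,
      smul_eq_mul]
    exact Finset.sum_congr rfl fun i _ => Finset.sum_congr rfl fun j _ => by ring
  right_inv g := by
    ext p
    change (∑ q, g q • (b.coord q.1).smulRight (b'.coord q.2)) (b.vec p.1) (b'.vec p.2) = g p
    simp only [FunLike.coe_sum, FunLike.coe_smul, Finset.sum_apply, Pi.smul_apply,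
      ContinuousLinearMap.smulRight_apply, smul_eq_mul]
    rw [Fintype.sum_eq_single p]
    · simp [b.coord_vec_self, b'.coord_vec_self]
    · rintro ⟨i, j⟩ hq
      by_cases hi : i = p.1
      · simp [b'.coord_vec_of_ne fun hj => hq (Prod.ext hi hj)]
      · simp [b.coord_vec_of_ne hi]
  norm_map' T := le_antisymm
    ((pi_norm_le_iff_of_nonneg (norm_nonneg T)).2 fun p =>
      b.abs_bilin_apply_vec_le_norm b' T p.1 p.2)
    (b.norm_bilin_le b' T (norm_nonneg _) fun i j => by
      simpa using norm_le_pi_norm (fun p : ι × κ => T (b.vec p.1) (b'.vec p.2)) (i, j))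

end L1Basis

def squareVertex : Fin 2 → Fin 2 → ℝ := ![![1, 1], ![1, -1]]

theorem abs_squareVertex (k i : Fin 2) : |squareVertex k i| = 1 := by
  fin_cases k <;> fin_cases i <;> simp [squareVertex]

theorem abs_half_add_add_abs_half_sub_le {a b r : ℝ} (ha : |a| ≤ r) (hb : |b| ≤ r) :
    |(a + b) / 2| + |(a - b) / 2| ≤ r := by
  rcases abs_cases a with ⟨_, _⟩ | ⟨_, _⟩ <;> rcases abs_cases b with ⟨_, _⟩ | ⟨_, _⟩ <;>
    rcases abs_cases ((a + b) / 2) with ⟨_, _⟩ | ⟨_, _⟩ <;>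
    rcases abs_cases ((a - b) / 2) with ⟨_, _⟩ | ⟨_, _⟩ <;> linarith

noncomputable def squareVertexCoord (k : Fin 2) : (Fin 2 → ℝ) →L[ℝ] ℝ :=
  (2⁻¹ : ℝ) • (ContinuousLinearMap.proj 0 + squareVertex k 1 • ContinuousLinearMap.proj 1)

@[simp]
theorem squareVertexCoord_apply (k : Fin 2) (x : Fin 2 → ℝ) :
    squareVertexCoord k x = (x 0 + squareVertex k 1 * x 1) / 2 := by
  simp only [squareVertexCoord, smul_apply, add_apply, ContinuousLinearMap.proj_apply, smul_eq_mul]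
  ring

noncomputable def linftyTwoL1Basis : L1Basis (Fin 2) (Fin 2 → ℝ) where
  vec := squareVertex
  coord := squareVertexCoord
  sum_coord_smul_vec x := by
    ext i
    fin_cases i <;> simp [squareVertex, Fin.sum_univ_two] <;> ring
  sum_abs_coord_le x := by
    simpa [squareVertex, Fin.sum_univ_two, sub_eq_add_neg] using
      abs_half_add_add_abs_half_sub_le (norm_le_pi_norm x 0) (norm_le_pi_norm x 1)
  norm_vec_le k := (pi_norm_le_iff_of_nonneg zero_le_one).2 fun i => (abs_squareVertex k i).le
  coord_vec_self k := by fin_cases k <;> norm_num [squareVertex]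
  coord_vec_of_ne {k l} h := by fin_cases k <;> fin_cases l <;> simp [squareVertex] at h ⊢

theorem apply_eq_sum_squareVertex (T : (Fin 2 → ℝ) →L[ℝ] (Fin 2 → ℝ) →L[ℝ] ℝ)
    (x y : Fin 2 → ℝ) :
    T x y = (∑ k, ∑ l, (x 0 + squareVertex k 1 * x 1) * (y 0 + squareVertex l 1 * y 1) *
      T (squareVertex k) (squareVertex l)) / 4 := by
  rw [linftyTwoL1Basis.bilin_apply_eq_sum linftyTwoL1Basis, Finset.sum_div]
  refine Finset.sum_congr rfl fun k _ => ?_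
  rw [Finset.sum_div]
  refine Finset.sum_congr rfl fun l _ => ?_
  simp only [linftyTwoL1Basis, squareVertexCoord_apply]
  ring

theorem isUnitBallExtreme_iff_abs_apply_squareVertex
    (T : (Fin 2 → ℝ) →L[ℝ] (Fin 2 → ℝ) →L[ℝ] ℝ) :
    IsUnitBallExtreme T ↔ ∀ k l, |T (squareVertex k) (squareVertex l)| = 1 := by
  rw [← (linftyTwoL1Basis.bilinEquiv linftyTwoL1Basis).isUnitBallExtreme_iff T,
    isUnitBallExtreme_pi_iff, Prod.forall]
  rfl

def IsSignedCoordProduct (T : (Fin 2 → ℝ) →L[ℝ] (Fin 2 → ℝ) →L[ℝ] ℝ) : Prop :=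
  ∃ ε : ℝ, (ε = 1 ∨ ε = -1) ∧ ∃ i j : Fin 2, ∀ x y : Fin 2 → ℝ, T x y = ε * x i * y j

def IsHalfSignSum (T : (Fin 2 → ℝ) →L[ℝ] (Fin 2 → ℝ) →L[ℝ] ℝ) : Prop :=
  ∃ ε : Fin 2 → Fin 2 → ℝ, (∀ i j, ε i j = 1 ∨ ε i j = -1) ∧ ε 0 0 * ε 1 0 * ε 0 1 * ε 1 1 = -1 ∧
    ∀ x y : Fin 2 → ℝ, T x y = (1 / 2) * ∑ i : Fin 2, ∑ j : Fin 2, ε i j * x i * y j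

theorem abs_add_add_add_eq_two {a b c d : ℝ} (ha : |a| = 1) (hb : |b| = 1) (hc : |c| = 1)
    (hd : |d| = 1) (h : a * b * c * d = -1) : |a + b + c + d| = 2 := by
  have sign {t : ℝ} (ht : |t| = 1) : t = 1 ∨ t = -1 := (abs_eq zero_le_one).1 ht
  rcases sign ha with rfl | rfl <;> rcases sign hb with rfl | rfl <;>
    rcases sign hc with rfl | rfl <;> rcases sign hd with rfl | rfl <;> revert h <;> norm_num

theorem abs_apply_squareVertex_eq_one {T : (Fin 2 → ℝ) →L[ℝ] (Fin 2 → ℝ) →L[ℝ] ℝ}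
    (hT : IsSignedCoordProduct T ∨ IsHalfSignSum T) (k l : Fin 2) :
    |T (squareVertex k) (squareVertex l)| = 1 := by
  have hsq (k i : Fin 2) : squareVertex k i ^ 2 = 1 := by
    rw [← sq_abs, abs_squareVertex, one_pow]
  rcases hT with ⟨ε, hε, i, j, hT⟩ | ⟨ε, hε, hprod, hT⟩
  · rw [hT, abs_mul, abs_mul, abs_squareVertex, abs_squareVertex]
    rcases hε with rfl | rfl <;> norm_num
  · have habs : ∀ i j, |ε i j * squareVertex k i * squareVertex l j| = 1 := fun i j => by
      rw [abs_mul, abs_mul, abs_squareVertex, abs_squareVertex, mul_one, mul_one,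
        abs_eq zero_le_one]
      exact hε i j
    rw [hT, abs_mul, Fin.sum_univ_two, Fin.sum_univ_two, Fin.sum_univ_two, ← add_assoc,
      abs_add_add_add_eq_two (habs 0 0) (habs 0 1) (habs 1 0) (habs 1 1)]
    · norm_num
    · calc _ = ε 0 0 * ε 1 0 * ε 0 1 * ε 1 1 * (squareVertex k 0 ^ 2 * squareVertex k 1 ^ 2 *
            squareVertex l 0 ^ 2 * squareVertex l 1 ^ 2) := by ring
        _ = -1 := by rw [hprod, hsq, hsq, hsq, hsq]; norm_num

theorem isSignedCoordProduct_or_isHalfSignSum {T : (Fin 2 → ℝ) →L[ℝ] (Fin 2 → ℝ) →L[ℝ] ℝ}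
    (h : ∀ k l, |T (squareVertex k) (squareVertex l)| = 1) :
    IsSignedCoordProduct T ∨ IsHalfSignSum T := by
  set w : Fin 2 → Fin 2 → ℝ := fun k l => T (squareVertex k) (squareVertex l)
  have hT : ∀ x y, T x y = (∑ k, ∑ l, (x 0 + squareVertex k 1 * x 1) *
      (y 0 + squareVertex l 1 * y 1) * w k l) / 4 := apply_eq_sum_squareVertex T
  have hw : ∀ k l, w k l = 1 ∨ w k l = -1 := fun k l => (abs_eq zero_le_one).1 (h k l)
  clear_value w
  by_cases hprod : w 0 0 * w 0 1 * w 1 0 * w 1 1 = 1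
  · -- `w k l = ε * squareVertex k i * squareVertex l j`: `i`, `j` record whether the second
    -- row, column of `w` flips sign.
    left
    refine ⟨w 0 0, hw 0 0, if w 1 0 = w 0 0 then 0 else 1, if w 0 1 = w 0 0 then 0 else 1,
      fun x y => ?_⟩
    rw [hT]
    revert hprod
    rcases hw 0 0 with h00 | h00 <;> rcases hw 0 1 with h01 | h01 <;>
      rcases hw 1 0 with h10 | h10 <;> rcases hw 1 1 with h11 | h11 <;>
      norm_num [h00, h01, h10, h11, Fin.sum_univ_two, squareVertex] <;> ring
  · -- `ε = ½ H w H` inverts `w = ½ H ε H`, as `H = squareVertex` satisfies `H * H = 2`.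
    right
    refine ⟨fun i j => (∑ k, ∑ l, squareVertex k i * squareVertex l j * w k l) / 2,
      and_assoc.1 ⟨?_, fun x y => ?_⟩⟩
    · simp only [Fin.forall_fin_two]
      revert hprod
      rcases hw 0 0 with h00 | h00 <;> rcases hw 0 1 with h01 | h01 <;>
        rcases hw 1 0 with h10 | h10 <;> rcases hw 1 1 with h11 | h11 <;>
        norm_num [h00, h01, h10, h11, Fin.sum_univ_two, squareVertex]
    · rw [hT]
      simp [squareVertex, Fin.sum_univ_two]
      ring

/-- Characterization of the extreme points of the closed unit ball of the space of bilinear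
forms on `ℓ∞²(ℝ)`: they are exactly the sixteen forms `± xᵢyⱼ` and
`½(ε₁₁x₁y₁ + ε₂₁x₂y₁ + ε₁₂x₁y₂ + ε₂₂x₂y₂)` with signs `ε` of product `-1`.
(Extreme point of the ball: `T` is in the ball and whenever `T` is the midpoint of two
members `A, B` of the ball, then `A = B`.) -/
theorem extremePoints_unitBall_bilinear_linf2
    (T : (Fin 2 → ℝ) →L[ℝ] (Fin 2 → ℝ) →L[ℝ] ℝ) :
    (‖T‖ ≤ 1 ∧ ∀ A B : (Fin 2 → ℝ) →L[ℝ] (Fin 2 → ℝ) →L[ℝ] ℝ,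
        ‖A‖ ≤ 1 → ‖B‖ ≤ 1 → T = (1 / 2 : ℝ) • (A + B) → A = B)
    ↔ ((∃ ε : ℝ, (ε = 1 ∨ ε = -1) ∧ ∃ i j : Fin 2,
          ∀ x y : Fin 2 → ℝ, T x y = ε * x i * y j)
      ∨ (∃ ε : Fin 2 → Fin 2 → ℝ, (∀ i j, ε i j = 1 ∨ ε i j = -1)
          ∧ ε 0 0 * ε 1 0 * ε 0 1 * ε 1 1 = -1
          ∧ ∀ x y : Fin 2 → ℝ,
              T x y = (1 / 2) * ∑ i : Fin 2, ∑ j : Fin 2, ε i j * x i * y j)) := by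
  exact (isUnitBallExtreme_iff_abs_apply_squareVertex T).trans
    ⟨isSignedCoordProduct_or_isHalfSignSum, abs_apply_squareVertex_eq_one⟩
end

section
/- In the space of bilinear forms on ℓ∞²(ℝ) with the operator norm, the set of extreme points of the closed unit ball coincides with the set of exposed points of the closed unit ball. -/
/-- The topological dual of a normed space, as `NormedSpace.Dual` was defined in the older
Mathlib (removed since; `StrongDual` does not carry the normed-space instances here). -/
abbrev NormedSpace.Dual (𝕜 : Type*) [NontriviallyNormedField 𝕜] (E : Type*)
    [SeminormedAddCommGroup E] [NormedSpace 𝕜 E] : Type _ :=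
  E →L[𝕜] 𝕜

/-!
The unit ball of bilinear forms on `ℓ∞² × ℓ∞²` is a polytope: `‖T‖ ≤ 1` iff `T s t ≤ 1` for the
finitely many sign vectors `s, t ∈ {±1}²`, since a linear functional on `ℓ∞ⁿ` attains its maximum
over the unit ball at a sign vector. In a polytope `{z | ∀ i, φ i z ≤ c i}` every extreme point `p`
is exposed by the sum of the constraints active at `p`: if a point `z ≠ p` of the polytope also
made all of them active, then `p ± ε (z - p)` would stay in the polytope for small `ε`, exhibiting
`p` as a midpoint.
-/

open Metric Filter Topology

theorem eq_of_mem_extremePoints_of_eq_midpoint {𝕜 E : Type*} [Field 𝕜] [LinearOrder 𝕜]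
    [IsStrictOrderedRing 𝕜] [AddCommGroup E] [Module 𝕜 E] {A : Set E} {x a b : E}
    (hx : x ∈ A.extremePoints 𝕜) (ha : a ∈ A) (hb : b ∈ A) (hmid : x = (1 / 2 : 𝕜) • (a + b)) :
    a = b := by
  have hseg : x ∈ openSegment 𝕜 a b :=
    ⟨1 / 2, 1 / 2, by norm_num, by norm_num, by norm_num, by rw [hmid, smul_add]⟩
  obtain ⟨hax, hbx⟩ := (mem_extremePoints.1 hx).2 a ha b hb hseg
  rw [hax, hbx]

theorem mem_exposedPoints_of_eq_midpoint_of_polyhedron {ι E : Type*} [Fintype ι]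
    [AddCommGroup E] [Module ℝ E] [TopologicalSpace E] {A : Set E} (φ : ι → StrongDual ℝ E)
    (c : ι → ℝ) (hA : A = {z | ∀ i, φ i z ≤ c i}) {p : E} (hp : p ∈ A)
    (hmid : ∀ a ∈ A, ∀ b ∈ A, p = (1 / 2 : ℝ) • (a + b) → a = b) :
    p ∈ A.exposedPoints ℝ := by
  classical
  subst hA
  let J := Finset.univ.filter fun i => φ i p = c i
  refine ⟨hp, ∑ i ∈ J, φ i, fun z hz => ?_⟩
  have hle : ∀ i ∈ J, φ i z ≤ φ i p := fun i hi => (Finset.mem_filter.1 hi).2 ▸ hz i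
  simp only [FunLike.coe_sum, Finset.sum_apply]
  refine ⟨Finset.sum_le_sum hle, fun hge => ?_⟩
  set d := z - p with hd
  have hactive : ∀ i ∈ J, φ i d = 0 := fun i hi => by
    rw [hd, map_sub, sub_eq_zero]
    exact (Finset.sum_eq_sum_iff_of_le hle).1 (le_antisymm (Finset.sum_le_sum hle) hge) i hi
  have hnear : ∀ᶠ ε in 𝓝 (0 : ℝ), ∀ i, φ i (p + ε • d) ≤ c i ∧ φ i (p - ε • d) ≤ c i := by
    refine eventually_all.2 fun i => ?_
    simp only [map_add, map_sub, map_smul, smul_eq_mul]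
    by_cases hi : i ∈ J
    · simp [hactive i hi, hp i]
    · have hlt : φ i p < c i := (hp i).lt_of_ne fun h => hi (by simp [J, h])
      have hplus := ((by fun_prop : Continuous fun ε : ℝ => φ i p + ε * φ i d).tendsto' 0 _
        (by simp)).eventually_lt_const hlt
      have hminus := ((by fun_prop : Continuous fun ε : ℝ => φ i p - ε * φ i d).tendsto' 0 _
        (by simp)).eventually_lt_const hlt
      filter_upwards [hplus, hminus] with ε h₁ h₂ using ⟨h₁.le, h₂.le⟩
  obtain ⟨ε, hε, hε0⟩ := ((hnear.filter_mono nhdsWithin_le_nhds).and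
    (self_mem_nhdsWithin : {0}ᶜ ∈ 𝓝[≠] (0 : ℝ))).exists
  have hsym := hmid _ (fun i => (hε i).1) _ (fun i => (hε i).2) (by module)
  have h2ε : (2 * ε) • d = 0 := by linear_combination (norm := module) hsym
  exact sub_eq_zero.1 ((smul_eq_zero.1 h2ε).resolve_left (mul_ne_zero two_ne_zero hε0))

section NormedSpace

variable {E : Type*} [SeminormedAddCommGroup E] [NormedSpace ℝ E]

theorem NormedSpace.Dual.norm_le_one_of_forall_le_one {f : NormedSpace.Dual ℝ E}
    (hf : ∀ y, ‖y‖ ≤ 1 → f y ≤ 1) : ‖f‖ ≤ 1 :=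
  f.opNorm_le_of_unit_norm zero_le_one fun y hy => by
    rw [Real.norm_eq_abs, abs_le]
    exact ⟨neg_le.1 (by simpa using hf (-y) (by rw [norm_neg, hy])), hf y hy.le⟩

theorem mem_exposedPoints_closedBall_of_norm_le_one {f : NormedSpace.Dual ℝ E} (hf : ‖f‖ ≤ 1)
    {x : E} (hx : ‖x‖ ≤ 1) (hfx : f x = 1) (hlt : ∀ y, ‖y‖ ≤ 1 → y ≠ x → f y < 1) :
    x ∈ (closedBall (0 : E) 1).exposedPoints ℝ := by
  refine ⟨mem_closedBall_zero_iff.2 hx, f, fun y hy => ?_⟩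
  rw [mem_closedBall_zero_iff] at hy
  have hfy : f y ≤ 1 := (le_abs_self _).trans <| by
    simpa using f.le_of_opNorm_le_of_le hf hy
  refine ⟨hfx ▸ hfy, fun hxy => ?_⟩
  by_contra hne
  exact (hlt y hy hne).not_ge (hfx ▸ hxy)

end NormedSpace

theorem exists_norm_eq_one_of_mem_exposedPoints_closedBall {E : Type*} [NormedAddCommGroup E]
    [NormedSpace ℝ E] [Nontrivial E] {x : E}
    (hx : x ∈ (closedBall (0 : E) 1).exposedPoints ℝ) :
    ∃ f : NormedSpace.Dual ℝ E, f x = 1 ∧ ‖f‖ = 1 ∧ ∀ y, ‖y‖ ≤ 1 → y ≠ x → f y < 1 := by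
  obtain ⟨hx, l, hl⟩ := hx
  simp only [mem_closedBall_zero_iff] at hx hl
  -- otherwise `x = 0` (compare with `0`), so `l` vanishes on the ball and the ball is `{0}`
  have hpos : 0 < l x := by
    by_contra! hneg
    have hx0 : 0 = x := (hl 0 (by simp)).2 (by simpa using hneg)
    obtain ⟨y, hy⟩ := exists_norm_eq E zero_le_one
    have hly : l y = 0 := le_antisymm (hx0 ▸ (hl y hy.le).1 |>.trans_eq (map_zero l))
      (by simpa [← hx0] using (hl (-y) (by rw [norm_neg, hy])).1)
    have hy0 : y = 0 := hx0 ▸ (hl y hy.le).2 (hx0 ▸ by simp [hly])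
    simp [hy0] at hy
  have hle : ∀ y, ‖y‖ ≤ 1 → (l x)⁻¹ * l y ≤ 1 := fun y hy => by
    rw [inv_mul_le_iff₀ hpos, mul_one]
    exact (hl y hy).1
  refine ⟨(l x)⁻¹ • l, by simp [hpos.ne'], le_antisymm
    (NormedSpace.Dual.norm_le_one_of_forall_le_one hle) ?_, fun y hy hne => ?_⟩
  · calc (1 : ℝ) = |((l x)⁻¹ • l) x| := by simp [hpos.ne']
      _ ≤ ‖(l x)⁻¹ • l‖ * ‖x‖ := ((l x)⁻¹ • l).le_opNorm x
      _ ≤ ‖(l x)⁻¹ • l‖ := mul_le_of_le_one_right (norm_nonneg _) hx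
  · rw [smul_apply, smul_eq_mul, inv_mul_lt_iff₀ hpos, mul_one]
    exact (hl y hy).1.lt_of_ne fun h => hne ((hl y hy).2 h.ge)

section SignVectors

variable {ι κ : Type*} [Fintype ι] [Fintype κ]

def signVec (b : ι → Bool) : ι → ℝ := fun i => if b i then 1 else -1

theorem norm_signVec_le_one (b : ι → Bool) : ‖signVec b‖ ≤ 1 :=
  (pi_norm_le_iff_of_nonneg zero_le_one).2 fun i => by unfold signVec; split_ifs <;> simp

theorem exists_apply_le_apply_signVec (ℓ : (ι → ℝ) →L[ℝ] ℝ) {y : ι → ℝ} (hy : ‖y‖ ≤ 1) :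
    ∃ b, ℓ y ≤ ℓ (signVec b) := by
  classical
  have hsum (x : ι → ℝ) : ℓ x = ∑ i, x i * ℓ (Pi.single i 1) := by
    conv_lhs => rw [pi_eq_sum_univ' x]
    simp [map_sum, map_smul]
  refine ⟨fun i => decide (0 ≤ ℓ (Pi.single i 1)), ?_⟩
  rw [hsum, hsum]
  refine Finset.sum_le_sum fun i _ => ?_
  have hyi : |y i| ≤ 1 := (Real.norm_eq_abs _ ▸ norm_le_pi_norm y i).trans hy
  calc y i * ℓ (Pi.single i 1) ≤ |y i| * |ℓ (Pi.single i 1)| := by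
        rw [← abs_mul]; exact le_abs_self _
    _ ≤ |ℓ (Pi.single i 1)| := mul_le_of_le_one_left (abs_nonneg _) hyi
    _ = _ := by
        unfold signVec
        split_ifs with h <;> simp only [decide_eq_true_eq] at h
        · rw [abs_of_nonneg h, one_mul]
        · rw [abs_of_neg (not_le.1 h), neg_one_mul]

theorem norm_le_one_iff_forall_apply_signVec (T : (ι → ℝ) →L[ℝ] (κ → ℝ) →L[ℝ] ℝ) :
    ‖T‖ ≤ 1 ↔ ∀ b c, T (signVec b) (signVec c) ≤ 1 := by
  constructor
  · intro hT b c
    calc T (signVec b) (signVec c) ≤ ‖T‖ * ‖signVec b‖ * ‖signVec c‖ :=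
          (le_abs_self _).trans (T.le_opNorm₂ _ _)
      _ ≤ 1 * 1 * 1 := by gcongr <;> exact norm_signVec_le_one _
      _ = 1 := by norm_num
  · intro hT
    have hle (x : ι → ℝ) (hx : ‖x‖ ≤ 1) (y : κ → ℝ) (hy : ‖y‖ ≤ 1) : T x y ≤ 1 := by
      obtain ⟨c, hc⟩ := exists_apply_le_apply_signVec (T x) hy
      obtain ⟨b, hb⟩ := exists_apply_le_apply_signVec (T.flip (signVec c)) hx
      simp only [ContinuousLinearMap.flip_apply] at hb
      exact hc.trans (hb.trans (hT b c))
    refine T.opNorm_le_of_unit_norm zero_le_one fun x hx =>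
      (T x).opNorm_le_of_unit_norm zero_le_one fun y hy => ?_
    rw [Real.norm_eq_abs, abs_le]
    exact ⟨neg_le.1 (by simpa using hle (-x) (by rw [norm_neg, hx]) y hy.le),
      hle x hx.le y hy.le⟩

variable (ι κ) in
noncomputable def applySignVecs (bc : (ι → Bool) × (κ → Bool)) :
    StrongDual ℝ ((ι → ℝ) →L[ℝ] (κ → ℝ) →L[ℝ] ℝ) :=
  (ContinuousLinearMap.apply ℝ ℝ (signVec bc.2)).comp
    (ContinuousLinearMap.apply ℝ _ (signVec bc.1))

theorem closedBall_bilinear_eq_setOf_applySignVecs_le_one :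
    closedBall (0 : (ι → ℝ) →L[ℝ] (κ → ℝ) →L[ℝ] ℝ) 1 =
      {T | ∀ bc, applySignVecs ι κ bc T ≤ 1} := by
  ext T
  refine (mem_closedBall_zero_iff (a := T)).trans <|
    (norm_le_one_iff_forall_apply_signVec T).trans ?_
  exact ⟨fun h bc => h bc.1 bc.2, fun h b c => h (b, c)⟩

end SignVectors

/-- In the space of bilinear forms on `ℓ∞²(ℝ)` with the operator norm, the extreme points of
the closed unit ball coincide with its exposed points. (Extreme point: `T` is in the ball and
whenever `T` is the midpoint of two members of the ball, they are equal. Exposed point: `T` is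
in the ball and there is a continuous linear functional `f` with `f T = 1 = ‖f‖` and `f S < 1`
for every other member `S` of the ball.) -/
theorem extremePoints_eq_exposedPoints_unitBall_bilinear_linf2 :
    {T : (Fin 2 → ℝ) →L[ℝ] (Fin 2 → ℝ) →L[ℝ] ℝ |
        ‖T‖ ≤ 1 ∧ ∀ A B : (Fin 2 → ℝ) →L[ℝ] (Fin 2 → ℝ) →L[ℝ] ℝ,
          ‖A‖ ≤ 1 → ‖B‖ ≤ 1 → T = (1 / 2 : ℝ) • (A + B) → A = B}
    = {T : (Fin 2 → ℝ) →L[ℝ] (Fin 2 → ℝ) →L[ℝ] ℝ |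
        ‖T‖ ≤ 1 ∧ ∃ f : NormedSpace.Dual ℝ ((Fin 2 → ℝ) →L[ℝ] (Fin 2 → ℝ) →L[ℝ] ℝ),
          f T = 1 ∧ ‖f‖ = 1 ∧
          ∀ S : (Fin 2 → ℝ) →L[ℝ] (Fin 2 → ℝ) →L[ℝ] ℝ, ‖S‖ ≤ 1 → S ≠ T → f S < 1} := by
  ext T
  constructor
  · rintro ⟨hT, hmid⟩
    refine ⟨hT, exists_norm_eq_one_of_mem_exposedPoints_closedBall (x := T) ?_⟩
    refine mem_exposedPoints_of_eq_midpoint_of_polyhedron (applySignVecs _ _) (fun _ => 1)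
      closedBall_bilinear_eq_setOf_applySignVecs_le_one ((mem_closedBall_zero_iff (a := T)).2 hT)
      fun A hA B hB => hmid A B ?_ ?_
    exacts [(mem_closedBall_zero_iff (a := A)).1 hA, (mem_closedBall_zero_iff (a := B)).1 hB]
  · rintro ⟨hT, f, hfT, hf, hlt⟩
    have hext := exposedPoints_subset_extremePoints
      (mem_exposedPoints_closedBall_of_norm_le_one hf.le hT hfT hlt)
    exact ⟨hT, fun A B hA hB => eq_of_mem_extremePoints_of_eq_midpoint hext
      ((mem_closedBall_zero_iff (a := A)).2 hA) ((mem_closedBall_zero_iff (a := B)).2 hB)⟩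
end

section
/- The bilinear form T : ℓ∞²(ℝ) × ℓ∞²(ℝ) → ℝ given by T(x,y) = ½(x₁y₁ + x₂y₁ + x₁y₂ − x₂y₂) is an exposed point of the closed unit ball of the space of bilinear forms on ℓ∞²(ℝ). -/
/-!
Put `u = (1, 1)` and `v = (1, -1)`. Since `T(x, y) = ½(x₁(y₁ + y₂) + x₂(y₁ - y₂))` and
`|y₁ + y₂| + |y₁ - y₂| = 2‖y‖∞`, we get `‖T‖ ≤ 1`; moreover `T` takes the values `1, 1, 1, -1`
at `(u, u), (u, v), (v, u), (v, v)`. The functional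
`f(S) = ¼(S(u, u) + S(u, v) + S(v, u) - S(v, v))` has norm at most `1` because `‖u‖∞ = ‖v‖∞ = 1`,
and `f(T) = 1`. If `‖S‖ ≤ 1` and `f(S) = 1`, each of the four terms must be extremal, so `S`
agrees with `T` on `{u, v} × {u, v}`; as `u, v` span `ℝ²`, `S = T`.
-/

open ContinuousLinearMap

section Bilinear

variable {𝕜 E F G : Type*} [NontriviallyNormedField 𝕜]
  [SeminormedAddCommGroup E] [NormedSpace 𝕜 E] [SeminormedAddCommGroup F] [NormedSpace 𝕜 F]
  [NormedAddCommGroup G] [NormedSpace 𝕜 G]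

noncomputable def evalBilin (x : E) (y : F) : (E →L[𝕜] F →L[𝕜] G) →L[𝕜] G :=
  (apply 𝕜 G y).comp (apply 𝕜 (F →L[𝕜] G) x)

theorem ContinuousLinearMap.ext_of_span_eq_top {s : Set E} {t : Set F}
    (hs : Submodule.span 𝕜 s = ⊤) (ht : Submodule.span 𝕜 t = ⊤) {S S' : E →L[𝕜] F →L[𝕜] G}
    (h : ∀ x ∈ s, ∀ y ∈ t, S x y = S' x y) : S = S' :=
  ext_on (by simp [hs, dense_univ]) fun x hx ↦ ext_on (by simp [ht, dense_univ]) (h x hx)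

end Bilinear

theorem abs_add_add_abs_sub_le (a b : ℝ) : |a + b| + |a - b| ≤ 2 * max |a| |b| := by
  rcases abs_cases (a + b) with ⟨h₁, -⟩ | ⟨h₁, -⟩ <;>
    rcases abs_cases (a - b) with ⟨h₂, -⟩ | ⟨h₂, -⟩ <;>
    linarith [le_abs_self a, neg_abs_le a, le_abs_self b, neg_abs_le b,
      le_max_left |a| |b|, le_max_right |a| |b|]

theorem ContinuousLinearMap.norm_eq_one_of_apply_eq_one {X : Type*} [SeminormedAddCommGroup X]
    [NormedSpace ℝ X] {f : X →L[ℝ] ℝ} (hf : ∀ S, |f S| ≤ ‖S‖) {T : X} (hT : ‖T‖ ≤ 1)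
    (hfT : f T = 1) : ‖f‖ = 1 := by
  refine le_antisymm (opNorm_le_bound _ zero_le_one fun S ↦ by simpa using hf S) ?_
  calc 1 = ‖f T‖ := by simp [hfT]
    _ ≤ ‖f‖ * ‖T‖ := f.le_opNorm T
    _ ≤ ‖f‖ := mul_le_of_le_one_right (norm_nonneg f) hT

theorem Pi.abs_apply_le_norm {ι : Type*} [Fintype ι] (x : ι → ℝ) (i : ι) : |x i| ≤ ‖x‖ := by
  simpa only [Real.norm_eq_abs] using norm_le_pi_norm x i

theorem abs_half_form_le (x y : Fin 2 → ℝ) :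
    |1 / 2 * (x 0 * y 0 + x 1 * y 0 + x 0 * y 1 - x 1 * y 1)| ≤ ‖x‖ * ‖y‖ := by
  have hx₀ := Pi.abs_apply_le_norm x 0
  have hx₁ := Pi.abs_apply_le_norm x 1
  have hy : max |y 0| |y 1| ≤ ‖y‖ := max_le (Pi.abs_apply_le_norm y 0) (Pi.abs_apply_le_norm y 1)
  have hsum := abs_add_add_abs_sub_le (y 0) (y 1)
  calc |1 / 2 * (x 0 * y 0 + x 1 * y 0 + x 0 * y 1 - x 1 * y 1)|
      = 1 / 2 * |x 0 * (y 0 + y 1) + x 1 * (y 0 - y 1)| := by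
        rw [abs_mul, abs_of_pos one_half_pos]; ring_nf
    _ ≤ 1 / 2 * (|x 0| * |y 0 + y 1| + |x 1| * |y 0 - y 1|) := by
        gcongr; simpa only [abs_mul] using abs_add_le (x 0 * (y 0 + y 1)) (x 1 * (y 0 - y 1))
    _ ≤ 1 / 2 * (‖x‖ * |y 0 + y 1| + ‖x‖ * |y 0 - y 1|) := by gcongr
    _ ≤ ‖x‖ * ‖y‖ := by nlinarith [norm_nonneg x]

namespace HalfForm

def u : Fin 2 → ℝ := ![1, 1]

def v : Fin 2 → ℝ := ![1, -1]

theorem norm_u_le : ‖u‖ ≤ 1 :=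
  (pi_norm_le_iff_of_nonneg zero_le_one).2 fun i ↦ by fin_cases i <;> simp [u]

theorem norm_v_le : ‖v‖ ≤ 1 :=
  (pi_norm_le_iff_of_nonneg zero_le_one).2 fun i ↦ by fin_cases i <;> simp [v]

theorem span_u_v : Submodule.span ℝ {u, v} = ⊤ := by
  refine Submodule.eq_top_iff'.2 fun x ↦ Submodule.mem_span_pair.2
    ⟨(x 0 + x 1) / 2, (x 0 - x 1) / 2, ?_⟩
  funext i
  fin_cases i <;> simp [u, v] <;> ring

noncomputable def exposingFunctional : ((Fin 2 → ℝ) →L[ℝ] (Fin 2 → ℝ) →L[ℝ] ℝ) →L[ℝ] ℝ :=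
  (1 / 4 : ℝ) • (evalBilin u u + evalBilin u v + evalBilin v u - evalBilin v v)

theorem exposingFunctional_apply (S : (Fin 2 → ℝ) →L[ℝ] (Fin 2 → ℝ) →L[ℝ] ℝ) :
    exposingFunctional S = 1 / 4 * (S u u + S u v + S v u - S v v) :=
  rfl

theorem abs_apply_le (S : (Fin 2 → ℝ) →L[ℝ] (Fin 2 → ℝ) →L[ℝ] ℝ) {x y : Fin 2 → ℝ}
    (hx : x = u ∨ x = v) (hy : y = u ∨ y = v) : |S x y| ≤ ‖S‖ := by
  have hx : ‖x‖ ≤ 1 := by rcases hx with rfl | rfl <;> [exact norm_u_le; exact norm_v_le]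
  have hy : ‖y‖ ≤ 1 := by rcases hy with rfl | rfl <;> [exact norm_u_le; exact norm_v_le]
  simpa using S.le_of_opNorm₂_le_of_le le_rfl hx hy

theorem abs_exposingFunctional_le (S : (Fin 2 → ℝ) →L[ℝ] (Fin 2 → ℝ) →L[ℝ] ℝ) :
    |exposingFunctional S| ≤ ‖S‖ := by
  have h₁ := abs_le.1 (abs_apply_le S (.inl rfl) (.inl rfl))
  have h₂ := abs_le.1 (abs_apply_le S (.inl rfl) (.inr rfl))
  have h₃ := abs_le.1 (abs_apply_le S (.inr rfl) (.inl rfl))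
  have h₄ := abs_le.1 (abs_apply_le S (.inr rfl) (.inr rfl))
  rw [exposingFunctional_apply, abs_le]
  constructor <;> linarith

theorem apply_u_v_of_one_le_exposingFunctional {S : (Fin 2 → ℝ) →L[ℝ] (Fin 2 → ℝ) →L[ℝ] ℝ}
    (hS : ‖S‖ ≤ 1) (h : 1 ≤ exposingFunctional S) :
    S u u = 1 ∧ S u v = 1 ∧ S v u = 1 ∧ S v v = -1 := by
  have h₁ := abs_le.1 ((abs_apply_le S (.inl rfl) (.inl rfl)).trans hS)
  have h₂ := abs_le.1 ((abs_apply_le S (.inl rfl) (.inr rfl)).trans hS)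
  have h₃ := abs_le.1 ((abs_apply_le S (.inr rfl) (.inl rfl)).trans hS)
  have h₄ := abs_le.1 ((abs_apply_le S (.inr rfl) (.inr rfl)).trans hS)
  rw [exposingFunctional_apply] at h
  refine ⟨?_, ?_, ?_, ?_⟩ <;> linarith

theorem eq_of_one_le_exposingFunctional {S S' : (Fin 2 → ℝ) →L[ℝ] (Fin 2 → ℝ) →L[ℝ] ℝ}
    (hS : ‖S‖ ≤ 1) (h : 1 ≤ exposingFunctional S) (hS' : ‖S'‖ ≤ 1)
    (h' : 1 ≤ exposingFunctional S') : S = S' := by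
  obtain ⟨huu, huv, hvu, hvv⟩ := apply_u_v_of_one_le_exposingFunctional hS h
  obtain ⟨huu', huv', hvu', hvv'⟩ := apply_u_v_of_one_le_exposingFunctional hS' h'
  refine ext_of_span_eq_top span_u_v span_u_v fun x hx y hy ↦ ?_
  rcases hx with rfl | rfl <;> rcases hy with rfl | rfl <;> simp_all

end HalfForm

open HalfForm in
/-- The bilinear form `T(x,y) = ½(x₁y₁ + x₂y₁ + x₁y₂ − x₂y₂)` on `ℓ∞²(ℝ)` is an exposed point
of the closed unit ball of the space of bilinear forms: it lies in the ball and there is a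
continuous linear functional `f` with `f T = 1 = ‖f‖` and `f S < 1` for every other member
`S` of the ball. -/
theorem half_form_is_exposed_point
    (T : (Fin 2 → ℝ) →L[ℝ] (Fin 2 → ℝ) →L[ℝ] ℝ)
    (hT : ∀ x y : Fin 2 → ℝ,
      T x y = (1 / 2) * (x 0 * y 0 + x 1 * y 0 + x 0 * y 1 - x 1 * y 1)) :
    ‖T‖ ≤ 1 ∧ ∃ f : StrongDual ℝ ((Fin 2 → ℝ) →L[ℝ] (Fin 2 → ℝ) →L[ℝ] ℝ),
      f T = 1 ∧ @Norm.norm _ (ContinuousLinearMap.hasOpNorm (𝕜 := ℝ) (𝕜₂ := ℝ)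
        (E := (Fin 2 → ℝ) →L[ℝ] (Fin 2 → ℝ) →L[ℝ] ℝ) (F := ℝ)) f = 1 ∧
      ∀ S : (Fin 2 → ℝ) →L[ℝ] (Fin 2 → ℝ) →L[ℝ] ℝ, ‖S‖ ≤ 1 → S ≠ T → f S < 1 := by
  have hT_norm : ‖T‖ ≤ 1 :=
    opNorm_le_bound₂ _ zero_le_one fun x y ↦ by simpa [hT] using abs_half_form_le x y
  have hfT : exposingFunctional T = 1 := by norm_num [exposingFunctional_apply, hT, u, v]
  refine ⟨hT_norm, exposingFunctional, hfT,
    norm_eq_one_of_apply_eq_one abs_exposingFunctional_le hT_norm hfT, fun S hS hne ↦ ?_⟩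
  by_contra! h
  exact hne (eq_of_one_le_exposingFunctional hS h hT_norm hfT.ge)
end

section
/- The bilinear form T : ℓ∞²(ℝ) × ℓ∞²(ℝ) → ℝ given by T(x,y) = x₁y₁ is an exposed point of the closed unit ball of the space of bilinear forms on ℓ∞²(ℝ). -/
/-!
The exposing functional is evaluation at `(e₀, e₀)`. A functional `φ` on `ℓ∞` with `‖φ‖ ≤ 1` and
`φ eᵢ = 1` vanishes on every other `eⱼ`, because `φ (eᵢ ± eⱼ) ≤ ‖eᵢ ± eⱼ‖ = 1`; so `φ` is the
`i`-th coordinate. If `‖S‖ ≤ 1` and `S e₀ e₀ = 1`, this applies to `S e₀`, to `S.flip e₀` and then to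
`S (e₀ + eⱼ)`, forcing `S eⱼ = 0` for `j ≠ 0` and `S e₀ = proj 0`, i.e. `S x y = x₀ y₀`.
-/

open ContinuousLinearMap

lemma ContinuousLinearMap.norm_proj_le_one {𝕜 ι : Type*} [NontriviallyNormedField 𝕜] [Fintype ι]
    {φ : ι → Type*} [∀ i, SeminormedAddCommGroup (φ i)] [∀ i, NormedSpace 𝕜 (φ i)] (i : ι) :
    ‖(proj i : (∀ i, φ i) →L[𝕜] φ i)‖ ≤ 1 :=
  opNorm_le_bound _ zero_le_one fun x => by simpa using norm_le_pi_norm x i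

lemma ContinuousLinearMap.norm_apply_comp_apply_le {𝕜 E F G : Type*} [NontriviallyNormedField 𝕜]
    [SeminormedAddCommGroup E] [NormedSpace 𝕜 E] [SeminormedAddCommGroup F] [NormedSpace 𝕜 F]
    [SeminormedAddCommGroup G] [NormedSpace 𝕜 G] (x : E) (y : F) :
    ‖(apply 𝕜 G y).comp (apply 𝕜 (F →L[𝕜] G) x)‖ ≤ ‖x‖ * ‖y‖ :=
  opNorm_le_bound _ (by positivity) fun S => by
    simpa [mul_assoc, mul_comm, mul_left_comm] using S.le_opNorm₂ x y

lemma StrongDual.norm_eq_one_and_lt_one_of_unique {E : Type*} [SeminormedAddCommGroup E]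
    [NormedSpace ℝ E] {f : StrongDual ℝ E} {T : E} (hf : ‖f‖ ≤ 1) (hT : ‖T‖ ≤ 1) (hfT : f T = 1)
    (h_unique : ∀ S : E, ‖S‖ ≤ 1 → f S = 1 → S = T) :
    ‖f‖ = 1 ∧ ∀ S : E, ‖S‖ ≤ 1 → S ≠ T → f S < 1 := by
  refine ⟨le_antisymm hf ?_, fun S hS hne => ?_⟩
  · calc 1 = ‖f T‖ := by simp [hfT]
      _ ≤ ‖f‖ * ‖T‖ := f.le_opNorm T
      _ ≤ ‖f‖ := mul_le_of_le_one_right (norm_nonneg f) hT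
  · have hfS : f S ≤ 1 :=
      (Real.le_norm_self _).trans (by simpa using f.le_of_opNorm_le_of_le hf hS)
    exact hfS.lt_of_ne fun h => hne (h_unique S hS h)

section

variable {ι : Type*} [Fintype ι] [DecidableEq ι]

lemma norm_single_add_smul_single_le_one {i j : ι} (hij : i ≠ j) {c : ℝ} (hc : |c| ≤ 1) :
    ‖Pi.single i (1 : ℝ) + c • Pi.single j 1‖ ≤ 1 := by
  refine (pi_norm_le_iff_of_nonneg zero_le_one).2 fun l => ?_
  by_cases hli : l = i
  · subst hli; simp [hij]
  · by_cases hlj : l = j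
    · subst hlj; simpa [hli] using hc
    · simp [hli, hlj]

lemma StrongDual.apply_single_eq_zero {φ : StrongDual ℝ (ι → ℝ)} (hφ : ‖φ‖ ≤ 1) {i j : ι}
    (hi : φ (Pi.single i 1) = 1) (hij : i ≠ j) : φ (Pi.single j 1) = 0 := by
  have key : ∀ c : ℝ, |c| ≤ 1 → 1 + c * φ (Pi.single j 1) ≤ 1 := fun c hc =>
    calc 1 + c * φ (Pi.single j 1) = φ (Pi.single i 1 + c • Pi.single j 1) := by simp [hi]
      _ ≤ ‖φ (Pi.single i 1 + c • Pi.single j 1)‖ := Real.le_norm_self _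
      _ ≤ 1 * 1 := φ.le_of_opNorm_le_of_le hφ (norm_single_add_smul_single_le_one hij hc)
      _ = 1 := one_mul 1
  linarith [key 1 (by simp), key (-1) (by simp)]

lemma StrongDual.eq_proj_of_norm_le_one {φ : StrongDual ℝ (ι → ℝ)} (hφ : ‖φ‖ ≤ 1) {i : ι}
    (hi : φ (Pi.single i 1) = 1) : φ = proj i := by
  refine coe_injective (LinearMap.pi_ext' fun j => LinearMap.ext_ring ?_)
  by_cases hji : j = i
  · subst hji; simpa using hi
  · simp [apply_single_eq_zero hφ hi (Ne.symm hji), hji]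

lemma ContinuousLinearMap.eq_smulRight_proj_of_norm_le_one {κ : Type*} [Fintype κ] [DecidableEq κ]
    {S : (ι → ℝ) →L[ℝ] (κ → ℝ) →L[ℝ] ℝ} (hS : ‖S‖ ≤ 1) {i : ι} {k : κ}
    (h : S (Pi.single i 1) (Pi.single k 1) = 1) : S = (proj i).smulRight (proj k) := by
  have hunit : ∀ {x : ι → ℝ}, ‖x‖ ≤ 1 → ‖S x‖ ≤ 1 := fun hx => by
    simpa using S.le_of_opNorm_le_of_le hS hx
  have hrow : S (Pi.single i 1) = proj k :=
    StrongDual.eq_proj_of_norm_le_one (hunit (by simp [Pi.norm_single])) h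
  have hcol : S.flip (Pi.single k 1) = proj i := by
    refine StrongDual.eq_proj_of_norm_le_one ?_ h
    simpa using S.flip.le_of_opNorm_le_of_le (S.opNorm_flip.trans_le hS)
      (Pi.norm_single (i := k) (1 : ℝ)).le
  have hzero : ∀ j ≠ i, S (Pi.single j 1) = 0 := fun j hji => by
    have hsum : S (Pi.single i 1 + (1 : ℝ) • Pi.single j 1) = proj k :=
      StrongDual.eq_proj_of_norm_le_one
        (hunit (norm_single_add_smul_single_le_one (Ne.symm hji) (by simp)))
        (by simpa [h, hji] using congr($hcol (Pi.single j 1)))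
    simpa [hrow] using hsum
  refine coe_injective (LinearMap.pi_ext' fun j => LinearMap.ext_ring ?_)
  by_cases hji : j = i
  · subst hji; simp [hrow]
  · simp [hzero j hji, hji]

end

/-- The bilinear form `T(x,y) = x₁y₁` on `ℓ∞²(ℝ)` is an exposed point of the closed unit ball
of the space of bilinear forms: it lies in the ball and there is a continuous linear
functional `f` with `f T = 1 = ‖f‖` and `f S < 1` for every other member `S` of the ball. -/
theorem x1y1_is_exposed_point
    (T : (Fin 2 → ℝ) →L[ℝ] (Fin 2 → ℝ) →L[ℝ] ℝ)
    (hT : ∀ x y : Fin 2 → ℝ, T x y = x 0 * y 0) :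
    ‖T‖ ≤ 1 ∧ ∃ f : StrongDual ℝ ((Fin 2 → ℝ) →L[ℝ] (Fin 2 → ℝ) →L[ℝ] ℝ),
      f T = 1 ∧ @norm _ (ContinuousLinearMap.hasOpNorm (𝕜 := ℝ) (𝕜₂ := ℝ)
        (E := (Fin 2 → ℝ) →L[ℝ] (Fin 2 → ℝ) →L[ℝ] ℝ) (F := ℝ) (σ₁₂ := RingHom.id ℝ)) f = 1 ∧
      ∀ S : (Fin 2 → ℝ) →L[ℝ] (Fin 2 → ℝ) →L[ℝ] ℝ, ‖S‖ ≤ 1 → S ≠ T → f S < 1 := by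
  have hT_eq : T = (proj 0).smulRight (proj 0) := by
    ext x y
    simp [hT]
  have hT_norm : ‖T‖ ≤ 1 := by
    rw [hT_eq, norm_smulRight_apply]
    exact mul_le_one₀ (norm_proj_le_one 0) (norm_nonneg _) (norm_proj_le_one 0)
  set e : Fin 2 → ℝ := Pi.single 0 1
  have hf_norm := norm_apply_comp_apply_le (𝕜 := ℝ) (G := ℝ) e e
  rw [Pi.norm_single, norm_one, one_mul] at hf_norm
  have hfT : ((apply ℝ ℝ e).comp (apply ℝ _ e)) T = 1 := by simp [e, hT]
  exact ⟨hT_norm, _, hfT, StrongDual.norm_eq_one_and_lt_one_of_unique hf_norm hT_norm hfT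
    fun S hS hfS => hT_eq ▸ eq_smulRight_proj_of_norm_le_one hS hfS⟩
end

section
/- For every nonzero bilinear form T : ℓ∞²(ℝ) × ℓ∞²(ℝ) → ℝ, T(x,y) = Σ_{i,j=1}^{2} a_{ij}x_iy_j with a_{ij} ∈ ℝ, one has (Σ_{i,j=1}^{2} |a_{ij}|^{4/3})^{3/4} ≤ √2 · ‖T‖. -/
/-!
Evaluating `T` at `x = (1, s)`, `y = (1, t)` for the four sign choices `s, t = ±1` and adding
the squares of the values gives `4 Σ aᵢⱼ²`, because `1, s, t, st` are orthogonal on `{±1}²`;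
hence `Σ aᵢⱼ² ≤ ‖T‖²`. Hölder's inequality on four points bounds the `ℓ^{4/3}` norm of the
coefficients by `4^{1/4} = √2` times their `ℓ²` norm.
-/

open Finset

theorem rpow_sum_abs_rpow_inv_le_card_rpow_mul_sqrt {ι : Type*} (s : Finset ι) (f : ι → ℝ)
    {p : ℝ} (hp : 0 < p) (hp2 : p ≤ 2) :
    (∑ i ∈ s, |f i| ^ p) ^ p⁻¹ ≤ (#s : ℝ) ^ (p⁻¹ - 2⁻¹) * √(∑ i ∈ s, f i ^ 2) := by
  have hq : 1 ≤ 2 / p := by rw [le_div_iff₀ hp]; linarith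
  have hpow : ∀ i, (|f i| ^ p) ^ (2 / p) = f i ^ 2 := fun i => by
    rw [← Real.rpow_mul (abs_nonneg _), mul_div_cancel₀ _ hp.ne', Real.rpow_two, sq_abs]
  have holder := Real.rpow_sum_le_const_mul_sum_rpow_of_nonneg s hq
    (f := fun i => |f i| ^ p) fun i _ => by positivity
  simp only [hpow] at holder
  calc (∑ i ∈ s, |f i| ^ p) ^ p⁻¹ = ((∑ i ∈ s, |f i| ^ p) ^ (2 / p)) ^ (2⁻¹ : ℝ) := by
        rw [← Real.rpow_mul (by positivity)]; congr 1; field_simp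
    _ ≤ ((#s : ℝ) ^ (2 / p - 1) * ∑ i ∈ s, f i ^ 2) ^ (2⁻¹ : ℝ) := by gcongr
    _ = (#s : ℝ) ^ (p⁻¹ - 2⁻¹) * √(∑ i ∈ s, f i ^ 2) := by
        rw [Real.mul_rpow (by positivity) (by positivity), ← Real.rpow_mul (by positivity),
          Real.sqrt_eq_rpow, one_div]
        congr 2; field_simp

theorem norm_vecCons_one_le_one {s : ℝ} (hs : |s| ≤ 1) : ‖(![1, s] : Fin 2 → ℝ)‖ ≤ 1 := by
  rw [pi_norm_le_iff_of_nonneg zero_le_one, Fin.forall_fin_two]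
  simpa using hs

theorem sum_sq_le_opNorm_sq (a11 a12 a21 a22 : ℝ)
    (T : (Fin 2 → ℝ) →L[ℝ] (Fin 2 → ℝ) →L[ℝ] ℝ)
    (hT : ∀ x y : Fin 2 → ℝ,
      T x y = a11 * x 0 * y 0 + a21 * x 1 * y 0 + a12 * x 0 * y 1 + a22 * x 1 * y 1) :
    a11 ^ 2 + a12 ^ 2 + a21 ^ 2 + a22 ^ 2 ≤ ‖T‖ ^ 2 := by
  have hsign : ∀ s t : ℝ, |s| ≤ 1 → |t| ≤ 1 →
      (a11 + a21 * s + a12 * t + a22 * s * t) ^ 2 ≤ ‖T‖ ^ 2 := by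
    intro s t hs ht
    have hle : ‖T ![1, s] ![1, t]‖ ≤ ‖T‖ := calc
      _ ≤ ‖T‖ * ‖(![1, s] : Fin 2 → ℝ)‖ * ‖(![1, t] : Fin 2 → ℝ)‖ := T.le_opNorm₂ _ _
      _ ≤ ‖T‖ * 1 * 1 := by gcongr <;> exact norm_vecCons_one_le_one ‹_›
      _ = ‖T‖ := by ring
    rw [hT, Real.norm_eq_abs] at hle
    simp only [Matrix.cons_val_zero, Matrix.cons_val_one, mul_one] at hle
    simpa only [sq_abs] using pow_le_pow_left₀ (abs_nonneg _) hle 2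
  have hpp := hsign 1 1 (by norm_num) (by norm_num)
  have hpm := hsign 1 (-1) (by norm_num) (by norm_num)
  have hmp := hsign (-1) 1 (by norm_num) (by norm_num)
  have hmm := hsign (-1) (-1) (by norm_num) (by norm_num)
  linear_combination (hpp + hpm + hmp + hmm) / 4

theorem littlewood_43_linf2_real_general
    (a11 a12 a21 a22 : ℝ)
    (T : (Fin 2 → ℝ) →L[ℝ] (Fin 2 → ℝ) →L[ℝ] ℝ)
    (hT : ∀ x y : Fin 2 → ℝ,
      T x y = a11 * x 0 * y 0 + a21 * x 1 * y 0 + a12 * x 0 * y 1 + a22 * x 1 * y 1) :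
    (|a11| ^ ((4 : ℝ) / 3) + |a12| ^ ((4 : ℝ) / 3)
        + |a21| ^ ((4 : ℝ) / 3) + |a22| ^ ((4 : ℝ) / 3)) ^ ((3 : ℝ) / 4)
      ≤ Real.sqrt 2 * ‖T‖ := by
  have hholder := rpow_sum_abs_rpow_inv_le_card_rpow_mul_sqrt univ ![a11, a12, a21, a22]
    (p := 4 / 3) (by norm_num) (by norm_num)
  have hcard : (#(univ : Finset (Fin 4)) : ℝ) ^ ((4 / 3 : ℝ)⁻¹ - 2⁻¹) = √2 := by
    rw [card_univ, Fintype.card_fin, Real.sqrt_eq_rpow,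
      show ((4 : ℕ) : ℝ) = 2 ^ (2 : ℝ) by norm_num, ← Real.rpow_mul zero_le_two]
    norm_num
  rw [hcard] at hholder
  simp only [Fin.sum_univ_four, Matrix.cons_val] at hholder
  calc _ ≤ √2 * √(a11 ^ 2 + a12 ^ 2 + a21 ^ 2 + a22 ^ 2) := by
        convert hholder using 2; norm_num
    _ ≤ √2 * ‖T‖ := by
        gcongr
        exact Real.sqrt_le_iff.2 ⟨norm_nonneg T, sum_sq_le_opNorm_sq a11 a12 a21 a22 T hT⟩

/-- Littlewood's 4/3 inequality on `ℓ∞²(ℝ)`: for every nonzero bilinear form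
`T(x,y) = Σ aᵢⱼ xᵢ yⱼ` one has `(Σ |aᵢⱼ|^(4/3))^(3/4) ≤ √2 ‖T‖`. -/
theorem littlewood_43_linf2_real
    (a11 a12 a21 a22 : ℝ)
    (T : (Fin 2 → ℝ) →L[ℝ] (Fin 2 → ℝ) →L[ℝ] ℝ)
    (hT : ∀ x y : Fin 2 → ℝ,
      T x y = a11 * x 0 * y 0 + a21 * x 1 * y 0 + a12 * x 0 * y 1 + a22 * x 1 * y 1)
    (hT0 : T ≠ 0) :
    (|a11| ^ ((4 : ℝ) / 3) + |a12| ^ ((4 : ℝ) / 3)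
        + |a21| ^ ((4 : ℝ) / 3) + |a22| ^ ((4 : ℝ) / 3)) ^ ((3 : ℝ) / 4)
      ≤ Real.sqrt 2 * ‖T‖ :=
  littlewood_43_linf2_real_general a11 a12 a21 a22 T hT
end

section
/- Let T : ℓ∞²(ℝ) × ℓ∞²(ℝ) → ℝ be a nonzero bilinear form, T(x,y) = Σ_{i,j=1}^{2} a_{ij}x_iy_j with a_{ij} ∈ ℝ. Then (Σ_{i,j=1}^{2} |a_{ij}|^{4/3})^{3/4} = √2 · ‖T‖ holds if and only if there exists α ∈ ℝ \ {0} such that T(x,y) = α(x₁y₁ + x₁y₂ + x₂y₁ − x₂y₂), or T(x,y) = α(x₁y₁ + x₁y₂ − x₂y₁ + x₂y₂), or T(x,y) = α(x₁y₁ − x₁y₂ + x₂y₁ + x₂y₂), or T(x,y) = α(−x₁y₁ + x₁y₂ + x₂y₁ + x₂y₂). -/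
/-!
Write `A, B, C, D` for `a₁₁, a₁₂, a₂₁, a₂₂`. Testing `T` on sign vectors shows that `‖T‖` is the
largest of `|A + B + C + D|, |A - B + C - D|, |A + B - C - D|, |A - B - C + D|`. Littlewood's
argument then runs as follows: AM–GM entry by entry gives the mixed Hölder bound
`∑ |aᵢⱼ|^(4/3) ≤ (R Q)^(2/3)`, where `R` and `Q` are the sums of the Euclidean norms of the rows
and of the columns, and the two-term Khintchine inequality `√2 √(a² + b²) ≤ |a + b| + |a - b|`
gives `√2 R ≤ 2 ‖T‖` and `√2 Q ≤ 2 ‖T‖`. Equality in the combined bound forces equality in every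
Khintchine inequality, i.e. all `|aᵢⱼ|` are equal to some `c`, and then `‖T‖ = 2c`; among the
sixteen sign patterns `aᵢⱼ = ±c` this leaves exactly those with an odd number of minus signs.
-/

open Real

-- The largest `|T x y|` over `x, y ∈ {(1, 1), (1, -1)}` for the form with coefficients
-- `A = a₁₁, B = a₁₂, C = a₂₁, D = a₂₂`.
noncomputable def signedSumMax (A B C D : ℝ) : ℝ :=
  max (max |A + B + C + D| |A - B + C - D|) (max |A + B - C - D| |A - B - C + D|)

lemma signedSumMax_nonneg (A B C D : ℝ) : 0 ≤ signedSumMax A B C D :=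
  (abs_nonneg _).trans ((le_max_left _ _).trans (le_max_left _ _))

lemma abs_add_abs_eq_max {α : Type*} [AddCommGroup α] [LinearOrder α] [IsOrderedAddMonoid α]
    (a b : α) : |a| + |b| = max |a + b| |a - b| := by
  refine le_antisymm ?_ (max_le (abs_add_le a b) (abs_sub a b))
  rcases le_total 0 a with ha | ha <;> rcases le_total 0 b with hb | hb
  · exact le_max_of_le_left <| by rw [abs_of_nonneg ha, abs_of_nonneg hb]; exact le_abs_self _
  · exact le_max_of_le_right <| by
      rw [abs_of_nonneg ha, abs_of_nonpos hb, ← sub_eq_add_neg]; exact le_abs_self _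
  · exact le_max_of_le_right <| by
      rw [abs_of_nonpos ha, abs_of_nonneg hb, neg_add_eq_sub, ← neg_sub]; exact neg_le_abs _
  · exact le_max_of_le_left <| by
      rw [abs_of_nonpos ha, abs_of_nonpos hb, ← neg_add]; exact neg_le_abs _

lemma abs_mul_add_mul_le {α : Type*} [CommRing α] [LinearOrder α] [IsStrictOrderedRing α]
    {p q s t m : α} (hs : |s| ≤ m) (ht : |t| ≤ m) :
    |p * s + q * t| ≤ (|p| + |q|) * m :=
  calc |p * s + q * t| ≤ |p| * |s| + |q| * |t| := by
        simpa only [abs_mul] using abs_add_le (p * s) (q * t)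
    _ ≤ (|p| + |q|) * m := by rw [add_mul]; gcongr

lemma abs_add_abs_le_signedSumMax (A B C D : ℝ) :
    |A + B| + |C + D| ≤ signedSumMax A B C D ∧ |A - B| + |C - D| ≤ signedSumMax A B C D ∧
      |A + C| + |B + D| ≤ signedSumMax A B C D ∧ |A - C| + |B - D| ≤ signedSumMax A B C D := by
  simp only [abs_add_abs_eq_max, signedSumMax]
  refine ⟨max_le ?_ ?_, max_le ?_ ?_, max_le ?_ ?_, max_le ?_ ?_⟩ <;> ring_nf <;>
    simp only [le_max_iff, le_refl, true_or, or_true]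

lemma sq_abs_add_add_abs_sub {α : Type*} [CommRing α] [LinearOrder α] [IsStrictOrderedRing α]
    (a b : α) :
    (|a + b| + |a - b|) ^ 2 = 2 * (a ^ 2 + b ^ 2) + 2 * |a ^ 2 - b ^ 2| := by
  rw [add_sq, sq_abs, sq_abs, mul_assoc, ← abs_mul]; ring_nf

lemma sqrt_two_mul_sqrt_le (a b : ℝ) : √2 * √(a ^ 2 + b ^ 2) ≤ |a + b| + |a - b| := by
  rw [← sqrt_mul zero_le_two, ← sqrt_sq (by positivity : 0 ≤ |a + b| + |a - b|),
    sq_abs_add_add_abs_sub]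
  gcongr
  linarith [abs_nonneg (a ^ 2 - b ^ 2)]

lemma abs_eq_abs_of_sqrt_two_mul_sqrt_eq {a b : ℝ}
    (h : √2 * √(a ^ 2 + b ^ 2) = |a + b| + |a - b|) : |a| = |b| := by
  have hsq := congrArg (· ^ 2) h
  simp only [mul_pow, sq_sqrt zero_le_two, sq_sqrt (by positivity : 0 ≤ a ^ 2 + b ^ 2),
    sq_abs_add_add_abs_sub] at hsq
  rw [← sq_eq_sq_iff_abs_eq_abs, ← sub_eq_zero, ← abs_eq_zero]
  linarith

-- Weighted AM–GM for three factors with product `a⁴ / (RQ)²`; with `r, c` the norms of the row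
-- and column of the entry `a`, and `R, Q` their sums, these bounds add up to at most `(RQ)^(2/3)`.
lemma abs_rpow_four_thirds_le_mean {a r c R Q : ℝ} (har : |a| ≤ r) (hrR : r ≤ R) (hac : |a| ≤ c)
    (hcQ : c ≤ Q) :
    |a| ^ (4 / 3 : ℝ) ≤
      (R * Q) ^ (2 / 3 : ℝ) * ((a ^ 2 / (r * R) + a ^ 2 / (c * Q) + r * c / (R * Q)) / 3) := by
  have hr₀ : 0 ≤ r := (abs_nonneg a).trans har
  have hc₀ : 0 ≤ c := (abs_nonneg a).trans hac
  have hR₀ : 0 ≤ R := hr₀.trans hrR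
  have hQ₀ : 0 ≤ Q := hc₀.trans hcQ
  rcases eq_or_ne a 0 with rfl | ha
  · rw [abs_zero, zero_rpow (by norm_num)]
    positivity
  have hr : 0 < r := (abs_pos.mpr ha).trans_le har
  have hc : 0 < c := (abs_pos.mpr ha).trans_le hac
  have hRQ : 0 < R * Q := mul_pos (hr.trans_le hrR) (hc.trans_le hcQ)
  set p₁ := a ^ 2 / (r * R)
  set p₂ := a ^ 2 / (c * Q)
  set p₃ := r * c / (R * Q)
  have hprod : p₁ * p₂ * p₃ = (|a| ^ (4 / 3 : ℝ) / (R * Q) ^ (2 / 3 : ℝ)) ^ 3 := by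
    rw [div_pow, ← rpow_mul_natCast (abs_nonneg a), ← rpow_mul_natCast hRQ.le]
    norm_num [(by decide : Even 4).pow_abs, p₁, p₂, p₃]
    field_simp
  have amgm := geom_mean_le_arith_mean3_weighted (w₁ := 1 / 3) (w₂ := 1 / 3) (w₃ := 1 / 3)
    (by norm_num) (by norm_num) (by norm_num) (by positivity : 0 ≤ p₁) (by positivity : 0 ≤ p₂)
    (by positivity : 0 ≤ p₃) (by norm_num)
  rw [← mul_rpow (by positivity) (by positivity), ← mul_rpow (by positivity) (by positivity),
    hprod, show (1 / 3 : ℝ) = ((3 : ℕ) : ℝ)⁻¹ by norm_num, pow_rpow_inv_natCast (by positivity)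
    three_ne_zero] at amgm
  calc |a| ^ (4 / 3 : ℝ)
      = (R * Q) ^ (2 / 3 : ℝ) * (|a| ^ (4 / 3 : ℝ) / (R * Q) ^ (2 / 3 : ℝ)) := by field_simp
    _ ≤ (R * Q) ^ (2 / 3 : ℝ) * ((p₁ + p₂ + p₃) / 3) := by
        refine mul_le_mul_of_nonneg_left ?_ (by positivity)
        push_cast at amgm
        linarith

lemma sum_abs_rpow_four_thirds_le (A B C D : ℝ) :
    |A| ^ (4 / 3 : ℝ) + |B| ^ (4 / 3 : ℝ) + |C| ^ (4 / 3 : ℝ) + |D| ^ (4 / 3 : ℝ) ≤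
      ((√(A ^ 2 + B ^ 2) + √(C ^ 2 + D ^ 2)) * (√(A ^ 2 + C ^ 2) + √(B ^ 2 + D ^ 2))) ^
        (2 / 3 : ℝ) := by
  have e₁ : √(A ^ 2 + B ^ 2) ^ 2 = A ^ 2 + B ^ 2 := sq_sqrt (by positivity)
  have e₂ : √(C ^ 2 + D ^ 2) ^ 2 = C ^ 2 + D ^ 2 := sq_sqrt (by positivity)
  have e₃ : √(A ^ 2 + C ^ 2) ^ 2 = A ^ 2 + C ^ 2 := sq_sqrt (by positivity)
  have e₄ : √(B ^ 2 + D ^ 2) ^ 2 = B ^ 2 + D ^ 2 := sq_sqrt (by positivity)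
  set r₁ := √(A ^ 2 + B ^ 2)
  set r₂ := √(C ^ 2 + D ^ 2)
  set c₁ := √(A ^ 2 + C ^ 2)
  set c₂ := √(B ^ 2 + D ^ 2)
  have h₀ : 0 ≤ r₁ ∧ 0 ≤ r₂ ∧ 0 ≤ c₁ ∧ 0 ≤ c₂ :=
    ⟨sqrt_nonneg _, sqrt_nonneg _, sqrt_nonneg _, sqrt_nonneg _⟩
  set R := r₁ + r₂ with hR
  set Q := c₁ + c₂ with hQ
  have hA := abs_rpow_four_thirds_le_mean (a := A) (r := r₁) (c := c₁) (R := R) (Q := Q)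
    (abs_le_sqrt (by nlinarith)) (by linarith) (abs_le_sqrt (by nlinarith)) (by linarith)
  have hB := abs_rpow_four_thirds_le_mean (a := B) (r := r₁) (c := c₂) (R := R) (Q := Q)
    (abs_le_sqrt (by nlinarith)) (by linarith) (abs_le_sqrt (by nlinarith)) (by linarith)
  have hC := abs_rpow_four_thirds_le_mean (a := C) (r := r₂) (c := c₁) (R := R) (Q := Q)
    (abs_le_sqrt (by nlinarith)) (by linarith) (abs_le_sqrt (by nlinarith)) (by linarith)
  have hD := abs_rpow_four_thirds_le_mean (a := D) (r := r₂) (c := c₂) (R := R) (Q := Q)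
    (abs_le_sqrt (by nlinarith)) (by linarith) (abs_le_sqrt (by nlinarith)) (by linarith)
  refine (add_le_add (add_le_add (add_le_add hA hB) hC) hD).trans ?_
  rw [← mul_add, ← mul_add, ← mul_add]
  refine mul_le_of_le_one_right (by positivity) ?_
  have sq_div_mul_self (x y : ℝ) : x ^ 2 / (x * y) = x / y := by
    rcases eq_or_ne x 0 with rfl | hx
    · simp
    · field_simp
  calc _ = ((r₁ ^ 2 / (r₁ * R) + r₂ ^ 2 / (r₂ * R)) + (c₁ ^ 2 / (c₁ * Q) + c₂ ^ 2 / (c₂ * Q))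
          + (r₁ + r₂) * (c₁ + c₂) / (R * Q)) / 3 := by
        rw [e₁, e₂, e₃, e₄]; ring
    _ = (R / R + Q / Q + R * Q / (R * Q)) / 3 := by
        simp only [sq_div_mul_self]
        rw [← add_div, ← add_div, ← hR, ← hQ]
    _ ≤ 1 := by linarith [div_self_le_one R, div_self_le_one Q, div_self_le_one (R * Q)]

lemma four_mul_rpow_four_thirds_rpow {x : ℝ} (hx : 0 ≤ x) :
    (4 * x ^ (4 / 3 : ℝ)) ^ (3 / 4 : ℝ) = 2 * √2 * x := by
  have h₄ : (4 : ℝ) ^ (3 / 4 : ℝ) = 2 * √2 :=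
    calc (4 : ℝ) ^ (3 / 4 : ℝ) = ((2 : ℝ) ^ (2 : ℝ)) ^ (3 / 4 : ℝ) := by norm_num
      _ = 2 ^ (1 + 1 / 2 : ℝ) := by rw [← rpow_mul zero_le_two]; norm_num
      _ = 2 * √2 := by rw [rpow_add two_pos, rpow_one, sqrt_eq_rpow]
  rw [mul_rpow (by norm_num) (by positivity), ← rpow_mul hx, h₄]
  norm_num

lemma eq_and_eq_of_sq_le_mul {α : Type*} [Field α] [LinearOrder α] [IsStrictOrderedRing α]
    {x y m : α} (hx₀ : 0 ≤ x) (hy₀ : 0 ≤ y) (hx : x ≤ m) (hy : y ≤ m) (h : m ^ 2 ≤ x * y) :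
    x = m ∧ y = m := by
  constructor <;> nlinarith

lemma abs_eq_abs_of_rpow_sum_eq {A B C D : ℝ}
    (h : (|A| ^ (4 / 3 : ℝ) + |B| ^ (4 / 3 : ℝ) + |C| ^ (4 / 3 : ℝ) + |D| ^ (4 / 3 : ℝ)) ^
      (3 / 4 : ℝ) = √2 * signedSumMax A B C D) :
    |B| = |A| ∧ |C| = |A| ∧ |D| = |A| := by
  obtain ⟨h₁, h₂, h₃, h₄⟩ := abs_add_abs_le_signedSumMax A B C D
  have hM := signedSumMax_nonneg A B C D
  set M := signedSumMax A B C D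
  set R := √(A ^ 2 + B ^ 2) + √(C ^ 2 + D ^ 2)
  set Q := √(A ^ 2 + C ^ 2) + √(B ^ 2 + D ^ 2)
  have k₁ := sqrt_two_mul_sqrt_le A B
  have k₂ := sqrt_two_mul_sqrt_le C D
  have k₃ := sqrt_two_mul_sqrt_le A C
  have k₄ := sqrt_two_mul_sqrt_le B D
  have hRQ : (√2 * M) ^ 2 ≤ R * Q := by
    refine (le_sqrt (by positivity) (by positivity)).mp (h ▸ ?_)
    calc _ ≤ ((R * Q) ^ (2 / 3 : ℝ)) ^ (3 / 4 : ℝ) :=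
          rpow_le_rpow (by positivity) (sum_abs_rpow_four_thirds_le A B C D) (by norm_num)
      _ = √(R * Q) := by rw [← rpow_mul (by positivity), sqrt_eq_rpow]; norm_num
  -- `√2 R, √2 Q ≤ 2M` by Khintchine and `2M² ≤ RQ` by Hölder, so both are equalities
  have hRQ_eq : √2 * R = 2 * M ∧ √2 * Q = 2 * M := by
    have hR : √2 * R ≤ 2 * M := by simp only [R, mul_add]; linarith
    have hQ : √2 * Q ≤ 2 * M := by simp only [Q, mul_add]; linarith
    have : (2 * M) ^ 2 ≤ (√2 * R) * (√2 * Q) := by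
      rw [mul_mul_mul_comm, mul_self_sqrt zero_le_two]
      rw [mul_pow, sq_sqrt zero_le_two] at hRQ
      linarith
    exact eq_and_eq_of_sq_le_mul (by positivity) (by positivity) hR hQ this
  simp only [R, Q, mul_add] at hRQ_eq
  have eAB := abs_eq_abs_of_sqrt_two_mul_sqrt_eq (a := A) (b := B) (by linarith)
  have eCD := abs_eq_abs_of_sqrt_two_mul_sqrt_eq (a := C) (b := D) (by linarith)
  have eAC := abs_eq_abs_of_sqrt_two_mul_sqrt_eq (a := A) (b := C) (by linarith)
  exact ⟨eAB.symm, eAC.symm, eCD.symm.trans eAC.symm⟩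

lemma rpow_sum_eq_sqrt_two_mul_iff {A B C D : ℝ} :
    (|A| ^ (4 / 3 : ℝ) + |B| ^ (4 / 3 : ℝ) + |C| ^ (4 / 3 : ℝ) + |D| ^ (4 / 3 : ℝ)) ^
        (3 / 4 : ℝ) = √2 * signedSumMax A B C D ↔
      |B| = |A| ∧ |C| = |A| ∧ |D| = |A| ∧ signedSumMax A B C D = 2 * |A| := by
  have hS (hB : |B| = |A|) (hC : |C| = |A|) (hD : |D| = |A|) :
      (|A| ^ (4 / 3 : ℝ) + |B| ^ (4 / 3 : ℝ) + |C| ^ (4 / 3 : ℝ) + |D| ^ (4 / 3 : ℝ)) ^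
        (3 / 4 : ℝ) = √2 * (2 * |A|) := by
    rw [hB, hC, hD, show ∀ u : ℝ, u + u + u + u = 4 * u by intro; ring,
      four_mul_rpow_four_thirds_rpow (abs_nonneg A)]
    ring
  constructor
  · intro h
    obtain ⟨hB, hC, hD⟩ := abs_eq_abs_of_rpow_sum_eq h
    refine ⟨hB, hC, hD, mul_left_cancel₀ (sqrt_pos.2 two_pos).ne' ?_⟩
    rw [← h, hS hB hC hD]
  · rintro ⟨hB, hC, hD, hM₂⟩
    rw [hS hB hC hD, hM₂]

lemma abs_eq_and_signedSumMax_eq_iff {A B C D : ℝ} (hM : 0 < signedSumMax A B C D) :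
    (|B| = |A| ∧ |C| = |A| ∧ |D| = |A| ∧ signedSumMax A B C D = 2 * |A|) ↔
      ∃ α : ℝ, α ≠ 0 ∧
        ((A = α ∧ B = α ∧ C = α ∧ D = -α) ∨ (A = α ∧ B = α ∧ C = -α ∧ D = α) ∨
          (A = α ∧ B = -α ∧ C = α ∧ D = α) ∨ (A = -α ∧ B = α ∧ C = α ∧ D = α)) := by
  constructor
  · rintro ⟨hB, hC, hD, hM₂⟩
    have hA : A ≠ 0 := by rintro rfl; simp_all
    obtain ⟨h₁, h₂, -⟩ := abs_add_abs_le_signedSumMax A B C D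
    rw [hM₂] at h₁ h₂
    -- an even number of minus signs makes `|A + B| + |C + D|` or `|A - B| + |C - D|` equal `4|A|`
    rcases abs_eq_abs.mp hB with hB | hB <;> rcases abs_eq_abs.mp hC with hC | hC <;>
      rcases abs_eq_abs.mp hD with hD | hD <;> subst B C D <;> ring_nf at h₁ h₂ <;>
      simp only [abs_mul, abs_neg, abs_two, abs_zero] at h₁ h₂ <;>
      first
      | linarith [abs_pos.mpr hA]
      | (refine ⟨A, hA, ?_⟩; simp; done)
      | (refine ⟨-A, neg_ne_zero.mpr hA, ?_⟩; simp)
  · rintro ⟨α, -, ⟨rfl, rfl, rfl, rfl⟩ | ⟨rfl, rfl, rfl, rfl⟩ | ⟨rfl, rfl, rfl, rfl⟩ |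
      ⟨rfl, rfl, rfl, rfl⟩⟩ <;> simp only [signedSumMax] <;> ring_nf <;> simp [abs_mul]

section BilinearForm

variable {a₁₁ a₁₂ a₂₁ a₂₂ : ℝ} {T : (Fin 2 → ℝ) →L[ℝ] (Fin 2 → ℝ) →L[ℝ] ℝ}

lemma opNorm_eq_signedSumMax (hT : ∀ x y : Fin 2 → ℝ,
      T x y = a₁₁ * x 0 * y 0 + a₂₁ * x 1 * y 0 + a₁₂ * x 0 * y 1 + a₂₂ * x 1 * y 1) :
    ‖T‖ = signedSumMax a₁₁ a₁₂ a₂₁ a₂₂ := by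
  obtain ⟨-, -, h₃, h₄⟩ := abs_add_abs_le_signedSumMax a₁₁ a₁₂ a₂₁ a₂₂
  have coord (x : Fin 2 → ℝ) (i : Fin 2) : |x i| ≤ ‖x‖ := norm_le_pi_norm x i
  apply le_antisymm
  · refine T.opNorm_le_bound₂ (signedSumMax_nonneg _ _ _ _) fun x y => ?_
    have hu : |a₁₁ * y 0 + a₁₂ * y 1| + |a₂₁ * y 0 + a₂₂ * y 1| ≤
        signedSumMax a₁₁ a₁₂ a₂₁ a₂₂ * ‖y‖ := by
      rw [abs_add_abs_eq_max]
      refine max_le ?_ ?_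
      · calc _ = |(a₁₁ + a₂₁) * y 0 + (a₁₂ + a₂₂) * y 1| := by ring_nf
          _ ≤ _ := abs_mul_add_mul_le (coord y 0) (coord y 1)
          _ ≤ _ := by gcongr
      · calc _ = |(a₁₁ - a₂₁) * y 0 + (a₁₂ - a₂₂) * y 1| := by ring_nf
          _ ≤ _ := abs_mul_add_mul_le (coord y 0) (coord y 1)
          _ ≤ _ := by gcongr
    calc ‖T x y‖ = |(a₁₁ * y 0 + a₁₂ * y 1) * x 0 + (a₂₁ * y 0 + a₂₂ * y 1) * x 1| := by
          rw [hT, Real.norm_eq_abs]; ring_nf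
      _ ≤ _ := abs_mul_add_mul_le (coord x 0) (coord x 1)
      _ ≤ signedSumMax a₁₁ a₁₂ a₂₁ a₂₂ * ‖x‖ * ‖y‖ := by
        rw [mul_right_comm]; gcongr
  · have hsign (s t : ℝ) (hs : |s| ≤ 1) (ht : |t| ≤ 1) :
        |a₁₁ + a₁₂ * t + a₂₁ * s + a₂₂ * s * t| ≤ ‖T‖ := by
      have hv (u : ℝ) (hu : |u| ≤ 1) : ‖(![1, u] : Fin 2 → ℝ)‖ ≤ 1 :=
        (pi_norm_le_iff_of_nonneg zero_le_one).2 (Fin.forall_fin_two.2 ⟨by simp, by simpa⟩)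
      have := T.le_of_opNorm₂_le_of_le le_rfl (hv s hs) (hv t ht)
      rw [hT, Real.norm_eq_abs, mul_one, mul_one] at this
      exact Eq.trans_le (by simp; ring_nf) this
    refine max_le (max_le ?_ ?_) (max_le ?_ ?_)
    · exact Eq.trans_le (by ring_nf) (hsign 1 1 (by simp) (by simp))
    · exact Eq.trans_le (by ring_nf) (hsign 1 (-1) (by simp) (by simp))
    · exact Eq.trans_le (by ring_nf) (hsign (-1) 1 (by simp) (by simp))
    · exact Eq.trans_le (by ring_nf) (hsign (-1) (-1) (by simp) (by simp))

lemma forall_apply_eq_iff (hT : ∀ x y : Fin 2 → ℝ,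
      T x y = a₁₁ * x 0 * y 0 + a₂₁ * x 1 * y 0 + a₁₂ * x 0 * y 1 + a₂₂ * x 1 * y 1)
    (b₁₁ b₁₂ b₂₁ b₂₂ : ℝ) :
    (∀ x y : Fin 2 → ℝ,
        T x y = b₁₁ * x 0 * y 0 + b₂₁ * x 1 * y 0 + b₁₂ * x 0 * y 1 + b₂₂ * x 1 * y 1) ↔
      a₁₁ = b₁₁ ∧ a₁₂ = b₁₂ ∧ a₂₁ = b₂₁ ∧ a₂₂ = b₂₂ := by
  constructor
  · intro h
    have e (x y : Fin 2 → ℝ) := (hT x y).symm.trans (h x y)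
    refine ⟨?_, ?_, ?_, ?_⟩
    · simpa using e ![1, 0] ![1, 0]
    · simpa using e ![1, 0] ![0, 1]
    · simpa using e ![0, 1] ![1, 0]
    · simpa using e ![0, 1] ![0, 1]
  · rintro ⟨rfl, rfl, rfl, rfl⟩
    exact hT

end BilinearForm

/-- Characterization of the extremal bilinear forms for Littlewood's 4/3 inequality on
`ℓ∞²(ℝ)`: a nonzero bilinear form `T(x,y) = Σ aᵢⱼ xᵢ yⱼ` attains
`(Σ |aᵢⱼ|^(4/3))^(3/4) = √2 ‖T‖` if and only if it is a nonzero multiple of one of the four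
forms `±x₁y₁ ± x₁y₂ ± x₂y₁ ± x₂y₂` with exactly one minus sign. -/
theorem littlewood_43_linf2_real_equality_characterization
    (a11 a12 a21 a22 : ℝ)
    (T : (Fin 2 → ℝ) →L[ℝ] (Fin 2 → ℝ) →L[ℝ] ℝ)
    (hT : ∀ x y : Fin 2 → ℝ,
      T x y = a11 * x 0 * y 0 + a21 * x 1 * y 0 + a12 * x 0 * y 1 + a22 * x 1 * y 1)
    (hT0 : T ≠ 0) :
    (|a11| ^ ((4 : ℝ) / 3) + |a12| ^ ((4 : ℝ) / 3)
        + |a21| ^ ((4 : ℝ) / 3) + |a22| ^ ((4 : ℝ) / 3)) ^ ((3 : ℝ) / 4)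
      = Real.sqrt 2 * ‖T‖
    ↔ ∃ α : ℝ, α ≠ 0 ∧
        ((∀ x y : Fin 2 → ℝ,
            T x y = α * (x 0 * y 0 + x 0 * y 1 + x 1 * y 0 - x 1 * y 1))
        ∨ (∀ x y : Fin 2 → ℝ,
            T x y = α * (x 0 * y 0 + x 0 * y 1 - x 1 * y 0 + x 1 * y 1))
        ∨ (∀ x y : Fin 2 → ℝ,
            T x y = α * (x 0 * y 0 - x 0 * y 1 + x 1 * y 0 + x 1 * y 1))
        ∨ (∀ x y : Fin 2 → ℝ,
            T x y = α * (-(x 0 * y 0) + x 0 * y 1 + x 1 * y 0 + x 1 * y 1))) := by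
  have hM : 0 < signedSumMax a11 a12 a21 a22 := by
    rw [← opNorm_eq_signedSumMax hT]; positivity
  rw [opNorm_eq_signedSumMax hT, rpow_sum_eq_sqrt_two_mul_iff,
    abs_eq_and_signedSumMax_eq_iff hM]
  refine exists_congr fun α => and_congr_right fun _ => ?_
  refine or_congr ?_ (or_congr ?_ (or_congr ?_ ?_)) <;> rw [← forall_apply_eq_iff hT] <;>
    exact forall₂_congr fun x y => by constructor <;> intro h <;> rw [h] <;> ring
end

section
/- Let T : ℓ∞²(ℂ) × ℓ∞²(ℂ) → ℂ be the bilinear form T(z,w) = Σ_{i,j=1}^{2} a_{ij}z_iw_j with real coefficients a_{ij}. If a₁₁a₂₁ = 0 or a₁₂a₂₂ = 0, then (Σ_{i,j=1}^{2} |a_{ij}|^{4/3})^{3/4} ≤ ‖T‖. -/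
/-!
Since `|·|^{4/3}` is superadditive, the `ℓ^{4/3}` norm of the coefficients is at most their
`ℓ¹` norm. When one coefficient vanishes, the remaining three form a path in the bipartite
row/column graph, so signs `sᵢ, tⱼ ∈ {±1}` with `a_{ij} sᵢ tⱼ = |a_{ij}|` exist; evaluating `T` at
the unit vectors `s` and `t` shows that the `ℓ¹` norm is at most `‖T‖`.
-/

open Finset

lemma Finset.sum_rpow_le_rpow_sum {ι : Type*} (s : Finset ι) {f : ι → ℝ} (hf : ∀ i ∈ s, 0 ≤ f i)
    {p : ℝ} (hp : 1 ≤ p) : ∑ i ∈ s, f i ^ p ≤ (∑ i ∈ s, f i) ^ p := by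
  classical
  induction s using Finset.induction_on with
  | empty => simp [Real.zero_rpow (by linarith : p ≠ 0)]
  | insert a s ha ih =>
    rw [sum_insert ha, sum_insert ha]
    have hfs : ∀ i ∈ s, 0 ≤ f i := fun i hi => hf i (mem_insert_of_mem hi)
    have hfa : 0 ≤ f a := hf a (mem_insert_self a s)
    calc f a ^ p + ∑ i ∈ s, f i ^ p ≤ f a ^ p + (∑ i ∈ s, f i) ^ p := by gcongr; exact ih hfs
      _ ≤ (f a + ∑ i ∈ s, f i) ^ p := Real.add_rpow_le_rpow_add hfa (sum_nonneg hfs) hp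

lemma Finset.rpow_sum_rpow_inv_le_sum {ι : Type*} (s : Finset ι) {f : ι → ℝ}
    (hf : ∀ i ∈ s, 0 ≤ f i) {p : ℝ} (hp : 1 ≤ p) : (∑ i ∈ s, f i ^ p) ^ p⁻¹ ≤ ∑ i ∈ s, f i := by
  calc (∑ i ∈ s, f i ^ p) ^ p⁻¹ ≤ ((∑ i ∈ s, f i) ^ p) ^ p⁻¹ := by
        gcongr
        · exact sum_nonneg fun i hi => Real.rpow_nonneg (hf i hi) p
        · exact s.sum_rpow_le_rpow_sum hf hp
    _ = ∑ i ∈ s, f i := Real.rpow_rpow_inv (sum_nonneg hf) (by linarith)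

lemma exists_abs_eq_one_mul_eq_abs (a : ℝ) : ∃ ε : ℝ, |ε| = 1 ∧ a * ε = |a| := by
  rcases abs_choice a with h | h
  · exact ⟨1, abs_one, by rw [h, mul_one]⟩
  · exact ⟨-1, by simp, by rw [h, mul_neg_one]⟩

lemma sum_abs_le_opNorm_of_signs {ι κ : Type*} [Fintype ι] [Fintype κ] (A : Matrix ι κ ℝ)
    (T : (ι → ℂ) →L[ℂ] (κ → ℂ) →L[ℂ] ℂ)
    (hT : ∀ z w, T z w = ∑ i, ∑ j, (A i j : ℂ) * z i * w j)
    {s : ι → ℝ} {t : κ → ℝ} (hs : ∀ i, |s i| ≤ 1) (ht : ∀ j, |t j| ≤ 1)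
    (hst : ∀ i j, A i j * (s i * t j) = |A i j|) :
    ∑ i, ∑ j, |A i j| ≤ ‖T‖ := by
  set z : ι → ℂ := fun i => (s i : ℂ)
  set w : κ → ℂ := fun j => (t j : ℂ)
  have hz : ‖z‖ ≤ 1 := (pi_norm_le_iff_of_nonneg zero_le_one).2 fun i => by simpa [z] using hs i
  have hw : ‖w‖ ≤ 1 := (pi_norm_le_iff_of_nonneg zero_le_one).2 fun j => by simpa [w] using ht j
  have hTzw : T z w = ((∑ i, ∑ j, |A i j| : ℝ) : ℂ) := by
    push_cast
    simp_rw [hT, z, w, ← hst]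
    push_cast
    simp_rw [mul_assoc]
  calc ∑ i, ∑ j, |A i j| = ‖T z w‖ := by
        rw [hTzw, Complex.norm_real, Real.norm_of_nonneg (by positivity)]
    _ ≤ ‖T‖ * ‖z‖ * ‖w‖ := T.le_opNorm₂ z w
    _ ≤ ‖T‖ * 1 * 1 := by gcongr
    _ = ‖T‖ := by ring

lemma Matrix.exists_signs_mul_eq_abs_of_eq_zero (A : Matrix (Fin 2) (Fin 2) ℝ) {i₀ j₀ : Fin 2}
    (h : A i₀ j₀ = 0) : ∃ (s t : Fin 2 → ℝ), (∀ i, |s i| = 1) ∧ (∀ j, |t j| = 1) ∧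
      ∀ i j, A i j * (s i * t j) = |A i j| := by
  choose σ hσ_abs hσ using exists_abs_eq_one_mul_eq_abs
  have hσ_sq (a : ℝ) : σ a * σ a = 1 := by rw [← abs_mul_self, abs_mul, hσ_abs, one_mul]
  have hrev : ∀ i i' : Fin 2, i ≠ i' → i = i'.rev := by decide
  -- Align the other row `i₀.rev` with `t`, then row `i₀` through column `j₀.rev`, the only
  -- column where it can carry a nonzero entry.
  set t : Fin 2 → ℝ := fun j => σ (A i₀.rev j)
  set s : Fin 2 → ℝ := fun i => if i = i₀ then σ (A i₀ j₀.rev) * t j₀.rev else 1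
  refine ⟨s, t, fun i => ?_, fun j => hσ_abs _, fun i j => ?_⟩
  · by_cases hi : i = i₀ <;> simp [s, t, hi, abs_mul, hσ_abs]
  by_cases hi : i = i₀
  · subst hi
    by_cases hj : j = j₀
    · simp [hj, h]
    · obtain rfl := hrev j j₀ hj
      simp only [s, if_pos rfl]
      linear_combination
        t j₀.rev * t j₀.rev * hσ (A i j₀.rev) + |A i j₀.rev| * hσ_sq (A i.rev j₀.rev)
  · obtain rfl := hrev i i₀ hi
    simp [s, t, hi, hσ]

/-- Case (1) of Theorem 5.1: if `a₁₁a₂₁ = 0` or `a₁₂a₂₂ = 0`, then the complex bilinear form with real coefficients satisfies Littlewood's 4/3 inequality with constant 1. -/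
theorem littlewood_43_linf2_complex_case1
    (a11 a12 a21 a22 : ℝ)
    (T : (Fin 2 → ℂ) →L[ℂ] (Fin 2 → ℂ) →L[ℂ] ℂ)
    (hT : ∀ z w : Fin 2 → ℂ,
      T z w = (a11 : ℂ) * z 0 * w 0 + (a21 : ℂ) * z 1 * w 0
        + (a12 : ℂ) * z 0 * w 1 + (a22 : ℂ) * z 1 * w 1)
    (h : a11 * a21 = 0 ∨ a12 * a22 = 0) :
    (|a11| ^ ((4 : ℝ) / 3) + |a12| ^ ((4 : ℝ) / 3)
        + |a21| ^ ((4 : ℝ) / 3) + |a22| ^ ((4 : ℝ) / 3)) ^ ((3 : ℝ) / 4)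
      ≤ ‖T‖ := by
  set A : Matrix (Fin 2) (Fin 2) ℝ := !![a11, a12; a21, a22]
  have hTA : ∀ z w, T z w = ∑ i, ∑ j, (A i j : ℂ) * z i * w j := fun z w => by
    simp only [hT, A, Fin.sum_univ_two, Matrix.of_apply, Matrix.cons_val', Matrix.cons_val_zero,
      Matrix.cons_val_one, Matrix.cons_val_fin_one]
    ring
  have hzero : ∃ i₀ j₀, A i₀ j₀ = 0 := by
    rcases h with h | h <;> rcases mul_eq_zero.1 h with h | h
    exacts [⟨0, 0, h⟩, ⟨1, 0, h⟩, ⟨0, 1, h⟩, ⟨1, 1, h⟩]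
  obtain ⟨i₀, j₀, hA⟩ := hzero
  obtain ⟨s, t, hs, ht, hst⟩ := A.exists_signs_mul_eq_abs_of_eq_zero hA
  calc _ = (∑ ij : Fin 2 × Fin 2, |A ij.1 ij.2| ^ (4 / 3 : ℝ)) ^ (4 / 3 : ℝ)⁻¹ := by
        norm_num [A, Fintype.sum_prod_type, Fin.sum_univ_two, add_assoc]
    _ ≤ ∑ ij : Fin 2 × Fin 2, |A ij.1 ij.2| :=
        rpow_sum_rpow_inv_le_sum _ (fun _ _ => abs_nonneg _) (by norm_num)
    _ = ∑ i, ∑ j, |A i j| := Fintype.sum_prod_type _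
    _ ≤ ‖T‖ := sum_abs_le_opNorm_of_signs A T hTA (fun i => (hs i).le) (fun j => (ht j).le) hst
end

section
/- Let T : ℓ∞²(ℂ) × ℓ∞²(ℂ) → ℂ be the bilinear form T(z,w) = Σ_{i,j=1}^{2} a_{ij}z_iw_j with real coefficients a_{ij}. If a₁₁a₂₁ > 0 and a₁₂a₂₂ > 0, then (Σ_{i,j=1}^{2} |a_{ij}|^{4/3})^{3/4} ≤ ‖T‖. -/
/-!
The `ℓ^{4/3}` norm of the coefficients is at most their `ℓ¹` norm, and the sign hypotheses let
`T` attain the `ℓ¹` norm: each column of `(aᵢⱼ)` has constant sign, so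
`T((1, 1), (sign a₁₁, sign a₁₂)) = ∑ |aᵢⱼ|`.
-/

open Finset

namespace Real

lemma sum_rpow_le_rpow_sum {ι : Type*} (s : Finset ι) {f : ι → ℝ} (hf : ∀ i ∈ s, 0 ≤ f i)
    {p : ℝ} (hp : 1 ≤ p) : ∑ i ∈ s, f i ^ p ≤ (∑ i ∈ s, f i) ^ p := by
  classical
  induction s using Finset.induction_on with
  | empty => simp [zero_rpow (by linarith : p ≠ 0)]
  | insert i s hi ih =>
    have hfi : 0 ≤ f i := hf i (mem_insert_self i s)
    have hfs : ∀ j ∈ s, 0 ≤ f j := fun j hj => hf j (mem_insert_of_mem hj)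
    rw [sum_insert hi, sum_insert hi]
    calc f i ^ p + ∑ j ∈ s, f j ^ p ≤ f i ^ p + (∑ j ∈ s, f j) ^ p := by gcongr; exact ih hfs
      _ ≤ (f i + ∑ j ∈ s, f j) ^ p := add_rpow_le_rpow_add hfi (sum_nonneg hfs) hp

lemma rpow_sum_rpow_inv_le_sum {ι : Type*} (s : Finset ι) {f : ι → ℝ} (hf : ∀ i ∈ s, 0 ≤ f i)
    {p : ℝ} (hp : 1 ≤ p) : (∑ i ∈ s, f i ^ p) ^ p⁻¹ ≤ ∑ i ∈ s, f i := by
  have hsum : 0 ≤ ∑ i ∈ s, f i := sum_nonneg hf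
  calc (∑ i ∈ s, f i ^ p) ^ p⁻¹ ≤ ((∑ i ∈ s, f i) ^ p) ^ p⁻¹ :=
        rpow_le_rpow (sum_nonneg fun i hi => rpow_nonneg (hf i hi) p)
          (sum_rpow_le_rpow_sum s hf hp) (by positivity)
    _ = ∑ i ∈ s, f i := rpow_rpow_inv hsum (by linarith)

end Real

lemma add_mul_sign_eq_abs_add_abs {a b : ℝ} (h : 0 < a * b) :
    (a + b) * SignType.sign a = |a| + |b| := by
  rcases pos_and_pos_or_neg_and_neg_of_mul_pos h with ⟨ha, hb⟩ | ⟨ha, hb⟩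
  · simp [sign_pos ha, abs_of_pos ha, abs_of_pos hb]
  · simp [sign_neg ha, abs_of_neg ha, abs_of_neg hb, add_comm]

lemma norm_sign_cast_le_one (x : ℝ) : ‖((SignType.sign x : ℝ) : ℂ)‖ ≤ 1 := by
  rw [Complex.norm_real, Real.norm_eq_abs]
  rcases SignType.sign x with _ | _ | _ <;> simp

lemma ContinuousLinearMap.norm_apply₂_le_opNorm {𝕜 E F G : Type*} [NontriviallyNormedField 𝕜]
    [SeminormedAddCommGroup E] [SeminormedAddCommGroup F] [SeminormedAddCommGroup G]
    [NormedSpace 𝕜 E] [NormedSpace 𝕜 F] [NormedSpace 𝕜 G] (f : E →L[𝕜] F →L[𝕜] G)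
    {x : E} {y : F} (hx : ‖x‖ ≤ 1) (hy : ‖y‖ ≤ 1) : ‖f x y‖ ≤ ‖f‖ :=
  (f.le_of_opNorm₂_le_of_le le_rfl hx hy).trans_eq (by ring)

/-- Case (2) of Theorem 5.1: if `a₁₁a₂₁ > 0` and `a₁₂a₂₂ > 0`, then the complex bilinear form with real coefficients satisfies Littlewood's 4/3 inequality with constant 1. -/
theorem littlewood_43_linf2_complex_case2
    (a11 a12 a21 a22 : ℝ)
    (T : (Fin 2 → ℂ) →L[ℂ] (Fin 2 → ℂ) →L[ℂ] ℂ)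
    (hT : ∀ z w : Fin 2 → ℂ,
      T z w = (a11 : ℂ) * z 0 * w 0 + (a21 : ℂ) * z 1 * w 0
        + (a12 : ℂ) * z 0 * w 1 + (a22 : ℂ) * z 1 * w 1)
    (h1 : a11 * a21 > 0) (h2 : a12 * a22 > 0) :
    (|a11| ^ ((4 : ℝ) / 3) + |a12| ^ ((4 : ℝ) / 3)
        + |a21| ^ ((4 : ℝ) / 3) + |a22| ^ ((4 : ℝ) / 3)) ^ ((3 : ℝ) / 4)
      ≤ ‖T‖ := by
  set w : Fin 2 → ℂ := ![((SignType.sign a11 : ℝ) : ℂ), ((SignType.sign a12 : ℝ) : ℂ)]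
  have hw : ‖w‖ ≤ 1 := (pi_norm_le_iff_of_nonneg zero_le_one).2 fun j => by
    fin_cases j <;> exact norm_sign_cast_le_one _
  have hz : ‖(1 : Fin 2 → ℂ)‖ ≤ 1 := (pi_norm_le_iff_of_nonneg zero_le_one).2 fun _ => by simp
  have hTw : T 1 w =
      (((a11 + a21) * SignType.sign a11 + (a12 + a22) * SignType.sign a12 : ℝ) : ℂ) := by
    simp only [hT, w, Pi.one_apply, mul_one, Matrix.cons_val_zero, Matrix.cons_val_one]
    push_cast
    ring
  have hLp_le_L1 := Real.rpow_sum_rpow_inv_le_sum univ (f := ![|a11|, |a12|, |a21|, |a22|])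
    (fun i _ => by fin_cases i <;> simp) (by norm_num : (1 : ℝ) ≤ 4 / 3)
  calc _ ≤ |a11| + |a12| + |a21| + |a22| := by simpa [Fin.sum_univ_four] using hLp_le_L1
    _ = ‖T 1 w‖ := by
      rw [hTw, add_mul_sign_eq_abs_add_abs h1, add_mul_sign_eq_abs_add_abs h2, Complex.norm_real,
        Real.norm_of_nonneg (by positivity)]
      ring
    _ ≤ ‖T‖ := T.norm_apply₂_le_opNorm hz hw
end

section
/- Let T : ℓ∞²(ℂ) × ℓ∞²(ℂ) → ℂ be the bilinear form T(z,w) = Σ_{i,j=1}^{2} a_{ij}z_iw_j with real coefficients a_{ij}. If a₁₁a₂₁ > 0, a₁₂a₂₂ < 0 and a₁₁a₂₁ + a₁₂a₂₂ = 0, then (Σ_{i,j=1}^{2} |a_{ij}|^{4/3})^{3/4} ≤ ‖T‖. -/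
/-!
Put `μ = a₁₂ / a₁₁`. Orthogonality of the columns gives `a₁₂ = μ a₁₁` and `a₂₁ = -μ a₂₂`, so
the left-hand side factors as `‖(1, |μ|)‖_{4/3} ‖(|a₁₁|, |a₂₂|)‖_{4/3}`. Testing `T` on `w = (1, ω)`
with `|ω| = 1` against the best unimodular `z` gives
`‖T‖ ≥ |a₁₁| √(1 + μ² + 2μx) + |a₂₂| √(1 + μ² - 2μx)` for `x = Re ω`, any `x ∈ [-1, 1]`.

At the critical point in `x` the square of this bound is `2 (1 + μ²) (a₁₁² + a₂₂²)`, which dominates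
the square of the product of the two `4/3`-norms by the power-mean inequality
`‖v‖_{4/3}² ≤ √2 ‖v‖₂²`: the two factors `√2` multiply to exactly `2`. When the critical point
leaves `[-1, 1]`, use an endpoint. With `b = |a₁₁|`, `e = |a₂₂|` and `l = |μ|`, the value at
`x = 1` (for `μ ≥ 0`) is `b (1 + l) + e |1 - l|`, linear in `e` on the range `e (1 + l) ≤ b |1 - l|`,
so by convexity of the `4/3`-norm (Minkowski) it suffices to check `e = 0` and the end of the range,
where the critical point is exactly `x = 1`.
-/

open Real

-- the `ℓ^p` norm of `(x, y)` only for `x, y ≥ 0`: `rpow` of a negative base is not `|·| ^ p`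
noncomputable def pairNorm (p x y : ℝ) : ℝ := (x ^ p + y ^ p) ^ (1 / p)

section pairNorm

variable {p x y : ℝ}

lemma pairNorm_nonneg (hx : 0 ≤ x) (hy : 0 ≤ y) : 0 ≤ pairNorm p x y := by
  unfold pairNorm; positivity

lemma pairNorm_comm (p x y : ℝ) : pairNorm p x y = pairNorm p y x := by
  rw [pairNorm, pairNorm, add_comm]

lemma pairNorm_zero_right (hp : 0 < p) (hx : 0 ≤ x) : pairNorm p x 0 = x := by
  rw [pairNorm, zero_rpow hp.ne', add_zero, ← rpow_mul hx, mul_one_div_cancel hp.ne', rpow_one]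

lemma pairNorm_mul (hp : 0 < p) {c : ℝ} (hc : 0 ≤ c) (hx : 0 ≤ x) (hy : 0 ≤ y) :
    pairNorm p (c * x) (c * y) = c * pairNorm p x y := by
  rw [pairNorm, pairNorm, mul_rpow hc hx, mul_rpow hc hy, ← mul_add,
    mul_rpow (by positivity) (by positivity), ← rpow_mul hc, mul_one_div_cancel hp.ne', rpow_one]

lemma pairNorm_le_add (hp : 1 ≤ p) (hx : 0 ≤ x) (hy : 0 ≤ y) : pairNorm p x y ≤ x + y :=
  rpow_add_rpow_le_add hx hy hp

lemma pairNorm_add_le (hp : 1 ≤ p) {x' y' : ℝ} (hx : 0 ≤ x) (hy : 0 ≤ y) (hx' : 0 ≤ x')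
    (hy' : 0 ≤ y') : pairNorm p (x + x') (y + y') ≤ pairNorm p x y + pairNorm p x' y' := by
  have := Lp_add_le_of_nonneg (s := Finset.univ) (f := ![x, y]) (g := ![x', y']) hp
    (by simp [Fin.forall_fin_two, hx, hy]) (by simp [Fin.forall_fin_two, hx', hy'])
  simpa [Fin.sum_univ_two, pairNorm] using this

lemma pairNorm_four_thirds_sq_le (hx : 0 ≤ x) (hy : 0 ≤ y) :
    pairNorm (4 / 3) x y ^ 2 ≤ √2 * (x ^ 2 + y ^ 2) := by
  lift x to NNReal using hx
  lift y to NNReal using hy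
  have h := NNReal.rpow_add_le_mul_rpow_add_rpow (x ^ (4 / 3 : ℝ)) (y ^ (4 / 3 : ℝ))
    (p := 3 / 2) (by norm_num)
  rw [← NNReal.rpow_mul, ← NNReal.rpow_mul] at h
  norm_num at h
  rw [pairNorm, ← rpow_natCast, ← rpow_mul (by positivity), sqrt_eq_rpow]
  norm_num
  exact_mod_cast h

lemma sq_pairNorm_mul_pairNorm_le {x' y' : ℝ} (hx : 0 ≤ x) (hy : 0 ≤ y) (hx' : 0 ≤ x')
    (hy' : 0 ≤ y') :
    (pairNorm (4 / 3) x y * pairNorm (4 / 3) x' y') ^ 2 ≤ 2 * (x ^ 2 + y ^ 2) * (x' ^ 2 + y' ^ 2) :=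
  calc (pairNorm (4 / 3) x y * pairNorm (4 / 3) x' y') ^ 2
      = pairNorm (4 / 3) x y ^ 2 * pairNorm (4 / 3) x' y' ^ 2 := mul_pow _ _ _
    _ ≤ (√2 * (x ^ 2 + y ^ 2)) * (√2 * (x' ^ 2 + y' ^ 2)) :=
        mul_le_mul (pairNorm_four_thirds_sq_le hx hy) (pairNorm_four_thirds_sq_le hx' hy')
          (by positivity) (by positivity)
    _ = 2 * (x ^ 2 + y ^ 2) * (x' ^ 2 + y' ^ 2) := by
        rw [mul_mul_mul_comm, mul_self_sqrt zero_le_two, mul_assoc]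

end pairNorm

lemma pairNorm_mul_pairNorm_le_sq_add_sq {l : ℝ} (hl : 0 ≤ l) :
    pairNorm (4 / 3) 1 l * pairNorm (4 / 3) (1 + l) |1 - l| ≤ (1 + l) ^ 2 + |1 - l| ^ 2 := by
  refine (pow_le_pow_iff_left₀ (mul_nonneg (pairNorm_nonneg zero_le_one hl)
    (pairNorm_nonneg (by positivity) (abs_nonneg _))) (by positivity) two_ne_zero).1 ?_
  calc _ ≤ 2 * (1 ^ 2 + l ^ 2) * ((1 + l) ^ 2 + |1 - l| ^ 2) :=
        sq_pairNorm_mul_pairNorm_le zero_le_one hl (by positivity) (abs_nonneg _)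
    _ = ((1 + l) ^ 2 + |1 - l| ^ 2) ^ 2 := by rw [sq_abs]; ring

lemma pairNorm_mul_pairNorm_le_of_mul_le {l b e : ℝ} (hl : 0 ≤ l) (hb : 0 ≤ b) (he : 0 ≤ e)
    (h : e * (1 + l) ≤ b * |1 - l|) :
    pairNorm (4 / 3) 1 l * pairNorm (4 / 3) b e ≤ b * (1 + l) + e * |1 - l| := by
  have hqm := pairNorm_mul_pairNorm_le_sq_add_sq hl
  set q := 1 + l
  set m := |1 - l|
  have hq : 0 < q := by positivity
  have hN : pairNorm (4 / 3) 1 l ≤ q := pairNorm_le_add (by norm_num) zero_le_one hl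
  rcases (abs_nonneg (1 - l)).eq_or_lt with hm | hm
  · obtain rfl : e = 0 := by nlinarith
    rw [pairNorm_zero_right (by norm_num) hb, zero_mul, add_zero, mul_comm b]
    exact mul_le_mul_of_nonneg_right hN hb
  have hr : 0 ≤ b * m - e * q := by linarith
  -- Minkowski for `m • (b, e) = (b m - e q, 0) + e • (q, m)`, and `hqm` is the claim at `(q, m)`
  have hsplit : m * pairNorm (4 / 3) b e ≤ (b * m - e * q) + e * pairNorm (4 / 3) q m := by
    rw [← pairNorm_mul (by norm_num) hm.le hb he, ← pairNorm_mul (by norm_num) he hq.le hm.le,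
      ← pairNorm_zero_right (p := 4 / 3) (by norm_num) hr]
    convert pairNorm_add_le (p := 4 / 3) (by norm_num) hr le_rfl
      (mul_nonneg he hq.le) (mul_nonneg he hm.le) using 2 <;> ring
  refine le_of_mul_le_mul_left ?_ hm
  calc m * (pairNorm (4 / 3) 1 l * pairNorm (4 / 3) b e)
      = pairNorm (4 / 3) 1 l * (m * pairNorm (4 / 3) b e) := by ring
    _ ≤ pairNorm (4 / 3) 1 l * ((b * m - e * q) + e * pairNorm (4 / 3) q m) :=
        mul_le_mul_of_nonneg_left hsplit (pairNorm_nonneg zero_le_one hl)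
    _ ≤ (b * m - e * q) * q + e * (q ^ 2 + m ^ 2) := by
        linear_combination mul_le_mul_of_nonneg_left hN hr + mul_le_mul_of_nonneg_left hqm he
    _ = m * (b * q + e * m) := by ring

lemma pairNorm_mul_pairNorm_le_of_critical {l b e x : ℝ} (hl : 0 ≤ l) (hb : 0 ≤ b) (he : 0 ≤ e)
    (hS : 0 < b ^ 2 + e ^ 2) (hx : 2 * l * (b ^ 2 + e ^ 2) * x = (1 + l ^ 2) * (b ^ 2 - e ^ 2)) :
    pairNorm (4 / 3) 1 l * pairNorm (4 / 3) b e
      ≤ b * √(1 + l ^ 2 + 2 * l * x) + e * √(1 + l ^ 2 - 2 * l * x) := by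
  set K := 2 * (1 + l ^ 2) / (b ^ 2 + e ^ 2)
  have hK : 0 ≤ K := by positivity
  have h₁ : 1 + l ^ 2 + 2 * l * x = b ^ 2 * K := by
    simp only [K]; field_simp; linear_combination hx
  have h₂ : 1 + l ^ 2 - 2 * l * x = e ^ 2 * K := by
    simp only [K]; field_simp; linear_combination -hx
  rw [h₁, h₂, sqrt_mul' _ hK, sqrt_mul' _ hK, sqrt_sq hb, sqrt_sq he]
  refine (pow_le_pow_iff_left₀ (mul_nonneg (pairNorm_nonneg zero_le_one hl)
      (pairNorm_nonneg hb he)) (by positivity) two_ne_zero).1 ?_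
  calc _ ≤ 2 * (1 ^ 2 + l ^ 2) * (b ^ 2 + e ^ 2) := sq_pairNorm_mul_pairNorm_le zero_le_one hl hb he
    _ = ((b ^ 2 + e ^ 2) * √K) ^ 2 := by rw [mul_pow, sq_sqrt hK]; simp only [K]; field_simp
    _ = (b * (b * √K) + e * (e * √K)) ^ 2 := by ring

lemma exists_pairNorm_mul_pairNorm_le_of_nonneg {l b e : ℝ} (hl : 0 ≤ l) (hb : 0 ≤ b)
    (he : 0 ≤ e) :
    ∃ x ∈ Set.Icc (-1 : ℝ) 1, pairNorm (4 / 3) 1 l * pairNorm (4 / 3) b e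
      ≤ b * √(1 + l ^ 2 + 2 * l * x) + e * √(1 + l ^ 2 - 2 * l * x) := by
  have hplus : √(1 + l ^ 2 + 2 * l) = 1 + l := by
    rw [show 1 + l ^ 2 + 2 * l = (1 + l) ^ 2 by ring, sqrt_sq (by positivity)]
  have hminus : √(1 + l ^ 2 - 2 * l) = |1 - l| := by
    rw [show 1 + l ^ 2 - 2 * l = (1 - l) ^ 2 by ring, sqrt_sq_eq_abs]
  by_cases hbe : e * (1 + l) ≤ b * |1 - l|
  · refine ⟨1, by norm_num, ?_⟩
    rw [mul_one, hplus, hminus]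
    exact pairNorm_mul_pairNorm_le_of_mul_le hl hb he hbe
  by_cases heb : b * (1 + l) ≤ e * |1 - l|
  · refine ⟨-1, by norm_num, ?_⟩
    rw [mul_neg_one, sub_neg_eq_add, ← sub_eq_add_neg, hplus, hminus, pairNorm_comm _ b, add_comm]
    exact pairNorm_mul_pairNorm_le_of_mul_le hl he hb heb
  push Not at hbe heb
  have hl' : 0 < l := by
    refine hl.lt_of_ne fun hl0 ↦ ?_
    subst hl0
    norm_num at hbe heb
    linarith
  have hS : 0 < b ^ 2 + e ^ 2 := by
    have := pos_of_mul_pos_left ((mul_nonneg hb (abs_nonneg _)).trans_lt hbe) (by positivity)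
    positivity
  refine ⟨(1 + l ^ 2) * (b ^ 2 - e ^ 2) / (2 * l * (b ^ 2 + e ^ 2)), ⟨?_, ?_⟩,
    pairNorm_mul_pairNorm_le_of_critical hl hb he hS (by field_simp)⟩
  · rw [le_div_iff₀ (by positivity)]
    nlinarith [mul_self_lt_mul_self (by positivity) heb, sq_abs (1 - l)]
  · rw [div_le_one (by positivity)]
    nlinarith [mul_self_lt_mul_self (by positivity) hbe, sq_abs (1 - l)]

lemma exists_pairNorm_mul_pairNorm_le (μ : ℝ) {b e : ℝ} (hb : 0 ≤ b) (he : 0 ≤ e) :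
    ∃ x ∈ Set.Icc (-1 : ℝ) 1, pairNorm (4 / 3) 1 |μ| * pairNorm (4 / 3) b e
      ≤ b * √(1 + μ ^ 2 + 2 * μ * x) + e * √(1 + μ ^ 2 - 2 * μ * x) := by
  obtain ⟨x, hx, h⟩ := exists_pairNorm_mul_pairNorm_le_of_nonneg (abs_nonneg μ) hb he
  rcases abs_cases μ with ⟨hμ, -⟩ | ⟨hμ, -⟩
  · exact ⟨x, hx, by simpa [hμ] using h⟩
  · refine ⟨-x, ⟨by linarith [hx.2], by linarith [hx.1]⟩, ?_⟩
    simpa [hμ] using h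

lemma Complex.norm_ofReal_add_ofReal_mul {ω : ℂ} (hω : ‖ω‖ = 1) (a b : ℝ) :
    ‖(a : ℂ) + b * ω‖ = √(a ^ 2 + b ^ 2 + 2 * a * b * ω.re) := by
  have h : ω.re * ω.re + ω.im * ω.im = 1 := by
    rw [← Complex.normSq_apply, Complex.normSq_eq_norm_sq, hω, one_pow]
  rw [← sqrt_sq (norm_nonneg _), Complex.sq_norm, Complex.normSq_apply]
  simp only [Complex.add_re, Complex.add_im, Complex.mul_re, Complex.mul_im, Complex.ofReal_re,
    Complex.ofReal_im]
  congr 1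
  linear_combination b ^ 2 * h

lemma Complex.exists_norm_eq_one_re_eq {x : ℝ} (hx : x ∈ Set.Icc (-1 : ℝ) 1) :
    ∃ ω : ℂ, ‖ω‖ = 1 ∧ ω.re = x := by
  have h : 0 ≤ 1 - x ^ 2 := by nlinarith [hx.1, hx.2]
  refine ⟨⟨x, √(1 - x ^ 2)⟩, ?_, rfl⟩
  rw [Complex.norm_def, Complex.normSq_mk, ← sq, ← sq, sq_sqrt h, add_sub_cancel, Real.sqrt_one]

lemma sum_norm_apply_single_le_opNorm {𝕜 ι F : Type*} [RCLike 𝕜] [Fintype ι] [DecidableEq ι]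
    [NormedAddCommGroup F] [NormedSpace 𝕜 F] (T : (ι → 𝕜) →L[𝕜] F →L[𝕜] 𝕜) (w : F) :
    ∑ i, ‖T (Pi.single i 1) w‖ ≤ ‖T‖ * ‖w‖ := by
  set u : ι → 𝕜 := fun i ↦ T (Pi.single i 1) w
  set z : ι → 𝕜 := fun i ↦ star (u i) / ‖u i‖
  have hz : ‖z‖ ≤ 1 := by
    refine pi_norm_le_iff_of_nonneg zero_le_one |>.2 fun i ↦ ?_
    simp only [z, norm_div, norm_star, RCLike.norm_ofReal, abs_norm]
    exact div_self_le_one _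
  have hTz : T z w = ∑ i, (‖u i‖ : 𝕜) := by
    have : z = ∑ i, z i • Pi.single i 1 := by
      ext j; simp [Finset.sum_apply, Pi.single_apply]
    rw [this, map_sum, sum_apply]
    refine Finset.sum_congr rfl fun i _ ↦ ?_
    rw [map_smul, smul_apply, smul_eq_mul]
    change star (u i) / _ * u i = _
    rw [div_mul_eq_mul_div, RCLike.star_def, RCLike.conj_mul, sq, mul_self_div_self]
  calc ∑ i, ‖u i‖ = ‖T z w‖ := by
        rw [hTz, ← RCLike.ofReal_sum, RCLike.norm_ofReal, abs_of_nonneg (by positivity)]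
    _ ≤ ‖T‖ * ‖z‖ * ‖w‖ := T.le_opNorm₂ z w
    _ ≤ ‖T‖ * 1 * ‖w‖ := by gcongr
    _ = ‖T‖ * ‖w‖ := by rw [mul_one]

lemma norm_add_norm_le_opNorm {a11 a12 a21 a22 : ℝ}
    {T : (Fin 2 → ℂ) →L[ℂ] (Fin 2 → ℂ) →L[ℂ] ℂ}
    (hT : ∀ z w : Fin 2 → ℂ,
      T z w = (a11 : ℂ) * z 0 * w 0 + (a21 : ℂ) * z 1 * w 0
        + (a12 : ℂ) * z 0 * w 1 + (a22 : ℂ) * z 1 * w 1)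
    {ω : ℂ} (hω : ‖ω‖ = 1) :
    ‖(a11 : ℂ) + a12 * ω‖ + ‖(a21 : ℂ) + a22 * ω‖ ≤ ‖T‖ := by
  have hw : ‖(![1, ω] : Fin 2 → ℂ)‖ ≤ 1 :=
    pi_norm_le_iff_of_nonneg zero_le_one |>.2 <| Fin.forall_fin_two.2 ⟨by simp, by simp [hω]⟩
  calc _ = ∑ i, ‖T (Pi.single i 1) ![1, ω]‖ := by simp [Fin.sum_univ_two, hT]
    _ ≤ ‖T‖ * ‖(![1, ω] : Fin 2 → ℂ)‖ := sum_norm_apply_single_le_opNorm T _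
    _ ≤ ‖T‖ := mul_le_of_le_one_right (norm_nonneg T) hw

theorem littlewood_43_linf2_complex_case4_general
    (a11 a12 a21 a22 : ℝ)
    (T : (Fin 2 → ℂ) →L[ℂ] (Fin 2 → ℂ) →L[ℂ] ℂ)
    (hT : ∀ z w : Fin 2 → ℂ,
      T z w = (a11 : ℂ) * z 0 * w 0 + (a21 : ℂ) * z 1 * w 0
        + (a12 : ℂ) * z 0 * w 1 + (a22 : ℂ) * z 1 * w 1)
    (h1 : a11 * a21 > 0) (h3 : a11 * a21 + a12 * a22 = 0) :
    (|a11| ^ ((4 : ℝ) / 3) + |a12| ^ ((4 : ℝ) / 3)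
        + |a21| ^ ((4 : ℝ) / 3) + |a22| ^ ((4 : ℝ) / 3)) ^ ((3 : ℝ) / 4)
      ≤ ‖T‖ := by
  have ha11 : a11 ≠ 0 := left_ne_zero_of_mul h1.ne'
  have ha22 : a22 ≠ 0 := right_ne_zero_of_mul (by linarith : a12 * a22 < 0).ne
  set μ := a12 / a11
  have h12 : a12 = μ * a11 := (div_mul_cancel₀ _ ha11).symm
  have h21 : a21 = -μ * a22 := by
    simp only [μ]; field_simp; linarith
  obtain ⟨x, hx, hbound⟩ := exists_pairNorm_mul_pairNorm_le μ (abs_nonneg a11) (abs_nonneg a22)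
  obtain ⟨ω, hω, rfl⟩ := Complex.exists_norm_eq_one_re_eq hx
  calc _ = pairNorm (4 / 3) 1 |μ| * pairNorm (4 / 3) |a11| |a22| := by
        rw [pairNorm, pairNorm, one_rpow, ← mul_rpow (by positivity) (by positivity), h12, h21,
          abs_mul, abs_mul, abs_neg, mul_rpow (abs_nonneg _) (abs_nonneg _),
          mul_rpow (abs_nonneg _) (abs_nonneg _), show (3 : ℝ) / 4 = 1 / (4 / 3) by norm_num]
        congr 1
        ring
    _ ≤ |a11| * √(1 + μ ^ 2 + 2 * μ * ω.re) + |a22| * √(1 + μ ^ 2 - 2 * μ * ω.re) := hbound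
    _ = ‖(a11 : ℂ) + a12 * ω‖ + ‖(a21 : ℂ) + a22 * ω‖ := by
        rw [Complex.norm_ofReal_add_ofReal_mul hω, Complex.norm_ofReal_add_ofReal_mul hω, h12, h21,
          ← sqrt_sq_eq_abs, ← sqrt_sq_eq_abs a22, ← sqrt_mul (sq_nonneg _),
          ← sqrt_mul (sq_nonneg _)]
        congr 2 <;> ring
    _ ≤ ‖T‖ := norm_add_norm_le_opNorm hT hω

/-- Case (4) of Theorem 5.1: if `a₁₁a₂₁ > 0`, `a₁₂a₂₂ < 0` and `a₁₁a₂₁ + a₁₂a₂₂ = 0`, then the complex bilinear form with real coefficients satisfies Littlewood's 4/3 inequality with constant 1. -/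
theorem littlewood_43_linf2_complex_case4
    (a11 a12 a21 a22 : ℝ)
    (T : (Fin 2 → ℂ) →L[ℂ] (Fin 2 → ℂ) →L[ℂ] ℂ)
    (hT : ∀ z w : Fin 2 → ℂ,
      T z w = (a11 : ℂ) * z 0 * w 0 + (a21 : ℂ) * z 1 * w 0
        + (a12 : ℂ) * z 0 * w 1 + (a22 : ℂ) * z 1 * w 1)
    (h1 : a11 * a21 > 0) (h2 : a12 * a22 < 0) (h3 : a11 * a21 + a12 * a22 = 0) :
    (|a11| ^ ((4 : ℝ) / 3) + |a12| ^ ((4 : ℝ) / 3)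
        + |a21| ^ ((4 : ℝ) / 3) + |a22| ^ ((4 : ℝ) / 3)) ^ ((3 : ℝ) / 4)
      ≤ ‖T‖ :=
  littlewood_43_linf2_complex_case4_general a11 a12 a21 a22 T hT h1 h3
end

section
/- Let T : ℓ∞²(ℂ) × ℓ∞²(ℂ) → ℂ be the bilinear form T(z,w) = Σ_{i,j=1}^{2} a_{ij}z_iw_j with real coefficients a_{ij}. If a₁₁a₂₁ < 0, a₁₂a₂₂ > 0 and a₁₁a₂₁ + a₁₂a₂₂ = 0, then (Σ_{i,j=1}^{2} |a_{ij}|^{4/3})^{3/4} ≤ ‖T‖. -/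
/-!
Testing `T` on `z = (1, ζ)` with `‖ζ‖ = 1`, and on a `w` whose entries are the unimodular phases
aligning `T (z, e₀)` and `T (z, e₁)`, gives
`‖T‖ ≥ |a₁₁ + a₂₁ζ| + |a₁₂ + a₂₂ζ| = √(a₁₁² + a₂₁² + 2a₁₁a₂₁c) + √(a₁₂² + a₂₂² + 2a₁₂a₂₂c)`
with `c = Re ζ`. As `a₁₁a₂₁ = -a₁₂a₂₂`, the two radicands add up to `S = ∑ aᵢⱼ²`. If some
`c ∈ [-1, 1]` makes them equal, then `‖T‖ ≥ √(2S)`, which dominates the `ℓ^{4/3}` norm of the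
coefficients by the power mean inequality. Otherwise `c = 1` or `c = -1` gives
`‖T‖ ≥ |a + b| + |c + d|` for a suitable pairing of the (signed) coefficients, and the weighted
AM-GM bound `t^{4/3} K^{2/3} ≤ t (t + 2K) / 3` reduces the claim to a polynomial inequality.
-/

open ComplexConjugate

lemma RCLike.conj_div_norm_mul_self {𝕜 : Type*} [RCLike 𝕜] (z : 𝕜) :
    conj z / (‖z‖ : 𝕜) * z = ‖z‖ := by
  rw [div_mul_eq_mul_div, RCLike.conj_mul, sq, mul_self_div_self]

lemma Complex.norm_ofReal_add_mul_eq_sqrt (a b c : ℝ) (hc : |c| ≤ 1) :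
    ‖(a : ℂ) + b * (c + √(1 - c ^ 2) * I)‖ = √(a ^ 2 + b ^ 2 + 2 * a * b * c) := by
  have hs : √(1 - c ^ 2) ^ 2 = 1 - c ^ 2 := Real.sq_sqrt (by nlinarith [sq_abs c, abs_nonneg c])
  rw [show (a : ℂ) + b * (c + √(1 - c ^ 2) * I)
      = ((a + b * c : ℝ) : ℂ) + ((b * √(1 - c ^ 2) : ℝ) : ℂ) * I by push_cast; ring,
    norm_add_mul_I]
  congr 1
  linear_combination b ^ 2 * hs

namespace ContinuousLinearMap

variable {𝕜 ι : Type*} [RCLike 𝕜] [DecidableEq ι]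

lemma apply_single_eq_mul (f : (ι → 𝕜) →L[𝕜] 𝕜) (i : ι) (c : 𝕜) :
    f (Pi.single i c) = c * f (Pi.single i 1) := by
  rw [← smul_eq_mul, ← map_smul, ← Pi.single_smul', smul_eq_mul, mul_one]

theorem sum_norm_apply_single_le_opNorm [Fintype ι] (f : (ι → 𝕜) →L[𝕜] 𝕜) :
    ∑ i, ‖f (Pi.single i 1)‖ ≤ ‖f‖ := by
  set w : ι → 𝕜 := fun i => conj (f (Pi.single i 1)) / ‖f (Pi.single i 1)‖
  have hw : ‖w‖ ≤ 1 := (pi_norm_le_iff_of_nonneg zero_le_one).2 fun i => by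
    simpa [w, norm_div] using div_self_le_one ‖f (Pi.single i 1)‖
  have hfw : f w = ((∑ i, ‖f (Pi.single i 1)‖ : ℝ) : 𝕜) := by
    rw [← Finset.univ_sum_single w, map_sum, RCLike.ofReal_sum]
    exact Finset.sum_congr rfl fun i _ => by
      rw [f.apply_single_eq_mul, RCLike.conj_div_norm_mul_self]
  calc ∑ i, ‖f (Pi.single i 1)‖ = ‖f w‖ := by
        rw [hfw, RCLike.norm_ofReal, abs_of_nonneg (by positivity)]
    _ ≤ ‖f‖ * ‖w‖ := f.le_opNorm w
    _ ≤ ‖f‖ := mul_le_of_le_one_right (norm_nonneg _) hw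

end ContinuousLinearMap

lemma rpow_three_fourths_le_of_mul_le {A K : ℝ} (hA : 0 ≤ A) (hK : 0 < K)
    (h : A * K ^ (2 / 3 : ℝ) ≤ K ^ 2) : A ^ (3 / 4 : ℝ) ≤ K := by
  have hK43 : K ^ (4 / 3 : ℝ) * K ^ (2 / 3 : ℝ) = K ^ 2 := by
    rw [← Real.rpow_add hK]; norm_num
  have hA' : A ≤ K ^ (4 / 3 : ℝ) := le_of_mul_le_mul_right (hK43 ▸ h) (by positivity)
  calc A ^ (3 / 4 : ℝ) ≤ (K ^ (4 / 3 : ℝ)) ^ (3 / 4 : ℝ) := by gcongr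
    _ = K := by rw [← Real.rpow_mul hK.le]; norm_num

lemma rpow_four_thirds_mul_rpow_two_thirds_le {t K : ℝ} (ht : 0 ≤ t) (hK : 0 ≤ K) :
    t ^ (4 / 3 : ℝ) * K ^ (2 / 3 : ℝ) ≤ t * (t + 2 * K) / 3 := by
  have amgm := Real.geom_mean_le_arith_mean2_weighted (w₁ := 1 / 3) (w₂ := 2 / 3)
    (by norm_num) (by norm_num) ht hK (by norm_num)
  calc t ^ (4 / 3 : ℝ) * K ^ (2 / 3 : ℝ) = t * (t ^ (1 / 3 : ℝ) * K ^ (2 / 3 : ℝ)) := by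
        rw [← mul_assoc, show (4 / 3 : ℝ) = 1 + 1 / 3 by norm_num,
          Real.rpow_add' ht (by norm_num), Real.rpow_one]
    _ ≤ t * (1 / 3 * t + 2 / 3 * K) := by gcongr
    _ = t * (t + 2 * K) / 3 := by ring

theorem sum_abs_rpow_four_thirds_rpow_le_sqrt (a b c d : ℝ) :
    (|a| ^ (4 / 3 : ℝ) + |b| ^ (4 / 3 : ℝ) + |c| ^ (4 / 3 : ℝ) + |d| ^ (4 / 3 : ℝ)) ^ (3 / 4 : ℝ)
      ≤ √(2 * (a ^ 2 + b ^ 2 + c ^ 2 + d ^ 2)) := by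
  have rpow_eq_sq (t : ℝ) : (|t| ^ (4 / 3 : ℝ)) ^ (3 / 2 : ℝ) = t ^ 2 := by
    rw [← Real.rpow_mul (abs_nonneg t)]; norm_num
  have card_rpow : ((4 : ℕ) : ℝ) ^ (3 / 2 - 1 : ℝ) = 2 := by
    rw [show ((4 : ℕ) : ℝ) = 2 ^ (2 : ℝ) by norm_num, ← Real.rpow_mul zero_le_two]; norm_num
  have power_mean := Real.rpow_sum_le_const_mul_sum_rpow_of_nonneg (s := Finset.univ)
    (f := ![|a| ^ (4 / 3 : ℝ), |b| ^ (4 / 3 : ℝ), |c| ^ (4 / 3 : ℝ), |d| ^ (4 / 3 : ℝ)])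
    (p := 3 / 2) (by norm_num) (fun i _ => by fin_cases i <;> simp <;> positivity)
  simp only [Fin.sum_univ_four, Matrix.cons_val, rpow_eq_sq, Finset.card_univ, Fintype.card_fin,
    card_rpow] at power_mean
  rw [Real.sqrt_eq_rpow, show (3 / 4 : ℝ) = 3 / 2 * (1 / 2) by norm_num,
    Real.rpow_mul (by positivity)]
  gcongr

theorem sum_abs_rpow_four_thirds_rpow_le_of_mul_add_mul_eq_zero {a b c d : ℝ}
    (h : a * b + c * d = 0) (hcd : 0 < c * d) (hle : |c + d| ≤ |a + b|) :
    (|a| ^ (4 / 3 : ℝ) + |b| ^ (4 / 3 : ℝ) + |c| ^ (4 / 3 : ℝ) + |d| ^ (4 / 3 : ℝ)) ^ (3 / 4 : ℝ)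
      ≤ |a + b| + |c + d| := by
  set A := |a + b|
  set m := |c + d|
  have hcd_abs : |c| + |d| = m := by
    refine ((abs_add_eq_add_abs_iff c d).2 ?_).symm
    rcases pos_and_pos_or_neg_and_neg_of_mul_pos hcd with h | h
    exacts [.inl ⟨h.1.le, h.2.le⟩, .inr ⟨h.1.le, h.2.le⟩]
  have hm : 0 < m := hcd_abs ▸ add_pos_of_pos_of_nonneg
    (abs_pos.2 (left_ne_zero_of_mul hcd.ne')) (abs_nonneg d)
  have hA : 0 ≤ A := hm.le.trans hle
  have hsq : |a| ^ 2 + |b| ^ 2 + |c| ^ 2 + |d| ^ 2 = A ^ 2 + m ^ 2 := by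
    simp only [A, m, sq_abs]; linear_combination -2 * h
  -- `(|a| + |b|)² = (a + b)² + 4cd` because `ab = -cd < 0`
  have hab_sq : (|a| + |b|) ^ 2 ≤ A ^ 2 + m ^ 2 := by
    have : |a| * |b| = c * d := by rw [← abs_mul, abs_of_neg (by linarith)]; linarith
    simp only [A, m, sq_abs]
    nlinarith [sq_nonneg (c - d), sq_abs a, sq_abs b]
  have hab : (A + m) * (|a| + |b|) ≤ A ^ 2 + 2 * A * m := by
    refine le_of_pow_le_pow_left₀ two_ne_zero (by positivity) ?_
    have hmA : 0 ≤ A - m := sub_nonneg.2 hle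
    calc ((A + m) * (|a| + |b|)) ^ 2 ≤ (A + m) ^ 2 * (A ^ 2 + m ^ 2) := by
          rw [mul_pow]; gcongr
      _ ≤ (A ^ 2 + 2 * A * m) ^ 2 := by
          nlinarith [mul_nonneg (mul_nonneg (mul_nonneg hm.le hA) hmA) (add_nonneg hA hm.le),
            mul_nonneg (sq_nonneg m) (mul_nonneg hmA (add_nonneg hA hm.le))]
  apply rpow_three_fourths_le_of_mul_le (by positivity) (by positivity)
  have hM : 0 ≤ A + m := by positivity
  have := rpow_four_thirds_mul_rpow_two_thirds_le (abs_nonneg a) hM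
  have := rpow_four_thirds_mul_rpow_two_thirds_le (abs_nonneg b) hM
  have := rpow_four_thirds_mul_rpow_two_thirds_le (abs_nonneg c) hM
  have := rpow_four_thirds_mul_rpow_two_thirds_le (abs_nonneg d) hM
  nlinarith

def HasCoeffs (T : (Fin 2 → ℂ) →L[ℂ] (Fin 2 → ℂ) →L[ℂ] ℂ) (a11 a12 a21 a22 : ℝ) : Prop :=
  ∀ z w : Fin 2 → ℂ, T z w = (a11 : ℂ) * z 0 * w 0 + (a21 : ℂ) * z 1 * w 0
    + (a12 : ℂ) * z 0 * w 1 + (a22 : ℂ) * z 1 * w 1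

namespace HasCoeffs

variable {a11 a12 a21 a22 : ℝ} {T : (Fin 2 → ℂ) →L[ℂ] (Fin 2 → ℂ) →L[ℂ] ℂ}

theorem sqrt_add_sqrt_le_opNorm (hT : HasCoeffs T a11 a12 a21 a22) {c : ℝ} (hc : |c| ≤ 1) :
    √(a11 ^ 2 + a21 ^ 2 + 2 * a11 * a21 * c) + √(a12 ^ 2 + a22 ^ 2 + 2 * a12 * a22 * c)
      ≤ ‖T‖ := by
  set ζ : ℂ := c + √(1 - c ^ 2) * Complex.I
  have hz : ‖(![1, ζ] : Fin 2 → ℂ)‖ ≤ 1 := (pi_norm_le_iff_of_nonneg zero_le_one).2 fun i => by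
    fin_cases i
    · simp
    · simpa [ζ] using (Complex.norm_ofReal_add_mul_eq_sqrt 0 1 c hc).le
  calc _ = ∑ i, ‖T ![1, ζ] (Pi.single i 1)‖ := by
        simp [Fin.sum_univ_two, hT _ _, ζ, Complex.norm_ofReal_add_mul_eq_sqrt _ _ c hc]
    _ ≤ ‖T ![1, ζ]‖ := (T ![1, ζ]).sum_norm_apply_single_le_opNorm
    _ ≤ ‖T‖ := (T.le_opNorm _).trans (mul_le_of_le_one_right (norm_nonneg _) hz)

theorem abs_add_add_abs_add_le_opNorm (hT : HasCoeffs T a11 a12 a21 a22) :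
    |a11 + a21| + |a12 + a22| ≤ ‖T‖ := by
  convert hT.sqrt_add_sqrt_le_opNorm (c := 1) (by simp) using 2 <;>
    rw [← Real.sqrt_sq_eq_abs] <;> ring_nf

theorem abs_sub_add_abs_sub_le_opNorm (hT : HasCoeffs T a11 a12 a21 a22) :
    |a11 - a21| + |a12 - a22| ≤ ‖T‖ := by
  convert hT.sqrt_add_sqrt_le_opNorm (c := -1) (by simp) using 2 <;>
    rw [← Real.sqrt_sq_eq_abs] <;> ring_nf

theorem sqrt_two_mul_sum_sq_le_opNorm (hT : HasCoeffs T a11 a12 a21 a22)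
    (h2 : 0 < a12 * a22) (h3 : a11 * a21 + a12 * a22 = 0)
    (hB : |a11 + a21| ≤ |a12 + a22|) (hC : |a12 - a22| ≤ |a11 - a21|) :
    √(2 * (a11 ^ 2 + a12 ^ 2 + a21 ^ 2 + a22 ^ 2)) ≤ ‖T‖ := by
  set S := a11 ^ 2 + a12 ^ 2 + a21 ^ 2 + a22 ^ 2
  -- the two radicands of `sqrt_add_sqrt_le_opNorm` are affine in `c` and meet here
  set c := (a11 ^ 2 + a21 ^ 2 - a12 ^ 2 - a22 ^ 2) / (4 * (a12 * a22))
  have hB' := sq_le_sq.2 hB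
  have hC' := sq_le_sq.2 hC
  have hc : |c| ≤ 1 := abs_le.2
    ⟨by rw [le_div_iff₀ (by positivity)]; nlinarith, by rw [div_le_iff₀ (by positivity)]; nlinarith⟩
  have hpc : 4 * (a12 * a22) * c = a11 ^ 2 + a21 ^ 2 - a12 ^ 2 - a22 ^ 2 :=
    mul_div_cancel₀ _ (by positivity)
  have h1c : a11 ^ 2 + a21 ^ 2 + 2 * a11 * a21 * c = S / 2 := by
    linear_combination 2 * c * h3 - hpc / 2
  have h2c : a12 ^ 2 + a22 ^ 2 + 2 * a12 * a22 * c = S / 2 := by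
    linear_combination hpc / 2
  calc √(2 * S) = √(S / 2) + √(S / 2) := by
        rw [← two_mul, show 2 * S = 2 ^ 2 * (S / 2) by ring, Real.sqrt_mul' _ (by positivity),
          Real.sqrt_sq zero_le_two]
    _ = _ := by rw [h1c, h2c]
    _ ≤ ‖T‖ := hT.sqrt_add_sqrt_le_opNorm hc

end HasCoeffs

theorem littlewood_43_linf2_complex_case5_general
    (a11 a12 a21 a22 : ℝ)
    (T : (Fin 2 → ℂ) →L[ℂ] (Fin 2 → ℂ) →L[ℂ] ℂ)
    (hT : ∀ z w : Fin 2 → ℂ,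
      T z w = (a11 : ℂ) * z 0 * w 0 + (a21 : ℂ) * z 1 * w 0
        + (a12 : ℂ) * z 0 * w 1 + (a22 : ℂ) * z 1 * w 1)
    (h2 : a12 * a22 > 0) (h3 : a11 * a21 + a12 * a22 = 0) :
    (|a11| ^ ((4 : ℝ) / 3) + |a12| ^ ((4 : ℝ) / 3)
        + |a21| ^ ((4 : ℝ) / 3) + |a22| ^ ((4 : ℝ) / 3)) ^ ((3 : ℝ) / 4)
      ≤ ‖T‖ := by
  have hT' : HasCoeffs T a11 a12 a21 a22 := hT
  rcases le_total |a12 + a22| |a11 + a21| with hB | hB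
  · calc _ = (|a11| ^ (4 / 3 : ℝ) + |a21| ^ (4 / 3 : ℝ) + |a12| ^ (4 / 3 : ℝ)
            + |a22| ^ (4 / 3 : ℝ)) ^ (3 / 4 : ℝ) := by ring_nf
      _ ≤ |a11 + a21| + |a12 + a22| :=
        sum_abs_rpow_four_thirds_rpow_le_of_mul_add_mul_eq_zero h3 h2 hB
      _ ≤ ‖T‖ := hT'.abs_add_add_abs_add_le_opNorm
  rcases le_total |a11 - a21| |a12 - a22| with hC | hC
  · calc _ = (|a12| ^ (4 / 3 : ℝ) + |-a22| ^ (4 / 3 : ℝ) + |a11| ^ (4 / 3 : ℝ)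
            + |-a21| ^ (4 / 3 : ℝ)) ^ (3 / 4 : ℝ) := by simp only [abs_neg]; ring_nf
      _ ≤ |a12 + -a22| + |a11 + -a21| :=
        sum_abs_rpow_four_thirds_rpow_le_of_mul_add_mul_eq_zero (by linear_combination -h3)
          (by rw [mul_neg]; linarith) (by simpa only [← sub_eq_add_neg] using hC)
      _ ≤ ‖T‖ := by
        simpa only [← sub_eq_add_neg, add_comm] using hT'.abs_sub_add_abs_sub_le_opNorm
  · exact (sum_abs_rpow_four_thirds_rpow_le_sqrt _ _ _ _).trans
      (hT'.sqrt_two_mul_sum_sq_le_opNorm h2 h3 hB hC)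

/-- Case (5) of Theorem 5.1: if `a₁₁a₂₁ < 0`, `a₁₂a₂₂ > 0` and `a₁₁a₂₁ + a₁₂a₂₂ = 0`, then the complex bilinear form with real coefficients satisfies Littlewood's 4/3 inequality with constant 1. -/
theorem littlewood_43_linf2_complex_case5
    (a11 a12 a21 a22 : ℝ)
    (T : (Fin 2 → ℂ) →L[ℂ] (Fin 2 → ℂ) →L[ℂ] ℂ)
    (hT : ∀ z w : Fin 2 → ℂ,
      T z w = (a11 : ℂ) * z 0 * w 0 + (a21 : ℂ) * z 1 * w 0
        + (a12 : ℂ) * z 0 * w 1 + (a22 : ℂ) * z 1 * w 1)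
    (h1 : a11 * a21 < 0) (h2 : a12 * a22 > 0) (h3 : a11 * a21 + a12 * a22 = 0) :
    (|a11| ^ ((4 : ℝ) / 3) + |a12| ^ ((4 : ℝ) / 3)
        + |a21| ^ ((4 : ℝ) / 3) + |a22| ^ ((4 : ℝ) / 3)) ^ ((3 : ℝ) / 4)
      ≤ ‖T‖ :=
  littlewood_43_linf2_complex_case5_general a11 a12 a21 a22 T hT h2 h3
end

section
/- Let α ∈ ℝ, α ≠ 0. Then each of the bilinear forms T : ℓ∞²(ℂ) × ℓ∞²(ℂ) → ℂ given by T(z,w) = α(z₁w₁ + z₁w₂ + z₂w₁ − z₂w₂), T(z,w) = α(z₁w₁ + z₁w₂ − z₂w₁ + z₂w₂), T(z,w) = α(z₁w₁ − z₁w₂ + z₂w₁ + z₂w₂), and T(z,w) = α(−z₁w₁ + z₁w₂ + z₂w₁ + z₂w₂), satisfies (Σ_{i,j=1}^{2} |T(e_i,e_j)|^{4/3})^{3/4} = ‖T‖, where e₁, e₂ are the standard basis vectors of ℂ². -/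
/-!
Each of the four forms is `T z w = z ⬝ᵥ ε w` for a real matrix `ε` whose entries all have
modulus `c = |α|` and whose columns are orthogonal (a scaled Hadamard matrix). Orthogonality gives
`|(εw)₀|² + |(εw)₁|² = 2c² ‖w‖₂² ≤ 4c² ‖w‖∞²`, so by `(a + b)² ≤ 2(a² + b²)`
`|T z w| ≤ ‖z‖∞ (|(εw)₀| + |(εw)₁|) ≤ 2√2 c ‖z‖∞ ‖w‖∞`. Equality is attained at `w = (1, i)`,
where `|(εw)₀| = |(εw)₁|`, and `z` a multiple of `conj (εw)`. Since `T(eᵢ, eⱼ) = εᵢⱼ` all have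
modulus `c`, the left-hand side is `(4 c^{4/3})^{3/4} = 2√2 c` as well.
-/

open Matrix

lemma four_rpow_three_div_four : (4 : ℝ) ^ ((3 : ℝ) / 4) = 2 * √2 := by
  rw [show (4 : ℝ) ^ ((3 : ℝ) / 4) = ((2 : ℝ) ^ (2 : ℝ)) ^ ((3 : ℝ) / 4) by norm_num,
    ← Real.rpow_mul (by norm_num),
    show (2 : ℝ) * (3 / 4) = 1 + 1 / 2 by norm_num, Real.rpow_add (by norm_num), Real.rpow_one,
    Real.sqrt_eq_rpow]

section HadamardForm

variable {c : ℝ} {ε : Matrix (Fin 2) (Fin 2) ℝ} {T : (Fin 2 → ℂ) →L[ℂ] (Fin 2 → ℂ) →L[ℂ] ℂ}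

lemma sq_norm_mulVec_add_sq_norm_mulVec
    (hε : ∀ i j, |ε i j| = c) (horth : ε 0 0 * ε 0 1 + ε 1 0 * ε 1 1 = 0) (w : Fin 2 → ℂ) :
    ‖(ε.map (↑) *ᵥ w) 0‖ ^ 2 + ‖(ε.map (↑) *ᵥ w) 1‖ ^ 2 = 2 * c ^ 2 * (‖w 0‖ ^ 2 + ‖w 1‖ ^ 2) := by
  have hsq : ∀ i j, ε i j ^ 2 = c ^ 2 := fun i j => by rw [← sq_abs, hε]
  simp only [Complex.sq_norm, Complex.normSq_apply, mulVec, dotProduct, Fin.sum_univ_two,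
    map_apply, Complex.add_re, Complex.add_im, Complex.re_ofReal_mul, Complex.im_ofReal_mul]
  linear_combination (hsq 0 0 + hsq 1 0) * ((w 0).re ^ 2 + (w 0).im ^ 2)
    + (hsq 0 1 + hsq 1 1) * ((w 1).re ^ 2 + (w 1).im ^ 2)
    + 2 * ((w 0).re * (w 1).re + (w 0).im * (w 1).im) * horth

lemma opNorm_le_of_apply_eq_dotProduct_mulVec (hε : ∀ i j, |ε i j| = c)
    (horth : ε 0 0 * ε 0 1 + ε 1 0 * ε 1 1 = 0) (hT : ∀ z w, T z w = z ⬝ᵥ (ε.map (↑) *ᵥ w)) :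
    ‖T‖ ≤ 2 * √2 * c := by
  have hc : 0 ≤ c := hε 0 0 ▸ abs_nonneg _
  refine T.opNorm_le_bound₂ (by positivity) fun z w => ?_
  set v := ε.map (↑) *ᵥ w
  have hrows : ‖v 0‖ + ‖v 1‖ ≤ 2 * √2 * c * ‖w‖ := by
    refine abs_le_of_sq_le_sq' ?_ (by positivity) |>.2
    have h2 : √2 ^ 2 = 2 := Real.sq_sqrt zero_le_two
    have hw : ‖w 0‖ ^ 2 + ‖w 1‖ ^ 2 ≤ 2 * ‖w‖ ^ 2 := by
      nlinarith [norm_le_pi_norm w 0, norm_le_pi_norm w 1, norm_nonneg (w 0), norm_nonneg (w 1)]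
    calc (‖v 0‖ + ‖v 1‖) ^ 2 ≤ 2 * (‖v 0‖ ^ 2 + ‖v 1‖ ^ 2) := add_sq_le
      _ = 4 * c ^ 2 * (‖w 0‖ ^ 2 + ‖w 1‖ ^ 2) := by
        rw [sq_norm_mulVec_add_sq_norm_mulVec hε horth]; ring
      _ ≤ 4 * c ^ 2 * (2 * ‖w‖ ^ 2) := by gcongr
      _ = (2 * √2 * c * ‖w‖) ^ 2 := by rw [mul_pow, mul_pow, mul_pow, h2]; ring
  calc ‖T z w‖ = ‖z 0 * v 0 + z 1 * v 1‖ := by rw [hT, dotProduct, Fin.sum_univ_two]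
    _ ≤ ‖z‖ * ‖v 0‖ + ‖z‖ * ‖v 1‖ := by
      refine (norm_add_le _ _).trans ?_
      rw [norm_mul, norm_mul]
      gcongr <;> exact norm_le_pi_norm z _
    _ ≤ ‖z‖ * (2 * √2 * c * ‖w‖) := by rw [← mul_add]; gcongr
    _ = 2 * √2 * c * ‖z‖ * ‖w‖ := by ring

lemma le_opNorm_of_apply_eq_dotProduct_mulVec (hε : ∀ i j, |ε i j| = c)
    (hT : ∀ z w, T z w = z ⬝ᵥ (ε.map (↑) *ᵥ w)) : 2 * √2 * c ≤ ‖T‖ := by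
  have hc : 0 ≤ c := hε 0 0 ▸ abs_nonneg _
  have h2 : √2 ^ 2 = 2 := Real.sq_sqrt zero_le_two
  set w : Fin 2 → ℂ := ![1, Complex.I]
  set v := ε.map (↑) *ᵥ w
  have hv : ∀ i, ‖v i‖ ^ 2 = (√2 * c) ^ 2 := fun i => by
    simp only [v, w, Complex.sq_norm, Complex.normSq_apply, mulVec, dotProduct, Fin.sum_univ_two,
      map_apply, cons_val_zero, cons_val_one, cons_val_fin_one, Complex.add_re, Complex.add_im,
      Complex.re_ofReal_mul, Complex.im_ofReal_mul, Complex.one_re, Complex.one_im, Complex.I_re,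
      Complex.I_im]
    have hsq : ∀ j, ε i j ^ 2 = c ^ 2 := fun j => by rw [← sq_abs, hε]
    rw [mul_pow, h2]
    linear_combination hsq 0 + hsq 1
  have hw : ‖w‖ ≤ 1 := (pi_norm_le_iff_of_nonneg zero_le_one).2 fun i => by fin_cases i <;> simp [w]
  have hz : ‖star v‖ ≤ √2 * c := by
    rw [norm_star]
    exact (pi_norm_le_iff_of_nonneg (by positivity)).2 fun i =>
      (pow_left_inj₀ (norm_nonneg _) (by positivity) two_ne_zero).1 (hv i) |>.le
  have hval : T (star v) w = 4 * c ^ 2 := by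
    rw [hT, show star v ⬝ᵥ v = _ from rfl, dotProduct, Fin.sum_univ_two]
    simp only [Pi.star_apply, Complex.star_def, Complex.conj_mul', ← Complex.ofReal_pow, hv]
    push_cast [mul_pow, h2]
    ring
  have key : 4 * c ^ 2 ≤ ‖T‖ * (√2 * c) := calc
    4 * c ^ 2 = ‖T (star v) w‖ := by rw [hval]; norm_cast; rw [Real.norm_of_nonneg (by positivity)]
    _ ≤ ‖T‖ * ‖star v‖ * ‖w‖ := T.le_opNorm₂ _ _
    _ ≤ ‖T‖ * (√2 * c) * 1 := by gcongr
    _ = ‖T‖ * (√2 * c) := mul_one _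
  rcases hc.eq_or_lt with rfl | hc
  · rw [mul_zero]; exact norm_nonneg T
  · nlinarith [Real.sqrt_pos.2 zero_lt_two, norm_nonneg T]

theorem littlewood_four_thirds_eq_opNorm_of_apply_eq_dotProduct_mulVec
    (hε : ∀ i j, |ε i j| = c) (horth : ε 0 0 * ε 0 1 + ε 1 0 * ε 1 1 = 0)
    (hT : ∀ z w, T z w = z ⬝ᵥ (ε.map (↑) *ᵥ w)) :
    (∑ i : Fin 2, ∑ j : Fin 2,
        ‖T (Pi.single i 1) (Pi.single j 1)‖ ^ ((4 : ℝ) / 3)) ^ ((3 : ℝ) / 4) = ‖T‖ := by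
  have hc : 0 ≤ c := hε 0 0 ▸ abs_nonneg _
  have hentry : ∀ i j, ‖T (Pi.single i 1) (Pi.single j 1)‖ = c := fun i j => by
    rw [hT, mulVec_single_one, single_one_dotProduct, col_apply, map_apply, Complex.norm_real,
      Real.norm_eq_abs, hε]
  rw [le_antisymm (opNorm_le_of_apply_eq_dotProduct_mulVec hε horth hT)
    (le_opNorm_of_apply_eq_dotProduct_mulVec hε hT)]
  simp only [hentry, Fin.sum_univ_two]
  rw [show c ^ ((4 : ℝ) / 3) + c ^ ((4 : ℝ) / 3) + (c ^ ((4 : ℝ) / 3) + c ^ ((4 : ℝ) / 3))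
      = 4 * c ^ ((4 : ℝ) / 3) by ring, Real.mul_rpow (by norm_num) (by positivity),
    ← Real.rpow_mul hc, four_rpow_three_div_four]
  norm_num

end HadamardForm

theorem littlewood_43_linf2_complex_equality_forms_general
    (α : ℝ)
    (T : (Fin 2 → ℂ) →L[ℂ] (Fin 2 → ℂ) →L[ℂ] ℂ)
    (hT : (∀ z w : Fin 2 → ℂ,
          T z w = (α : ℂ) * (z 0 * w 0 + z 0 * w 1 + z 1 * w 0 - z 1 * w 1))
      ∨ (∀ z w : Fin 2 → ℂ,
          T z w = (α : ℂ) * (z 0 * w 0 + z 0 * w 1 - z 1 * w 0 + z 1 * w 1))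
      ∨ (∀ z w : Fin 2 → ℂ,
          T z w = (α : ℂ) * (z 0 * w 0 - z 0 * w 1 + z 1 * w 0 + z 1 * w 1))
      ∨ (∀ z w : Fin 2 → ℂ,
          T z w = (α : ℂ) * (-(z 0 * w 0) + z 0 * w 1 + z 1 * w 0 + z 1 * w 1))) :
    (∑ i : Fin 2, ∑ j : Fin 2,
        ‖T (Pi.single i 1) (Pi.single j 1)‖ ^ ((4 : ℝ) / 3)) ^ ((3 : ℝ) / 4) = ‖T‖ := by
  obtain ⟨s, hs, horth, hTs⟩ : ∃ s : Matrix (Fin 2) (Fin 2) ℝ, (∀ i j, |s i j| = 1) ∧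
      s 0 0 * s 0 1 + s 1 0 * s 1 1 = 0 ∧ ∀ z w, T z w = z ⬝ᵥ ((α • s).map (↑) *ᵥ w) := by
    rcases hT with h | h | h | h <;>
      [refine ⟨!![1, 1; 1, -1], ?_⟩; refine ⟨!![1, 1; -1, 1], ?_⟩;
        refine ⟨!![1, -1; 1, 1], ?_⟩; refine ⟨!![-1, 1; 1, 1], ?_⟩] <;>
      refine ⟨by simp [Fin.forall_fin_two], by norm_num, fun z w => ?_⟩ <;>
      (rw [h]; simp only [dotProduct, mulVec, Fin.sum_univ_two, smul_of, smul_cons, smul_empty,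
        smul_eq_mul, map_apply, of_apply, cons_val', cons_val_fin_one, cons_val_zero, cons_val_one,
        Complex.ofReal_mul, Complex.ofReal_neg, Complex.ofReal_one]; ring)
  refine littlewood_four_thirds_eq_opNorm_of_apply_eq_dotProduct_mulVec (c := |α|)
    (fun i j => by rw [Matrix.smul_apply, smul_eq_mul, abs_mul, hs, mul_one]) ?_ hTs
  simp only [Matrix.smul_apply, smul_eq_mul]
  linear_combination α ^ 2 * horth

/-- For nonzero real `α`, each of the four complex bilinear forms
`α(±z₁w₁ ± z₁w₂ ± z₂w₁ ± z₂w₂)` on `ℓ∞²(ℂ)` with exactly one minus sign attains equality in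
Littlewood's 4/3 inequality with constant 1: `(Σ |T(eᵢ,eⱼ)|^(4/3))^(3/4) = ‖T‖`. -/
theorem littlewood_43_linf2_complex_equality_forms
    (α : ℝ) (hα : α ≠ 0)
    (T : (Fin 2 → ℂ) →L[ℂ] (Fin 2 → ℂ) →L[ℂ] ℂ)
    (hT : (∀ z w : Fin 2 → ℂ,
          T z w = (α : ℂ) * (z 0 * w 0 + z 0 * w 1 + z 1 * w 0 - z 1 * w 1))
      ∨ (∀ z w : Fin 2 → ℂ,
          T z w = (α : ℂ) * (z 0 * w 0 + z 0 * w 1 - z 1 * w 0 + z 1 * w 1))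
      ∨ (∀ z w : Fin 2 → ℂ,
          T z w = (α : ℂ) * (z 0 * w 0 - z 0 * w 1 + z 1 * w 0 + z 1 * w 1))
      ∨ (∀ z w : Fin 2 → ℂ,
          T z w = (α : ℂ) * (-(z 0 * w 0) + z 0 * w 1 + z 1 * w 0 + z 1 * w 1))) :
    (∑ i : Fin 2, ∑ j : Fin 2,
        ‖T (Pi.single i 1) (Pi.single j 1)‖ ^ ((4 : ℝ) / 3)) ^ ((3 : ℝ) / 4) = ‖T‖ :=
  littlewood_43_linf2_complex_equality_forms_general α T hT
end

section
/- Let a, b, c > 0 and d < 0 be real numbers. Then |(ab/(cd))²(c² + d²) − (a² + b²)| ≤ 2ab(1 − ab/(cd)) if and only if both |(cd/(ab))·(a − b)| ≤ c − d and |(ab/(cd))·(c + d)| ≤ a + b. -/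
/-
Write `t = ab/(cd)`, so that `t·cd = ab`. With this relation the two one-sided inequalities hidden
in the absolute value become differences of squares:
`2ab(1 - t) - (t²(c² + d²) - (a² + b²)) = (a + b)² - (t(c + d))²` and
`2ab(1 - t) + (t²(c² + d²) - (a² + b²)) = (t(c - d))² - (a - b)²`.
Comparing squares turns them into `|t(c + d)| ≤ a + b` and `|a - b| ≤ |t|(c - d)`, and dividing the
latter by `|t|` gives the first condition, since `cd/(ab) = t⁻¹`.
-/

section
variable {a b c d t : ℝ}

lemma two_mul_sub_sub_eq_sq_sub_sq (h : t * (c * d) = a * b) :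
    2 * a * b * (1 - t) - (t ^ 2 * (c ^ 2 + d ^ 2) - (a ^ 2 + b ^ 2))
      = (a + b) ^ 2 - (t * (c + d)) ^ 2 := by
  linear_combination (2 * t) * h

lemma two_mul_add_sub_eq_sq_sub_sq (h : t * (c * d) = a * b) :
    2 * a * b * (1 - t) + (t ^ 2 * (c ^ 2 + d ^ 2) - (a ^ 2 + b ^ 2))
      = (t * (c - d)) ^ 2 - (a - b) ^ 2 := by
  linear_combination (2 * t) * h

lemma abs_sq_mul_sub_le_iff (h : t * (c * d) = a * b) (hab : 0 ≤ a + b) :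
    |t ^ 2 * (c ^ 2 + d ^ 2) - (a ^ 2 + b ^ 2)| ≤ 2 * a * b * (1 - t)
      ↔ |a - b| ≤ |t * (c - d)| ∧ |t * (c + d)| ≤ a + b := by
  rw [abs_le, neg_le_iff_add_nonneg', ← sub_nonneg (b := _ - _), two_mul_add_sub_eq_sq_sub_sq h,
    two_mul_sub_sub_eq_sq_sub_sq h, sub_nonneg, sub_nonneg, sq_le_sq, sq_le_sq, abs_of_nonneg hab]

end

lemma abs_inv_mul_le_iff {t u w : ℝ} (ht : t ≠ 0) (hw : 0 ≤ w) :
    |t⁻¹ * u| ≤ w ↔ |u| ≤ |t * w| := by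
  rw [abs_mul, abs_inv, inv_mul_le_iff₀ (abs_pos.2 ht), abs_mul, abs_of_nonneg hw]

/-- For `a, b, c > 0` and `d < 0`:
`|(ab/(cd))²(c² + d²) − (a² + b²)| ≤ 2ab(1 − ab/(cd))` iff
`|(cd/(ab))(a − b)| ≤ c − d` and `|(ab/(cd))(c + d)| ≤ a + b`. -/
theorem lemma_tec01 (a b c d : ℝ) (ha : 0 < a) (hb : 0 < b) (hc : 0 < c) (hd : d < 0) :
    |(a * b / (c * d)) ^ 2 * (c ^ 2 + d ^ 2) - (a ^ 2 + b ^ 2)|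
        ≤ 2 * a * b * (1 - a * b / (c * d))
      ↔ (|c * d / (a * b) * (a - b)| ≤ c - d ∧ |a * b / (c * d) * (c + d)| ≤ a + b) := by
  have hcd : c * d ≠ 0 := (mul_neg_of_pos_of_neg hc hd).ne
  have ht : a * b / (c * d) ≠ 0 := div_ne_zero (mul_pos ha hb).ne' hcd
  rw [abs_sq_mul_sub_le_iff (div_mul_cancel₀ _ hcd) (by positivity), ← inv_div (a * b) (c * d),
    abs_inv_mul_le_iff ht (by linarith)]
end
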